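/- arXiv:1703.07103 — 11 statements merged into one kernel-verified Lean document; each statement's English description precedes it below -/
import Mathlib

section
/- Let F be a face of S. Then the saturation F̄ of F is a face of the saturation S̄ of S, and F = F̄ ∩ S. -/
/-- `F` is a face of `T`: `F ⊆ T` and whenever `x, y ∈ T` with `x + y ∈ F`,
both `x` and `y` lie in `F`. -/
def IsFaceSet {M : Type*} [Add M] (F T : Set M) : Prop :=
  F ⊆ T ∧ ∀ x ∈ T, ∀ y ∈ T, x + y ∈ F → x ∈ F ∧ y ∈ F

/-- The saturation of a subsemigroup `T` of an additive monoid: all `x` such that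
`k • x ∈ T` for some positive integer `k`. -/
def saturationSet {M : Type*} [AddMonoid M] (T : Set M) : Set M :=
  {x | ∃ k : ℕ, 0 < k ∧ k • x ∈ T}

/-- **Lemma (L9), first part.** Let `F` be a face of `S`. Then the saturation `F̄`
is a face of the saturation `S̄`, and `F = F̄ ∩ S`. -/
theorem saturation_face_and_inter {n : ℕ} (S F : AddSubmonoid (Fin n → ℤ))
    (hFG : S.FG)
    (hgen : AddSubgroup.closure (S : Set (Fin n → ℤ)) = ⊤)
    (hpointed : ∀ x ∈ S, -x ∈ S → x = 0)
    (hFS : F ≤ S)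
    (hface : ∀ x ∈ S, ∀ y ∈ S, x + y ∈ F → x ∈ F ∧ y ∈ F) :
    IsFaceSet (saturationSet (F : Set (Fin n → ℤ))) (saturationSet (S : Set (Fin n → ℤ))) ∧
      (F : Set (Fin n → ℤ)) = saturationSet (F : Set (Fin n → ℤ)) ∩ (S : Set (Fin n → ℤ)) := by
  constructor
  · constructor
    · rintro x ⟨k, hk, hkx⟩
      exact ⟨k, hk, hFS hkx⟩
    · rintro x ⟨k, hk, hkx⟩ y ⟨l, hl, hly⟩ ⟨m, hm, hmxy⟩
      set N := k * l * m with hN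
      have hNpos : 0 < N := by positivity
      have hNx : N • x ∈ S := by
        have : N • x = (l * m) • (k • x) := by
          rw [smul_smul, hN]; congr 1; ring
        rw [this]; exact AddSubmonoid.nsmul_mem S hkx _
      have hNy : N • y ∈ S := by
        have : N • y = (k * m) • (l • y) := by
          rw [smul_smul, hN]; congr 1; ring
        rw [this]; exact AddSubmonoid.nsmul_mem S hly _
      have hNxy : N • x + N • y ∈ F := by
        have : N • x + N • y = (k * l) • (m • (x + y)) := by
          rw [smul_smul, ← smul_add]
        rw [this]; exact AddSubmonoid.nsmul_mem F hmxy _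
      obtain ⟨h1, h2⟩ := hface _ hNx _ hNy hNxy
      exact ⟨⟨N, hNpos, h1⟩, ⟨N, hNpos, h2⟩⟩
  · ext x
    constructor
    · intro hx
      exact ⟨⟨1, one_pos, by simpa using hx⟩, hFS hx⟩
    · rintro ⟨⟨k, hk, hkx⟩, hxS⟩
      have hsum : (k - 1) • x + x ∈ F := by
        have hk' : k - 1 + 1 = k := by omega
        rw [← succ_nsmul, hk']
        exact hkx
      exact (hface _ (AddSubmonoid.nsmul_mem S hxS _) _ hxS hsum).2
end

section
/- Let F be a finitely generated additive subsemigroup of ℕ containing 0. Then there exists d ∈ ℕ such that F ⊆ dℕ = {d·k : k ∈ ℕ} and the complement dℕ \ F is finite. -/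
/-- Bézout-style step: if `gcd a d ∣ k` and `d > 0`, there is `x < d` with
`d ∣ k - a * x` (over `ℤ`). -/
lemma exists_bezout_rep (a d k : ℕ) (hd : 0 < d) (hk : Nat.gcd a d ∣ k) :
    ∃ x : ℕ, x < d ∧ (d : ℤ) ∣ (k : ℤ) - a * x := by
  set g := Nat.gcd a d with hg
  have hg0 : 0 < g := Nat.gcd_pos_of_pos_right a hd
  obtain ⟨m, hm⟩ := hk
  have hbez : (g : ℤ) = a * Nat.gcdA a d + d * Nat.gcdB a d := Nat.gcd_eq_gcd_ab a d
  set p : ℤ := Nat.gcdA a d * m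
  have hdZ : (0 : ℤ) < d := by exact_mod_cast hd
  refine ⟨(p % d).toNat, ?_, ?_⟩
  · have h1 : p % d < d := Int.emod_lt_of_pos p hdZ
    have h2 : 0 ≤ p % d := Int.emod_nonneg p (by positivity)
    omega
  · have h2 : 0 ≤ p % d := Int.emod_nonneg p (by positivity)
    have hcast : ((p % d).toNat : ℤ) = p % d := Int.toNat_of_nonneg h2
    rw [hcast]
    have hk' : (k : ℤ) = g * m := by exact_mod_cast hm
    have : (k : ℤ) - a * (p % d) = a * (p - p % d) + d * (Nat.gcdB a d * m) := by
      rw [hk', hbez]; ring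
    rw [this]
    exact dvd_add (Dvd.dvd.mul_left (Int.dvd_self_sub_of_emod_eq rfl) a) ⟨_, rfl⟩

/-- Key lemma: every sufficiently large multiple of the gcd of a finset lies in
the additive submonoid it generates. -/
lemma key (s : Finset ℕ) : ∃ N : ℕ, ∀ k : ℕ, s.gcd id ∣ k → N ≤ k →
    k ∈ AddSubmonoid.closure (s : Set ℕ) := by
  induction s using Finset.induction with
  | empty =>
      refine ⟨0, fun k hk _ => ?_⟩
      simp only [Finset.gcd_empty] at hk
      rw [Nat.eq_zero_of_zero_dvd hk]
      exact zero_mem _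
  | @insert a s ha ih =>
      obtain ⟨N, hN⟩ := ih
      set d := s.gcd id with hd
      have hgcd : (insert a s).gcd id = Nat.gcd a d := by
        rw [Finset.gcd_insert]; rfl
      have hmono : AddSubmonoid.closure (s : Set ℕ) ≤
          AddSubmonoid.closure ((insert a s : Finset ℕ) : Set ℕ) := by
        apply AddSubmonoid.closure_mono
        intro x hx; simp only [Finset.coe_insert, Set.mem_insert_iff]; exact Or.inr hx
      have hamem : a ∈ AddSubmonoid.closure ((insert a s : Finset ℕ) : Set ℕ) :=
        AddSubmonoid.subset_closure (by simp)
      by_cases hd0 : d = 0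
      · refine ⟨0, fun k hk _ => ?_⟩
        rw [hgcd, hd0, Nat.gcd_zero_right] at hk
        obtain ⟨m, hm⟩ := hk
        rw [hm, mul_comm, ← smul_eq_mul]
        exact nsmul_mem hamem m
      · refine ⟨N + a * d, fun k hk hkN => ?_⟩
        rw [hgcd] at hk
        obtain ⟨x, hxd, hdvd⟩ := exists_bezout_rep a d k (Nat.pos_of_ne_zero hd0) hk
        have hax : a * x ≤ k := by nlinarith [Nat.le_of_lt_succ (Nat.lt_succ_of_lt hxd)]
        have hsub : (d : ℤ) ∣ ((k - a * x : ℕ) : ℤ) := by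
          rwa [Nat.cast_sub hax, Nat.cast_mul]
        have hdvdN : d ∣ k - a * x := by exact_mod_cast hsub
        have hge : N ≤ k - a * x := by
          have : a * x ≤ a * d := Nat.mul_le_mul_left a (le_of_lt hxd)
          omega
        have h1 : k - a * x ∈ AddSubmonoid.closure (s : Set ℕ) := hN _ hdvdN hge
        have h2 : a * x ∈ AddSubmonoid.closure ((insert a s : Finset ℕ) : Set ℕ) := by
          rw [mul_comm, ← smul_eq_mul]
          exact nsmul_mem hamem x
        have : k = a * x + (k - a * x) := by omega
        rw [this]
        exact add_mem h2 (hmono h1)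

/-- **Lemma (L8).** Let `F` be a finitely generated additive submonoid of `ℕ`.
Then there is `d ∈ ℕ` such that `F ⊆ dℕ` and `dℕ \ F` is finite. -/
theorem exists_multiple_cofinite (F : AddSubmonoid ℕ) (hFG : F.FG) :
    ∃ d : ℕ, (F : Set ℕ) ⊆ {x : ℕ | ∃ k : ℕ, x = d * k} ∧
      ({x : ℕ | ∃ k : ℕ, x = d * k} \ (F : Set ℕ)).Finite := by
  obtain ⟨s, hs⟩ := hFG
  set d := s.gcd id with hd
  obtain ⟨N, hN⟩ := key s
  refine ⟨d, ?_, ?_⟩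
  · intro x hx
    have hxF : x ∈ AddSubmonoid.closure (s : Set ℕ) := by rwa [hs]
    clear hx
    have hdvd : d ∣ x := by
      induction hxF using AddSubmonoid.closure_induction with
      | mem y hy => exact Finset.gcd_dvd (by exact_mod_cast hy)
      | zero => exact dvd_zero d
      | add y z _ _ hy hz => exact Nat.dvd_add hy hz
    obtain ⟨k, hk⟩ := hdvd
    exact ⟨k, hk⟩
  · apply Set.Finite.subset (Set.finite_Iio N)
    intro x hx
    obtain ⟨⟨k, hk⟩, hxF⟩ := hx
    by_contra hlt
    simp only [Set.mem_Iio, not_lt] at hlt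
    exact hxF (by rw [← hs]; exact hN x ⟨k, hk⟩ hlt)
end

section
/- Let F be a one-dimensional finitely generated subsemigroup of S with asymptotic generator a. For x, y ∈ S: there exist f₁, f₂ ∈ F with x + f₁ = y + f₂ if and only if (x + ℤa) ∩ S = (y + ℤa) ∩ S. Moreover, if no such f₁, f₂ exist, then (x + ℤa) ∩ (y + ℤa) = ∅. -/
/-- **Lemma (L1).** Let `S` be a finitely generated generating pointed submonoid of `ℤⁿ`,
`F ⊆ S` a one-dimensional finitely generated subsemigroup with asymptotic generator `a`.
For `x, y ∈ S`: `x ∼ y` mod `F` (i.e. `x + f₁ = y + f₂` for some `f₁, f₂ ∈ F`) iff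
`(x + ℤa) ∩ S = (y + ℤa) ∩ S`; and if `x ≁ y` then `(x + ℤa) ∩ (y + ℤa) = ∅`. -/
theorem line_inter_eq_iff_equiv {n : ℕ} (S F : AddSubmonoid (Fin n → ℤ))
    (hFG : S.FG)
    (hgen : AddSubgroup.closure (S : Set (Fin n → ℤ)) = ⊤)
    (hpointed : ∀ x ∈ S, -x ∈ S → x = 0)
    (hFS : F ≤ S)
    (hFfg : F.FG)
    (hdim : Nonempty (AddSubgroup.closure (F : Set (Fin n → ℤ)) ≃+ ℤ))
    (a : Fin n → ℤ)
    (ha : (F : Set (Fin n → ℤ)) ⊆ {x | ∃ k : ℕ, x = k • a} ∧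
      ({x | ∃ k : ℕ, x = k • a} \ (F : Set (Fin n → ℤ))).Finite)
    (x y : Fin n → ℤ) (hx : x ∈ S) (hy : y ∈ S) :
    ((∃ f₁ ∈ F, ∃ f₂ ∈ F, x + f₁ = y + f₂) ↔
        {z | ∃ k : ℤ, z = x + k • a} ∩ (S : Set (Fin n → ℤ)) =
          {z | ∃ k : ℤ, z = y + k • a} ∩ (S : Set (Fin n → ℤ))) ∧
      (¬(∃ f₁ ∈ F, ∃ f₂ ∈ F, x + f₁ = y + f₂) →
        {z | ∃ k : ℤ, z = x + k • a} ∩ {z | ∃ k : ℤ, z = y + k • a} = ∅) := by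
  -- `a ≠ 0`
  have ha0 : a ≠ 0 := by
    rintro rfl
    obtain ⟨e⟩ := hdim
    have hF0 : (F : Set (Fin n → ℤ)) ⊆ ((⊥ : AddSubgroup (Fin n → ℤ)) : Set _) := by
      intro z hz
      obtain ⟨k, rfl⟩ := ha.1 hz
      simp
    have hsub : AddSubgroup.closure (F : Set (Fin n → ℤ)) ≤ ⊥ :=
      (AddSubgroup.closure_le _).mpr hF0
    have h01 : e.symm 0 = e.symm 1 := by
      apply Subtype.ext
      have h0 : (e.symm 0 : Fin n → ℤ) = 0 := hsub (e.symm 0).2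
      have h1 : (e.symm 1 : Fin n → ℤ) = 0 := hsub (e.symm 1).2
      rw [h0, h1]
    have := congrArg e h01
    simp at this
  obtain ⟨i, hi⟩ : ∃ i, a i ≠ 0 := by
    by_contra h
    push_neg at h
    exact ha0 (funext h)
  have hinj : Function.Injective (fun k : ℕ => k • a) := by
    intro k l h
    have h' := congrFun h i
    simp only [Pi.smul_apply, nsmul_eq_mul] at h'
    have : (k : ℤ) = l := mul_right_cancel₀ hi h'
    exact_mod_cast this
  have hBfin : {k : ℕ | k • a ∉ F}.Finite := by
    have hsub : {k : ℕ | k • a ∉ F} ⊆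
        (fun k : ℕ => k • a) ⁻¹' ({w | ∃ k : ℕ, w = k • a} \ (F : Set (Fin n → ℤ))) := by
      intro k hk
      exact ⟨⟨k, rfl⟩, hk⟩
    exact (ha.2.preimage hinj.injOn).subset hsub
  obtain ⟨b, hb⟩ := hBfin.bddAbove
  have hF : ∀ k : ℕ, b < k → k • a ∈ F := by
    intro k hk
    by_contra hc
    exact absurd (hb hc) (by omega)
  -- if x = y + m • a then x ~ y
  have hmem : ∀ m : ℤ, x = y + m • a → ∃ f₁ ∈ F, ∃ f₂ ∈ F, x + f₁ = y + f₂ := by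
    intro m hm
    set N : ℕ := b + 1 + m.natAbs with hN
    have hK0 : (0 : ℤ) ≤ (N : ℤ) + m := by
      simp only [hN]
      omega
    have hKb : b < ((N : ℤ) + m).toNat := by
      simp only [hN]
      omega
    refine ⟨N • a, hF N (by omega), ((N : ℤ) + m).toNat • a, hF _ hKb, ?_⟩
    have h2 : (((N : ℤ) + m).toNat : ℤ) • a = ((N : ℤ) + m) • a := by
      rw [Int.toNat_of_nonneg hK0]
    rw [natCast_zsmul] at h2
    rw [hm, h2, add_zsmul]
    rw [natCast_zsmul]
    abel
  -- lines are equal when translates differ by a multiple of a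
  have hline : ∀ u v : Fin n → ℤ, (∃ m : ℤ, u = v + m • a) →
      {z | ∃ k : ℤ, z = u + k • a} = {z | ∃ k : ℤ, z = v + k • a} := by
    rintro u v ⟨m, rfl⟩
    ext z
    constructor
    · rintro ⟨k, rfl⟩
      exact ⟨m + k, by rw [add_zsmul]; abel⟩
    · rintro ⟨k, rfl⟩
      exact ⟨k - m, by rw [sub_zsmul]; abel⟩
  constructor
  · constructor
    · rintro ⟨f₁, hf₁, f₂, hf₂, heq⟩
      obtain ⟨k₁, rfl⟩ := ha.1 hf₁
      obtain ⟨k₂, rfl⟩ := ha.1 hf₂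
      have hxy : x = y + ((k₂ : ℤ) - k₁) • a := by
        have : x + (k₁ : ℤ) • a = y + (k₂ : ℤ) • a := by
          rw [natCast_zsmul, natCast_zsmul]; exact heq
        have h2 : y + ((k₂ : ℤ) - k₁) • a = (y + (k₂ : ℤ) • a) - (k₁ : ℤ) • a := by
          rw [sub_zsmul]; abel
        rw [h2, ← this]; abel
      rw [hline x y ⟨_, hxy⟩]
    · intro h
      have hxmem : x ∈ {z | ∃ k : ℤ, z = y + k • a} ∩ (S : Set (Fin n → ℤ)) := by
        rw [← h]
        exact ⟨⟨0, by simp⟩, hx⟩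
      obtain ⟨⟨m, hm⟩, -⟩ := hxmem
      exact hmem m hm
  · intro hne
    rw [Set.eq_empty_iff_forall_notMem]
    rintro z ⟨⟨k, rfl⟩, ⟨l, hl⟩⟩
    apply hne
    apply hmem (l - k)
    have h2 : y + (l - k) • a = (y + l • a) - k • a := by
      rw [sub_zsmul]; abel
    rw [h2, ← hl]; abel
end

section
/- There exists z ∈ S such that z + S̄ ⊆ S, where S̄ is the saturation of S (equivalently, the cone in ℤ² spanned by the asymptotic generators of the two one-dimensional faces of S). -/
/-- **Lemma (L5).** Let `S` be a finitely generated generating pointed submonoid of `ℤ²`.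
There is `z ∈ S` such that `z + S̄ ⊆ S`, where `S̄` is the saturation of `S`
(the cone spanned by the asymptotic generators of the two one-dimensional faces). -/
theorem exists_translate_saturation_subset (S : AddSubmonoid (ℤ × ℤ))
    (hFG : S.FG)
    (hgen : AddSubgroup.closure (S : Set (ℤ × ℤ)) = ⊤)
    (hpointed : ∀ x ∈ S, -x ∈ S → x = 0) :
    ∃ z ∈ S, ∀ w ∈ saturationSet (S : Set (ℤ × ℤ)), z + w ∈ S := by
  classical
  obtain ⟨G, hG⟩ := hFG
  -- Every element of ℤ² can be translated into S by an element of S.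
  have hdiff : ∀ x : ℤ × ℤ, ∃ b ∈ S, b + x ∈ S := by
    have key : ∀ x ∈ AddSubgroup.closure (S : Set (ℤ × ℤ)), ∃ b ∈ S, b + x ∈ S := by
      intro x hx
      induction hx using AddSubgroup.closure_induction with
      | mem y hy => exact ⟨0, S.zero_mem, by simpa using hy⟩
      | zero => exact ⟨0, S.zero_mem, by simpa using S.zero_mem⟩
      | add a b ha hb iha ihb =>
        obtain ⟨p, hp, hp'⟩ := iha; obtain ⟨q, hq, hq'⟩ := ihb
        refine ⟨p + q, S.add_mem hp hq, ?_⟩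
        have : p + q + (a + b) = (p + a) + (q + b) := by abel
        rw [this]; exact S.add_mem hp' hq'
      | neg a ha iha =>
        obtain ⟨p, hp, hp'⟩ := iha
        exact ⟨p + a, hp', by simpa using hp⟩
    intro x
    exact key x (by rw [hgen]; trivial)
  -- coefficients over the generators
  have hcoeff : ∀ x ∈ S, ∃ m : (ℤ × ℤ) → ℕ, x = ∑ g ∈ G, m g • g := by
    intro x hx
    rw [← hG] at hx
    induction hx using AddSubmonoid.closure_induction with
    | mem y hy =>
      exact ⟨fun g => if g = y then 1 else 0,
        by simp [ite_smul]; exact fun h => absurd (Finset.mem_coe.mp hy) h⟩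
    | zero => exact ⟨0, by simp⟩
    | add a b ha hb iha ihb =>
      obtain ⟨ma, hma⟩ := iha
      obtain ⟨mb, hmb⟩ := ihb
      exact ⟨ma + mb, by simp [hma, hmb, Pi.add_apply, add_smul, Finset.sum_add_distrib]⟩
  set c1 : ℤ := ∑ g ∈ G, |g.1| with hc1
  set c2 : ℤ := ∑ g ∈ G, |g.2| with hc2
  set F : Finset (ℤ × ℤ) := Finset.Icc (-c1, -c2) (c1, c2) with hF
  choose zf hzf hzf' using hdiff
  refine ⟨∑ f ∈ F, zf f, AddSubmonoid.sum_mem S (fun f _ => hzf f), ?_⟩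
  intro w hw
  obtain ⟨k, hk, hkw⟩ := hw
  obtain ⟨m, hm⟩ := hcoeff _ hkw
  set s : ℤ × ℤ := ∑ g ∈ G, (m g / k) • g with hsdef
  have hs : s ∈ S := AddSubmonoid.sum_mem S fun g hg =>
    AddSubmonoid.nsmul_mem S (by rw [← hG]; exact AddSubmonoid.subset_closure hg) _
  have heq : k • (w - s) = ∑ g ∈ G, (m g % k) • g := by
    rw [smul_sub, hm, hsdef, Finset.smul_sum, ← Finset.sum_sub_distrib]
    refine Finset.sum_congr rfl fun g _ => ?_
    have h : m g = k * (m g / k) + m g % k := (Nat.div_add_mod (m g) k).symm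
    calc m g • g - k • ((m g / k) • g)
        = (k * (m g / k) + m g % k) • g - k • ((m g / k) • g) := by rw [← h]
      _ = (m g % k) • g := by rw [add_smul, mul_smul]; abel
  -- bounds on components
  have key1 : (k : ℤ) * (w - s).1 = ∑ g ∈ G, ((m g % k : ℕ) : ℤ) * g.1 := by
    have := congrArg Prod.fst heq
    simpa [Prod.fst_sum, nsmul_eq_mul] using this
  have key2 : (k : ℤ) * (w - s).2 = ∑ g ∈ G, ((m g % k : ℕ) : ℤ) * g.2 := by
    have := congrArg Prod.snd heq
    simpa [Prod.snd_sum, nsmul_eq_mul] using this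
  have habs : ∀ g : ℤ × ℤ, |((m g % k : ℕ) : ℤ)| ≤ (k : ℤ) := by
    intro g
    rw [abs_of_nonneg (Int.natCast_nonneg _)]
    exact_mod_cast (Nat.mod_lt _ hk).le
  have hb1 : |(w - s).1| ≤ c1 := by
    have h2 : |∑ g ∈ G, ((m g % k : ℕ) : ℤ) * g.1| ≤ (k : ℤ) * c1 := by
      calc |∑ g ∈ G, ((m g % k : ℕ) : ℤ) * g.1| ≤ ∑ g ∈ G, |((m g % k : ℕ) : ℤ) * g.1| :=
            Finset.abs_sum_le_sum_abs _ _
        _ ≤ ∑ g ∈ G, (k : ℤ) * |g.1| := Finset.sum_le_sum fun g _ => by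
            rw [abs_mul]; exact mul_le_mul_of_nonneg_right (habs g) (abs_nonneg _)
        _ = (k : ℤ) * c1 := by rw [hc1, Finset.mul_sum]
    have h3 : (k : ℤ) * |(w - s).1| ≤ (k : ℤ) * c1 := by
      calc (k : ℤ) * |(w - s).1| = |(k : ℤ) * (w - s).1| := by
            rw [abs_mul, abs_of_nonneg (show (0:ℤ) ≤ (k:ℤ) by positivity)]
        _ = |∑ g ∈ G, ((m g % k : ℕ) : ℤ) * g.1| := by rw [key1]
        _ ≤ (k : ℤ) * c1 := h2
    exact le_of_mul_le_mul_left h3 (by exact_mod_cast hk)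
  have hb2 : |(w - s).2| ≤ c2 := by
    have h2 : |∑ g ∈ G, ((m g % k : ℕ) : ℤ) * g.2| ≤ (k : ℤ) * c2 := by
      calc |∑ g ∈ G, ((m g % k : ℕ) : ℤ) * g.2| ≤ ∑ g ∈ G, |((m g % k : ℕ) : ℤ) * g.2| :=
            Finset.abs_sum_le_sum_abs _ _
        _ ≤ ∑ g ∈ G, (k : ℤ) * |g.2| := Finset.sum_le_sum fun g _ => by
            rw [abs_mul]; exact mul_le_mul_of_nonneg_right (habs g) (abs_nonneg _)
        _ = (k : ℤ) * c2 := by rw [hc2, Finset.mul_sum]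
    have h3 : (k : ℤ) * |(w - s).2| ≤ (k : ℤ) * c2 := by
      calc (k : ℤ) * |(w - s).2| = |(k : ℤ) * (w - s).2| := by
            rw [abs_mul, abs_of_nonneg (show (0:ℤ) ≤ (k:ℤ) by positivity)]
        _ = |∑ g ∈ G, ((m g % k : ℕ) : ℤ) * g.2| := by rw [key2]
        _ ≤ (k : ℤ) * c2 := h2
    exact le_of_mul_le_mul_left h3 (by exact_mod_cast hk)
  have hwF : w - s ∈ F := by
    rw [hF, Finset.mem_Icc]
    rw [abs_le] at hb1 hb2
    exact ⟨⟨hb1.1, hb2.1⟩, ⟨hb1.2, hb2.2⟩⟩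
  have hsplit : (∑ f ∈ F, zf f) + w
      = (zf (w - s) + (w - s)) + ((∑ f ∈ F.erase (w - s), zf f) + s) := by
    rw [← Finset.add_sum_erase F zf hwF]; abel
  rw [hsplit]
  exact S.add_mem (hzf' _) (S.add_mem (AddSubmonoid.sum_mem S fun f _ => hzf f) hs)
end

section
/- Let F be a one-dimensional face of S with asymptotic generator a. Then F = S ∩ ℤa, where ℤa = {k·a : k ∈ ℤ}. -/
/-- **Lemma (L7), first part.** Let `F` be a one-dimensional face of `S` with
asymptotic generator `a`. Then `F = S ∩ ℤa`. -/
theorem face_eq_inter_line (S F : AddSubmonoid (ℤ × ℤ))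
    (hFG : S.FG)
    (hgen : AddSubgroup.closure (S : Set (ℤ × ℤ)) = ⊤)
    (hpointed : ∀ x ∈ S, -x ∈ S → x = 0)
    (hFS : F ≤ S)
    (hface : ∀ x ∈ S, ∀ y ∈ S, x + y ∈ F → x ∈ F ∧ y ∈ F)
    (hdim : Nonempty (AddSubgroup.closure (F : Set (ℤ × ℤ)) ≃+ ℤ))
    (a : ℤ × ℤ)
    (ha : (F : Set (ℤ × ℤ)) ⊆ {x | ∃ k : ℕ, x = k • a} ∧
      ({x | ∃ k : ℕ, x = k • a} \ (F : Set (ℤ × ℤ))).Finite) :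
    (F : Set (ℤ × ℤ)) = (S : Set (ℤ × ℤ)) ∩ {x | ∃ k : ℤ, x = k • a} := by
  obtain ⟨ha1, ha2⟩ := ha
  ext x
  simp only [Set.mem_inter_iff, Set.mem_setOf_eq, SetLike.mem_coe]
  constructor
  · intro hx
    refine ⟨hFS hx, ?_⟩
    obtain ⟨k, hk⟩ := ha1 hx
    exact ⟨(k : ℤ), by simpa [natCast_zsmul] using hk⟩
  · rintro ⟨hxS, k, rfl⟩
    by_cases ha0 : a = 0
    · simpa [ha0] using F.zero_mem
    have hfin : {n : ℕ | ¬ (n • a ∈ F)}.Finite := by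
      apply Set.Finite.of_finite_image (f := fun n : ℕ => n • a)
      · apply ha2.subset
        rintro _ ⟨n, hn, rfl⟩
        exact ⟨⟨n, rfl⟩, hn⟩
      · intro m _ n _ h
        have h' : (m : ℤ) • a = (n : ℤ) • a := by
          simpa [natCast_zsmul] using h
        exact_mod_cast smul_left_injective ℤ ha0 h'
    obtain ⟨N, hN⟩ := hfin.bddAbove
    have hgood : ∀ n : ℕ, N < n → n • a ∈ F := by
      intro n hn
      by_contra h
      exact absurd (hN h) (not_le.mpr hn)
    set n : ℕ := N + 1 + k.natAbs with hn
    have h1 : n • a ∈ F := hgood n (by omega)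
    have hm : N < (k + (n : ℤ)).toNat := by
      omega
    have h2 : k • a + n • a ∈ F := by
      have heq : k • a + n • a = ((k + (n : ℤ)).toNat : ℕ) • a := by
        rw [← natCast_zsmul a n, ← natCast_zsmul a (k + (n : ℤ)).toNat, ← add_zsmul]
        congr 1
        omega
      rw [heq]
      exact hgood _ hm
    exact (hface _ hxS _ (hFS h1) h2).1
end

section
/- Let F₁ and F₂ be the two one-dimensional faces of S. For each x ∈ S, there exist finite subsets T₁, T₂ of ℤ² and a finite subset E of ℤ² such that S \ (x + S) = (⋃_{y ∈ T₁} (y + F₁)) ∪ (⋃_{y ∈ T₂} (y + F₂)) ∪ E; that is, S \ (x + S) is a union of finitely many translates of F₁ and F₂ together with a finite set. -/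
private lemma L7_diff {G : Type*} [AddCommGroup G] (M : AddSubmonoid G) {z : G}
    (hz : z ∈ AddSubgroup.closure (M : Set G)) : ∃ a ∈ M, ∃ b ∈ M, z = a - b := by
  have hle : AddSubgroup.closure (M : Set G) ≤
      { carrier := {z | ∃ a ∈ M, ∃ b ∈ M, z = a - b}
        zero_mem' := ⟨0, M.zero_mem, 0, M.zero_mem, by abel⟩
        add_mem' := by
          rintro x y ⟨a, ha, b, hb, rfl⟩ ⟨c, hc, e, he, rfl⟩
          exact ⟨a + c, M.add_mem ha hc, b + e, M.add_mem hb he, by abel⟩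
        neg_mem' := by
          rintro x ⟨a, ha, b, hb, rfl⟩
          exact ⟨b, hb, a, ha, by abel⟩ } := by
    rw [AddSubgroup.closure_le]
    intro m hm
    exact ⟨m, hm, 0, M.zero_mem, by abel⟩
  exact hle hz

private lemma L7_prim {a b : ℤ} (h : IsCoprime a b) {z : ℤ × ℤ}
    (hz : a * z.2 - b * z.1 = 0) : ∃ k : ℤ, z = k • ((a, b) : ℤ × ℤ) := by
  obtain ⟨u, w, huw⟩ := h
  refine ⟨u * z.1 + w * z.2, ?_⟩
  have h1 : z.1 = (u * z.1 + w * z.2) * a := by linear_combination (-z.1) * huw - w * hz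
  have h2 : z.2 = (u * z.1 + w * z.2) * b := by linear_combination (-z.2) * huw + u * hz
  ext <;> simp [smul_eq_mul]
  · linarith [h1]
  · linarith [h2]


private lemma L7_descent (Λ : AddSubmonoid ℤ) (hpos : ∀ l ∈ Λ, 0 ≤ l)
    (A : Set ℤ) (β : ℤ) (hβ : ∀ k ∈ A, β ≤ k) :
    ∀ k ∈ A, ∃ y ∈ A, (∀ l ∈ Λ, l ≠ 0 → y - l ∉ A) ∧ ∃ l ∈ Λ, k = y + l := by
  have main : ∀ n : ℕ, ∀ k ∈ A, (k - β).toNat ≤ n →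
      ∃ y ∈ A, (∀ l ∈ Λ, l ≠ 0 → y - l ∉ A) ∧ ∃ l ∈ Λ, k = y + l := by
    intro n
    induction n with
    | zero =>
      intro k hk hn
      by_cases hmin : ∀ l ∈ Λ, l ≠ 0 → k - l ∉ A
      · exact ⟨k, hk, hmin, 0, Λ.zero_mem, by ring⟩
      · push_neg at hmin
        obtain ⟨l, hl, hl0, hkl⟩ := hmin
        have h1 : β ≤ k - l := hβ _ hkl
        have h2 : 0 ≤ l := hpos _ hl
        have h3 : β ≤ k := hβ _ hk
        omega
    | succ n ih =>
      intro k hk hn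
      by_cases hmin : ∀ l ∈ Λ, l ≠ 0 → k - l ∉ A
      · exact ⟨k, hk, hmin, 0, Λ.zero_mem, by ring⟩
      · push_neg at hmin
        obtain ⟨l, hl, hl0, hkl⟩ := hmin
        have h1 : β ≤ k - l := hβ _ hkl
        have h2 : 0 ≤ l := hpos _ hl
        obtain ⟨y, hy, hymin, l', hl', heq⟩ := ih (k - l) hkl (by omega)
        exact ⟨y, hy, hymin, l' + l, Λ.add_mem hl' hl, by omega⟩
  intro k hk
  exact main (k - β).toNat k hk le_rfl

private lemma L7_lineDecomp (Λ : AddSubmonoid ℤ) (d c : ℤ) (hd : 0 < d)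
    (hdvd : ∀ l ∈ Λ, d ∣ l) (hpos : ∀ l ∈ Λ, 0 ≤ l)
    (hc : ∀ k : ℤ, c ≤ k → d * k ∈ Λ)
    (A B : Set ℤ) (hBA : B ⊆ A)
    (hA : ∀ k ∈ A, ∀ l ∈ Λ, k + l ∈ A) (hB : ∀ k ∈ B, ∀ l ∈ Λ, k + l ∈ B)
    (β : ℤ) (hβ : ∀ k ∈ A, β ≤ k) :
    ∃ T E : Finset ℤ,
      A \ B = (⋃ y ∈ T, {w : ℤ | ∃ l ∈ Λ, w = y + l}) ∪ (E : Set ℤ) := by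
  set c' : ℤ := max c 1 with hc'
  -- key: same residue and far enough apart gives a nonzero element of Λ
  have key : ∀ z k : ℤ, k % d = z % d → z + d * c' ≤ k → (k - z) ∈ Λ ∧ k - z ≠ 0 := by
    intro z k hres hfar
    have hdl : d ∣ k - z := Int.ModEq.dvd (Int.ModEq.symm hres)
    obtain ⟨j, hj⟩ := hdl
    have hjc : c' ≤ j := by nlinarith
    have h1 : d * j ∈ Λ := hc j (le_trans (le_max_left c 1) hjc)
    refine ⟨by rwa [hj], ?_⟩
    have : 1 ≤ j := le_trans (le_max_right c 1) hjc
    have : 0 < d * j := by positivity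
    omega
  -- the set of "initial" points whose residue class misses B
  set Tset : Set ℤ :=
    {y | y ∈ A ∧ (∀ l ∈ Λ, l ≠ 0 → y - l ∉ A) ∧ ∀ z ∈ B, z % d ≠ y % d} with hTset
  -- each class piece of Tset is finite
  have hTfin : Tset.Finite := by
    have hsub : Tset ⊆ ⋃ r ∈ Finset.Ico (0:ℤ) d, {y ∈ Tset | y % d = r} := by
      intro y hy
      refine Set.mem_biUnion ?_ ⟨hy, rfl⟩
      simp only [Finset.coe_Ico, Set.mem_Ico] at *
      exact ⟨Int.emod_nonneg y (by omega), Int.emod_lt_of_pos y hd⟩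
    refine Set.Finite.subset (Set.Finite.biUnion (Finset.finite_toSet _) ?_) hsub
    intro r _
    rcases Set.eq_empty_or_nonempty {y ∈ Tset | y % d = r} with hemp | ⟨y₀, hy₀⟩
    · rw [hemp]; exact Set.finite_empty
    · refine Set.Finite.subset (Set.finite_Icc (y₀ - d * c') (y₀ + d * c')) ?_
      intro y hy
      simp only [Set.mem_Icc]
      constructor
      · by_contra hlt
        push_neg at hlt
        have hk := key y y₀ (by rw [hy₀.2, hy.2]) (by omega)
        exact (hy₀.1.2.1 _ hk.1 hk.2) (by simpa using hy.1.1)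
      · by_contra hlt
        push_neg at hlt
        have hk := key y₀ y (by rw [hy₀.2, hy.2]) (by omega)
        exact (hy.1.2.1 _ hk.1 hk.2) (by simpa using hy₀.1.1)
  -- translates of points of Tset stay inside A \ B
  have hTsub : ∀ y ∈ Tset, {w : ℤ | ∃ l ∈ Λ, w = y + l} ⊆ A \ B := by
    rintro y ⟨hyA, _, hymiss⟩ w ⟨l, hl, rfl⟩
    refine ⟨hA _ hyA _ hl, fun hwB => ?_⟩
    refine hymiss _ hwB ?_
    obtain ⟨j, hj⟩ := hdvd l hl
    have : (y + l) % d = y % d := by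
      rw [hj, mul_comm]; exact Int.add_mul_emod_self_right _ _ _
    omega
  -- the leftover set is finite
  set U : Set ℤ := ⋃ y ∈ Tset, {w : ℤ | ∃ l ∈ Λ, w = y + l} with hU
  set Eset : Set ℤ := (A \ B) \ U with hEset
  have hEfin : Eset.Finite := by
    have hsub : Eset ⊆ ⋃ r ∈ Finset.Ico (0:ℤ) d, {k ∈ Eset | k % d = r} := by
      intro k hk
      refine Set.mem_biUnion ?_ ⟨hk, rfl⟩
      exact Finset.mem_Ico.mpr ⟨Int.emod_nonneg k (by omega), Int.emod_lt_of_pos k hd⟩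
    refine Set.Finite.subset (Set.Finite.biUnion (Finset.finite_toSet _) ?_) hsub
    intro r _
    rcases Set.eq_empty_or_nonempty {z ∈ B | z % d = r} with hemp | ⟨z₀, hz₀⟩
    · -- B misses the class: every element of A in this class is in U
      have : {k ∈ Eset | k % d = r} = ∅ := by
        ext k
        simp only [Set.mem_setOf_eq, Set.mem_empty_iff_false, iff_false]
        rintro ⟨⟨⟨hkA, hkB⟩, hkU⟩, hkr⟩
        obtain ⟨y, hyA, hymin, l, hl, rfl⟩ := L7_descent Λ hpos A β hβ k hkA
        refine hkU (Set.mem_biUnion ?_ ⟨l, hl, rfl⟩)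
        refine ⟨hyA, hymin, fun z hzB hzr => ?_⟩
        have hyr : y % d = r := by
          obtain ⟨j, hj⟩ := hdvd l hl
          have : (y + l) % d = y % d := by
            rw [hj, mul_comm]; exact Int.add_mul_emod_self_right _ _ _
          omega
        exact Set.eq_empty_iff_forall_notMem.mp hemp z ⟨hzB, by omega⟩
      rw [this]; exact Set.finite_empty
    · -- B meets the class: the class part of Eset is bounded
      refine Set.Finite.subset (Set.finite_Ico β (z₀ + d * c')) ?_
      rintro k ⟨⟨⟨hkA, hkB⟩, _⟩, hkr⟩
      refine Set.mem_Ico.mpr ⟨hβ _ hkA, ?_⟩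
      by_contra hlt
      push_neg at hlt
      have hk := key z₀ k (by rw [hkr, hz₀.2]) (by omega)
      exact hkB (by simpa using hB _ hz₀.1 _ hk.1)
  refine ⟨hTfin.toFinset, hEfin.toFinset, ?_⟩
  ext k
  simp only [Set.mem_union, Set.mem_iUnion, Set.Finite.mem_toFinset, Set.Finite.coe_toFinset,
    exists_prop]
  constructor
  · intro hk
    by_cases hkU : k ∈ U
    · left
      obtain ⟨y, hy, hky⟩ := Set.mem_iUnion₂.mp hkU
      exact ⟨y, hy, hky⟩
    · right; exact ⟨hk, hkU⟩
  · rintro (⟨y, hy, hky⟩ | hk)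
    · exact hTsub y hy hky
    · exact hk.1


private lemma L7_face (S F : AddSubmonoid (ℤ × ℤ))
    (hFS : F ≤ S)
    (hpointed : ∀ x ∈ S, -x ∈ S → x = 0)
    (hface : ∀ x ∈ S, ∀ y ∈ S, x + y ∈ F → x ∈ F ∧ y ∈ F)
    (hdim : Nonempty (AddSubgroup.closure (F : Set (ℤ × ℤ)) ≃+ ℤ)) :
    ∃ (g : ℤ × ℤ) (L : ℤ × ℤ → ℤ),
      g ≠ 0 ∧
      (∀ z w, L (z + w) = L z + L w) ∧
      (∀ (k : ℤ) (z : ℤ × ℤ), L (k • z) = k * L z) ∧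
      (∀ z, L z = 0 ↔ ∃ k : ℤ, z = k • g) ∧
      (∀ f ∈ F, ∃ k : ℤ, 0 ≤ k ∧ f = k • g) ∧
      (∃ k : ℤ, 0 < k ∧ k • g ∈ F) ∧
      (∀ s ∈ S, 0 ≤ L s) ∧
      (∀ s ∈ S, L s = 0 → s ∈ F) := by
  classical
  obtain ⟨e⟩ := hdim
  set C := AddSubgroup.closure (F : Set (ℤ × ℤ)) with hC
  set g₁ : ℤ × ℤ := ((e.symm 1 : C) : ℤ × ℤ) with hg₁
  have hmul₁ : ∀ z ∈ C, ∃ m : ℤ, z = m • g₁ := by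
    intro z hz
    refine ⟨e ⟨z, hz⟩, ?_⟩
    have h1 : e.symm (e ⟨z, hz⟩) = ⟨z, hz⟩ := e.symm_apply_apply _
    have h2 : e.symm (e ⟨z, hz⟩) = (e ⟨z, hz⟩ : ℤ) • e.symm 1 := by
      rw [← map_zsmul e.symm]
      congr 1
      simp [smul_eq_mul]
    rw [h2] at h1
    have := congrArg (Subtype.val) h1
    simpa [hg₁] using this.symm
  have hF0 : ∃ f ∈ F, f ≠ (0 : ℤ × ℤ) := by
    by_contra h
    push_neg at h
    have hle : C ≤ ⊥ := by
      rw [hC, AddSubgroup.closure_le]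
      intro z hz
      rw [h z hz, AddSubgroup.coe_bot]; simp
    have h1 : (e.symm 1 : C) = 0 := by
      have h2 := hle (e.symm 1).2
      exact Subtype.ext (by simpa using h2)
    have h3 : (1 : ℤ) = 0 := by
      have := congrArg e h1
      simpa using this
    omega
  obtain ⟨f₀, hf₀F, hf₀ne⟩ := hF0
  have hf₀C : f₀ ∈ C := AddSubgroup.subset_closure hf₀F
  obtain ⟨m₀, hm₀⟩ := hmul₁ f₀ hf₀C
  set n : ℕ := Int.gcd g₁.1 g₁.2 with hn
  have hg₁ne : g₁ ≠ 0 := by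
    intro h0
    rw [h0, smul_zero] at hm₀
    exact hf₀ne hm₀
  have hnpos : 0 < n := by
    rw [hn, Int.gcd_pos_iff]
    by_contra h
    push_neg at h
    exact hg₁ne (Prod.ext h.1 h.2)
  set g' : ℤ × ℤ := (g₁.1 / (n : ℤ), g₁.2 / (n : ℤ)) with hg'
  have hg'co : IsCoprime g'.1 g'.2 := by
    rw [Int.isCoprime_iff_gcd_eq_one]
    exact Int.gcd_div_gcd_div_gcd hnpos
  have hg₁g' : g₁ = (n : ℤ) • g' := by
    have h1 : (n : ℤ) ∣ g₁.1 := Int.gcd_dvd_left _ _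
    have h2 : (n : ℤ) ∣ g₁.2 := Int.gcd_dvd_right _ _
    ext
    · simp [hg', smul_eq_mul, Int.mul_ediv_cancel' h1]
    · simp [hg', smul_eq_mul, Int.mul_ediv_cancel' h2]
  have hm₀n : f₀ = (m₀ * n) • g' := by
    rw [hm₀, hg₁g', smul_smul]
  have hk₀'ne : m₀ * (n : ℤ) ≠ 0 := by
    intro h
    rw [h, zero_smul] at hm₀n
    exact hf₀ne hm₀n
  -- orientation
  obtain ⟨g, hgco, hgmul, k₀, hk₀pos, hk₀⟩ :
      ∃ g : ℤ × ℤ, IsCoprime g.1 g.2 ∧ (∀ z ∈ C, ∃ m : ℤ, z = m • g) ∧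
        ∃ k₀ : ℤ, 0 < k₀ ∧ f₀ = k₀ • g := by
    rcases lt_or_gt_of_ne hk₀'ne with hneg | hposi
    · refine ⟨-g', by simpa using hg'co.neg_left.neg_right, ?_, -(m₀ * n), by omega, by
        rw [hm₀n]; rw [smul_neg, neg_smul]; ring_nf⟩
      intro z hz
      obtain ⟨m, hm⟩ := hmul₁ z hz
      exact ⟨-(m * n), by rw [hm, hg₁g', smul_smul, smul_neg, neg_smul]; ring_nf⟩
    · refine ⟨g', hg'co, ?_, m₀ * n, hposi, hm₀n⟩
      intro z hz
      obtain ⟨m, hm⟩ := hmul₁ z hz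
      exact ⟨m * n, by rw [hm, hg₁g', smul_smul]⟩
  have hgne : g ≠ 0 := by
    intro h
    rw [h, smul_zero] at hk₀
    exact hf₀ne hk₀
  -- nonneg integer smul stays in submonoids
  have hzsmul : ∀ (M : AddSubmonoid (ℤ × ℤ)) (m : ℤ), 0 ≤ m → ∀ u ∈ M, m • u ∈ M := by
    intro M m hm u hu
    lift m to ℕ using hm
    rw [natCast_zsmul]
    exact M.nsmul_mem hu m
  -- the cross functional
  set c : ℤ × ℤ → ℤ := fun z => g.1 * z.2 - g.2 * z.1 with hc
  have hcadd : ∀ z w, c (z + w) = c z + c w := by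
    intro z w; simp only [hc, Prod.fst_add, Prod.snd_add]; ring
  have hczsmul : ∀ (k : ℤ) (z : ℤ × ℤ), c (k • z) = k * c z := by
    intro k z; simp only [hc, Prod.smul_fst, Prod.smul_snd, smul_eq_mul]; ring
  have hcker : ∀ z, c z = 0 ↔ ∃ k : ℤ, z = k • g := by
    intro z
    constructor
    · intro h
      have := L7_prim hgco (z := z) (by simp only [hc] at h; linarith)
      simpa using this
    · rintro ⟨k, rfl⟩
      simp only [hc, Prod.smul_fst, Prod.smul_snd, smul_eq_mul]; ring
  have hk₀gF : k₀ • g ∈ F := by rw [← hk₀]; exact hf₀F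
  -- coefficients of elements of F are nonnegative
  have hFmul : ∀ f ∈ F, ∃ k : ℤ, 0 ≤ k ∧ f = k • g := by
    intro f hf
    obtain ⟨k, hk⟩ := hgmul f (AddSubgroup.subset_closure hf)
    refine ⟨k, ?_, hk⟩
    by_contra hkneg
    push_neg at hkneg
    have hu : k₀ • f ∈ S := hzsmul S k₀ (le_of_lt hk₀pos) f (hFS hf)
    have hnu : -(k₀ • f) ∈ S := by
      have h1 : -(k₀ • f) = (-k) • f₀ := by
        rw [hk, hk₀, smul_smul, smul_smul, ← neg_smul]; ring_nf
      rw [h1]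
      exact hzsmul S (-k) (by omega) f₀ (hFS hf₀F)
    have h0 := hpointed _ hu hnu
    rw [hk, smul_smul] at h0
    rcases smul_eq_zero.mp h0 with h | h
    · exact absurd h (ne_of_lt (mul_neg_of_pos_of_neg hk₀pos hkneg))
    · exact hgne h
  -- kernel elements of S lie in F
  have hkerS : ∀ s ∈ S, c s = 0 → s ∈ F := by
    intro s hs hcs
    obtain ⟨k, rfl⟩ := (hcker s).mp hcs
    rcases lt_trichotomy k 0 with hk | hk | hk
    · exfalso
      have hu : k₀ • (k • g) ∈ S := hzsmul S k₀ (le_of_lt hk₀pos) _ hs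
      have hnu : -(k₀ • (k • g)) ∈ S := by
        have h1 : -(k₀ • (k • g)) = (-k) • (k₀ • g) := by
          rw [smul_smul, smul_smul, ← neg_smul]; ring_nf
        rw [h1]
        exact hzsmul S (-k) (by omega) _ (hFS hk₀gF)
      have h0 := hpointed _ hu hnu
      rw [smul_smul] at h0
      rcases smul_eq_zero.mp h0 with h | h
      · have : k₀ * k < 0 := by
          apply mul_neg_of_pos_of_neg hk₀pos hk
        omega
      · exact hgne h
    · rw [hk, zero_smul]; exact F.zero_mem
    · have hmem : k₀ • (k • g) ∈ F := by
        rw [smul_smul, mul_comm, ← smul_smul]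
        exact hzsmul F k (le_of_lt hk) _ hk₀gF
      have hsplit : (k • g) + (k₀ - 1) • (k • g) ∈ F := by
        have : (k • g) + (k₀ - 1) • (k • g) = k₀ • (k • g) := by
          rw [sub_smul, one_smul]; abel
        rw [this]; exact hmem
      exact (hface _ hs _ (hzsmul S (k₀ - 1) (by omega) _ hs) hsplit).1
  -- constant sign
  have hsign : (∀ s ∈ S, 0 ≤ c s) ∨ (∀ s ∈ S, c s ≤ 0) := by
    by_contra h
    push_neg at h
    obtain ⟨⟨s, hs, hcs⟩, ⟨s', hs', hcs'⟩⟩ := h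
    -- c s < 0 < c s'
    have hw : (c s') • s + (-(c s)) • s' ∈ S :=
      S.add_mem (hzsmul S (c s') (by omega) _ hs) (hzsmul S (-(c s)) (by omega) _ hs')
    have hcw : c ((c s') • s + (-(c s)) • s') = 0 := by
      rw [hcadd, hczsmul, hczsmul]; ring
    have hwF := hkerS _ hw hcw
    have hA := (hface _ (hzsmul S (c s') (by omega) _ hs) _
      (hzsmul S (-(c s)) (by omega) _ hs') hwF).1
    obtain ⟨k, hk0, hk⟩ := hFmul _ hA
    have : c ((c s') • s) = 0 := by rw [hk]; exact (hcker _).mpr ⟨k, rfl⟩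
    rw [hczsmul] at this
    have : c s' * c s < 0 := mul_neg_of_pos_of_neg hcs' hcs
    omega
  rcases hsign with hpos | hneg
  · exact ⟨g, c, hgne, hcadd, hczsmul, hcker, hFmul, ⟨k₀, hk₀pos, hk₀gF⟩, hpos, hkerS⟩
  · refine ⟨g, fun z => -(c z), hgne, ?_, ?_, ?_, hFmul, ⟨k₀, hk₀pos, hk₀gF⟩, ?_, ?_⟩
    · intro z w; show -(c (z + w)) = -(c z) + -(c w); rw [hcadd]; ring
    · intro k z; show -(c (k • z)) = k * -(c z); rw [hczsmul]; ring
    · intro z; show -(c z) = 0 ↔ _; rw [neg_eq_zero]; exact hcker z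
    · intro s hs; show (0:ℤ) ≤ -(c s); have := hneg s hs; omega
    · intro s hs h0
      have h0' : -(c s) = 0 := h0
      exact hkerS s hs (by omega)


private lemma L7_conductor (F : AddSubmonoid (ℤ × ℤ)) (g : ℤ × ℤ) (hgne : g ≠ 0)
    (hFmul : ∀ f ∈ F, ∃ k : ℤ, 0 ≤ k ∧ f = k • g)
    (k₀ : ℤ) (hk₀pos : 0 < k₀) (hk₀ : k₀ • g ∈ F) :
    ∃ d c : ℤ, 0 < d ∧
      (∀ l : ℤ, l • g ∈ F → 0 ≤ l ∧ d ∣ l) ∧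
      (∀ k : ℤ, c ≤ k → (d * k) • g ∈ F) := by
  classical
  set Λ : AddSubmonoid ℤ := F.comap (zmultiplesHom (ℤ × ℤ) g) with hΛ
  have hmemΛ : ∀ l : ℤ, l ∈ Λ ↔ l • g ∈ F := by
    intro l
    rw [hΛ, AddSubmonoid.mem_comap]
    rfl
  have hΛpos : ∀ l ∈ Λ, 0 ≤ l := by
    intro l hl
    obtain ⟨k, hk0, hk⟩ := hFmul _ ((hmemΛ l).mp hl)
    have : (l - k) • g = 0 := by rw [sub_smul, hk]; abel
    rcases smul_eq_zero.mp this with h | h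
    · omega
    · exact absurd h hgne
  obtain ⟨a, ha⟩ := Int.subgroup_cyclic (AddSubgroup.closure (Λ : Set ℤ))
  have hdvd' : ∀ l ∈ Λ, a ∣ l := by
    intro l hl
    have h1 : l ∈ AddSubgroup.closure (Λ : Set ℤ) := AddSubgroup.subset_closure hl
    rw [ha, AddSubgroup.mem_closure_singleton] at h1
    obtain ⟨m, hm⟩ := h1
    exact ⟨m, by rw [← hm, smul_eq_mul]; ring⟩
  have hk₀Λ : k₀ ∈ Λ := (hmemΛ k₀).mpr hk₀
  have hane : a ≠ 0 := by
    intro h0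
    obtain ⟨m, hm⟩ := hdvd' k₀ hk₀Λ
    rw [h0] at hm
    simp at hm
    omega
  have haC : a ∈ AddSubgroup.closure (Λ : Set ℤ) := by
    rw [ha, AddSubgroup.mem_closure_singleton]
    exact ⟨1, one_smul _ _⟩
  obtain ⟨m, hmΛ, n, hnΛ, hmn⟩ := L7_diff Λ haC
  -- arrange d = m' - n' with m', n' ∈ Λ and d = |a| > 0
  obtain ⟨m', hm'Λ, n', hn'Λ, hd⟩ :
      ∃ m' ∈ Λ, ∃ n' ∈ Λ, m' - n' = |a| := by
    rcases abs_cases a with ⟨h1, _⟩ | ⟨h1, _⟩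
    · exact ⟨m, hmΛ, n, hnΛ, by omega⟩
    · exact ⟨n, hnΛ, m, hmΛ, by omega⟩
  set d : ℤ := |a| with hdabs
  have hdpos : 0 < d := abs_pos.mpr hane
  have hdvd : ∀ l ∈ Λ, d ∣ l := by
    intro l hl
    rw [hdabs]
    exact (abs_dvd a l).mpr (hdvd' l hl)
  -- q = n' / d
  obtain ⟨q, hq⟩ : d ∣ n' := hdvd n' hn'Λ
  have hqnn : 0 ≤ q := by nlinarith [hΛpos n' hn'Λ]
  have key : ∀ u v : ℤ, 0 ≤ u → 0 ≤ v → u * n' + v * m' ∈ Λ := by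
    intro u v hu hv
    lift u to ℕ using hu
    lift v to ℕ using hv
    have h1 : (u : ℤ) * n' = u • n' := by rw [nsmul_eq_mul]
    have h2 : (v : ℤ) * m' = v • m' := by rw [nsmul_eq_mul]
    rw [h1, h2]
    exact Λ.add_mem (Λ.nsmul_mem hn'Λ u) (Λ.nsmul_mem hm'Λ v)
  refine ⟨d, q ^ 2, hdpos, ?_, ?_⟩
  · intro l hl
    exact ⟨hΛpos l ((hmemΛ l).mpr hl), hdvd l ((hmemΛ l).mpr hl)⟩
  · intro k hk
    rw [← hmemΛ]
    rcases eq_or_lt_of_le hqnn with hq0 | hqpos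
    · -- q = 0 : n' = 0 and d = m' ∈ Λ
      have hn'0 : n' = 0 := by rw [hq, ← hq0]; ring
      have hdm : d = m' := by omega
      have : d * k = 0 * n' + k * m' := by rw [hdm]; ring
      rw [this]
      have hk0 : 0 ≤ k := by
        have hq2 : q ^ 2 = 0 := by rw [← hq0]; ring
        omega
      exact key 0 k le_rfl hk0
    · set r : ℤ := k % q with hr
      set s : ℤ := k / q with hs
      have hk' : k = s * q + r := by
        rw [hs, hr]; linear_combination -(Int.mul_ediv_add_emod k q)
      have hr0 : 0 ≤ r := Int.emod_nonneg k (by omega)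
      have hrq : r < q := Int.emod_lt_of_pos k (by omega)
      have hsq : q ≤ s := by
        rw [hs]
        rw [Int.le_ediv_iff_mul_le (by omega)]
        nlinarith
      have hdk : d * k = (s - r) * n' + r * m' := by
        have h1 : m' = n' + d := by omega
        rw [h1, hq, hk']; ring
      rw [hdk]
      exact key (s - r) r (by omega) hr0


private lemma L7_deep (S : AddSubmonoid (ℤ × ℤ))
    (hgen : AddSubgroup.closure (S : Set (ℤ × ℤ)) = ⊤)
    (L₁ L₂ : ℤ × ℤ → ℤ)
    (hL₁add : ∀ z w, L₁ (z + w) = L₁ z + L₁ w)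
    (hL₂add : ∀ z w, L₂ (z + w) = L₂ z + L₂ w)
    (hL₁smul : ∀ (k : ℤ) (z : ℤ × ℤ), L₁ (k • z) = k * L₁ z)
    (hL₂smul : ∀ (k : ℤ) (z : ℤ × ℤ), L₂ (k • z) = k * L₂ z)
    (f₁ f₂ : ℤ × ℤ) (hf₁S : f₁ ∈ S) (hf₂S : f₂ ∈ S)
    (hL₁f₁ : L₁ f₁ = 0) (hL₂f₂ : L₂ f₂ = 0)
    (hL₂f₁ : 0 < L₂ f₁) (hL₁f₂ : 0 < L₁ f₂) :
    ∃ N : ℤ, ∀ z : ℤ × ℤ, N ≤ L₁ z → N ≤ L₂ z → z ∈ S := by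
  classical
  have hL₂0 : L₂ 0 = 0 := by have := hL₂add 0 0; simpa using this
  have hzsmul : ∀ (m : ℤ), 0 ≤ m → ∀ u ∈ S, m • u ∈ S := by
    intro m hm u hu
    lift m to ℕ using hm
    rw [natCast_zsmul]
    exact S.nsmul_mem hu m
  set D : ℤ := f₁.1 * f₂.2 - f₁.2 * f₂.1 with hD
  have hDne : D ≠ 0 := by
    intro h0
    rw [hD] at h0
    have e1 : f₂.2 • f₁ = f₁.2 • f₂ := by
      ext
      · show f₂.2 * f₁.1 = f₁.2 * f₂.1
        linear_combination h0
      · show f₂.2 * f₁.2 = f₁.2 * f₂.2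
        ring
    have e2 : f₂.1 • f₁ = f₁.1 • f₂ := by
      ext
      · show f₂.1 * f₁.1 = f₁.1 * f₂.1
        ring
      · show f₂.1 * f₁.2 = f₁.1 * f₂.2
        linear_combination -h0
    have h1 : f₁.2 * L₁ f₂ = 0 := by
      have := congrArg L₁ e1
      rw [hL₁smul, hL₁smul, hL₁f₁] at this
      omega
    have h2 : f₁.1 * L₁ f₂ = 0 := by
      have := congrArg L₁ e2
      rw [hL₁smul, hL₁smul, hL₁f₁] at this
      omega
    have hf₁2 : f₁.2 = 0 := by
      rcases mul_eq_zero.mp h1 with h | h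
      · exact h
      · omega
    have hf₁1 : f₁.1 = 0 := by
      rcases mul_eq_zero.mp h2 with h | h
      · exact h
      · omega
    have hf0 : f₁ = 0 := Prod.ext hf₁1 hf₁2
    rw [hf0, hL₂0] at hL₂f₁
    omega
  have hCramer : ∀ t : ℤ × ℤ,
      D • t = (t.1 * f₂.2 - t.2 * f₂.1) • f₁ + (f₁.1 * t.2 - f₁.2 * t.1) • f₂ := by
    intro t
    ext <;> simp only [Prod.smul_fst, Prod.smul_snd, Prod.fst_add, Prod.snd_add,
      smul_eq_mul, hD] <;> ring
  set Rel : ℤ × ℤ → Prop := fun z => ∃ a b : ℤ, z = a • f₁ + b • f₂ with hRel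
  have hReladd : ∀ z w, Rel z → Rel w → Rel (z + w) := by
    rintro z w ⟨a, b, rfl⟩ ⟨a', b', rfl⟩
    exact ⟨a + a', b + b', by rw [add_smul, add_smul]; abel⟩
  have hRelneg : ∀ z, Rel z → Rel (-z) := by
    rintro z ⟨a, b, rfl⟩
    exact ⟨-a, -b, by rw [neg_smul, neg_smul]; abel⟩
  have hRelD : ∀ w : ℤ × ℤ, Rel (D • w) := fun w => ⟨_, _, hCramer w⟩
  set m : ℕ := D.natAbs with hm
  have hmpos : 0 < m := Int.natAbs_pos.mpr hDne
  have hm1 : (1 : ℤ) ≤ (m : ℤ) := by exact_mod_cast hmpos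
  have hmne : ((m : ℤ)) ≠ 0 := by omega
  have hRelm : ∀ w : ℤ × ℤ, Rel ((m : ℤ) • w) := by
    intro w
    rcases Int.natAbs_eq D with h | h
    · have hDm : D = (m : ℤ) := by rw [hm]; exact_mod_cast h
      rw [← hDm]
      exact hRelD w
    · have hDm : D = -(m : ℤ) := by rw [hm]; exact_mod_cast h
      have hDw : ((m : ℤ)) • w = -(D • w) := by
        rw [hDm, neg_smul, neg_neg]
      rw [hDw]
      exact hRelneg _ (hRelD w)
  have hrep : ∀ z : ℤ × ℤ, ∃ s, s ∈ S ∧ Rel (z - s) := by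
    intro z
    have hz : z ∈ AddSubgroup.closure (S : Set (ℤ × ℤ)) := by rw [hgen]; trivial
    obtain ⟨s, hs, t, ht, rfl⟩ := L7_diff S hz
    refine ⟨s + (m - 1) • t, S.add_mem hs (S.nsmul_mem ht (m - 1)), ?_⟩
    have h1 : (m - 1) • t = ((m : ℤ) - 1) • t := by
      rw [← natCast_zsmul]
      congr 1
      push_cast [Nat.cast_sub (by omega : 1 ≤ m)]
      ring
    have heq : s - t - (s + (m - 1) • t) = -((m : ℤ) • t) := by
      rw [h1, sub_smul, one_smul]
      abel
    rw [heq]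
    exact hRelneg _ (hRelm t)
  choose rep hrepS hrepRel using hrep
  set Q : Finset (ℤ × ℤ) := Finset.Icc ((0 : ℤ), (0 : ℤ)) ((m : ℤ) - 1, (m : ℤ) - 1) with hQ
  have hQne : Q.Nonempty := ⟨(0, 0), by
    rw [hQ, Finset.mem_Icc]
    exact ⟨Prod.le_def.mpr ⟨le_rfl, le_rfl⟩, Prod.le_def.mpr ⟨by omega, by omega⟩⟩⟩
  set N : ℤ := Q.sup' hQne fun q => max (L₁ (rep q)) (L₂ (rep q)) with hN
  refine ⟨N, ?_⟩
  intro z h1 h2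
  set q : ℤ × ℤ := (z.1 % (m : ℤ), z.2 % (m : ℤ)) with hq
  have h01 : 0 ≤ z.1 % (m : ℤ) := Int.emod_nonneg z.1 hmne
  have h02 : 0 ≤ z.2 % (m : ℤ) := Int.emod_nonneg z.2 hmne
  have h11 : z.1 % (m : ℤ) < (m : ℤ) := Int.emod_lt_of_pos z.1 (by omega)
  have h12 : z.2 % (m : ℤ) < (m : ℤ) := Int.emod_lt_of_pos z.2 (by omega)
  have hqQ : q ∈ Q := by
    rw [hQ, Finset.mem_Icc]
    constructor
    · rw [hq, Prod.le_def]
      exact ⟨h01, h02⟩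
    · rw [hq, Prod.le_def]
      exact ⟨by omega, by omega⟩
  have hrel1 : Rel (z - q) := by
    have heq : z - q = (m : ℤ) • (z.1 / (m : ℤ), z.2 / (m : ℤ)) := by
      rw [hq]
      ext
      · show z.1 - z.1 % (m : ℤ) = (m : ℤ) * (z.1 / (m : ℤ))
        rw [Int.emod_def]; ring
      · show z.2 - z.2 % (m : ℤ) = (m : ℤ) * (z.2 / (m : ℤ))
        rw [Int.emod_def]; ring
    rw [heq]
    exact hRelm _
  have hrel : Rel (z - rep q) := by
    have heq : z - rep q = (z - q) + (q - rep q) := by abel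
    rw [heq]
    exact hReladd _ _ hrel1 (hrepRel q)
  obtain ⟨a, b, hab⟩ := hrel
  have hLN1 : L₁ (rep q) ≤ N := by
    rw [hN]
    exact le_trans (le_max_left _ _)
      (Finset.le_sup' (fun q => max (L₁ (rep q)) (L₂ (rep q))) hqQ)
  have hLN2 : L₂ (rep q) ≤ N := by
    rw [hN]
    exact le_trans (le_max_right _ _)
      (Finset.le_sup' (fun q => max (L₁ (rep q)) (L₂ (rep q))) hqQ)
  have hzeq : z = rep q + (a • f₁ + b • f₂) := by
    rw [← hab]; abel
  have hL2 : L₂ z = L₂ (rep q) + a * L₂ f₁ := by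
    rw [hzeq, hL₂add, hL₂add, hL₂smul, hL₂smul, hL₂f₂]; ring
  have hL1 : L₁ z = L₁ (rep q) + b * L₁ f₂ := by
    rw [hzeq, hL₁add, hL₁add, hL₁smul, hL₁smul, hL₁f₁]; ring
  have ha : 0 ≤ a := by
    by_contra hneg
    push_neg at hneg
    have := mul_neg_of_neg_of_pos hneg hL₂f₁
    omega
  have hb : 0 ≤ b := by
    by_contra hneg
    push_neg at hneg
    have := mul_neg_of_neg_of_pos hneg hL₁f₂
    omega
  rw [hzeq]
  exact S.add_mem (hrepS q) (S.add_mem (hzsmul a ha f₁ hf₁S) (hzsmul b hb f₂ hf₂S))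


private lemma L7_strip (S F : AddSubmonoid (ℤ × ℤ)) (hFS : F ≤ S)
    (g : ℤ × ℤ) (L L' : ℤ × ℤ → ℤ)
    (hLadd : ∀ z w, L (z + w) = L z + L w)
    (hLsmul : ∀ (k : ℤ) (z : ℤ × ℤ), L (k • z) = k * L z)
    (hLker : ∀ z, L z = 0 ↔ ∃ k : ℤ, z = k • g)
    (hFmul : ∀ f ∈ F, ∃ k : ℤ, 0 ≤ k ∧ f = k • g)
    (hL'add : ∀ z w, L' (z + w) = L' z + L' w)
    (hL'smul : ∀ (k : ℤ) (z : ℤ × ℤ), L' (k • z) = k * L' z)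
    (hL'S : ∀ s ∈ S, 0 ≤ L' s)
    (hL'g : 0 < L' g)
    (d c : ℤ) (hd : 0 < d)
    (hΛd : ∀ l : ℤ, l • g ∈ F → 0 ≤ l ∧ d ∣ l)
    (hcond : ∀ k : ℤ, c ≤ k → (d * k) • g ∈ F)
    (x : ℤ × ℤ) (hx : x ∈ S) (a : ℤ) :
    ∃ T E : Finset (ℤ × ℤ),
      ((S : Set (ℤ × ℤ)) \ {w | ∃ s ∈ S, w = x + s}) ∩ {z | L z = a} =
        (⋃ y ∈ T, {w | ∃ f ∈ F, w = y + f}) ∪ (E : Set (ℤ × ℤ)) := by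
  classical
  have hLg : L g = 0 := (hLker g).mpr ⟨1, (one_smul _ _).symm⟩
  rcases Set.eq_empty_or_nonempty
    (((S : Set (ℤ × ℤ)) \ {w | ∃ s ∈ S, w = x + s}) ∩ {z | L z = a}) with hemp | ⟨p, hp⟩
  · refine ⟨∅, ∅, ?_⟩
    rw [hemp]
    simp
  set Λ : AddSubmonoid ℤ := F.comap (zmultiplesHom (ℤ × ℤ) g) with hΛ
  have hmemΛ : ∀ l : ℤ, l ∈ Λ ↔ l • g ∈ F := by
    intro l
    rw [hΛ, AddSubmonoid.mem_comap]
    rfl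
  set A : Set ℤ := {k : ℤ | p + k • g ∈ S} with hAdef
  set B : Set ℤ := {k : ℤ | ∃ s ∈ S, p + k • g = x + s} with hBdef
  have hBA : B ⊆ A := by
    rintro k ⟨s, hs, heq⟩
    show p + k • g ∈ S
    rw [heq]
    exact S.add_mem hx hs
  have hA : ∀ k ∈ A, ∀ l ∈ Λ, k + l ∈ A := by
    intro k hk l hl
    show p + (k + l) • g ∈ S
    rw [add_smul, ← add_assoc]
    exact S.add_mem hk (hFS ((hmemΛ l).mp hl))
  have hB : ∀ k ∈ B, ∀ l ∈ Λ, k + l ∈ B := by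
    rintro k ⟨s, hs, heq⟩ l hl
    refine ⟨s + l • g, S.add_mem hs (hFS ((hmemΛ l).mp hl)), ?_⟩
    rw [add_smul, ← add_assoc, heq, add_assoc]
  have hβ : ∀ k ∈ A, min 0 (-(L' p)) ≤ k := by
    intro k hk
    have h1 : 0 ≤ L' p + k * L' g := by
      have h2 := hL'S _ hk
      rwa [hL'add, hL'smul] at h2
    rcases le_or_gt 0 k with h | h
    · exact le_trans (min_le_left _ _) h
    · have h2 : k * L' g ≤ k := by nlinarith
      exact le_trans (min_le_right _ _) (by linarith)
  obtain ⟨T₀, E₀, hTE⟩ := L7_lineDecomp Λ d c hd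
    (fun l hl => (hΛd l ((hmemΛ l).mp hl)).2)
    (fun l hl => (hΛd l ((hmemΛ l).mp hl)).1)
    (fun k hk => (hmemΛ _).mpr (hcond k hk))
    A B hBA hA hB _ hβ
  have hmemD : ∀ k : ℤ,
      (p + k • g) ∈ ((S : Set (ℤ × ℤ)) \ {w | ∃ s ∈ S, w = x + s}) ∩ {z | L z = a} ↔
        k ∈ A \ B := by
    intro k
    have hLk : L (p + k • g) = a := by
      rw [hLadd, hLsmul, hLg, hp.2]
      ring
    constructor
    · rintro ⟨⟨h1, h2⟩, _⟩
      exact ⟨h1, fun hb => h2 hb⟩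
    · rintro ⟨h1, h2⟩
      exact ⟨⟨h1, fun hb => h2 hb⟩, hLk⟩
  have hsurj : ∀ z ∈ ((S : Set (ℤ × ℤ)) \ {w | ∃ s ∈ S, w = x + s}) ∩ {z | L z = a},
      ∃ k : ℤ, z = p + k • g := by
    intro z hz
    have h1 : L (z - p) = 0 := by
      have h2 : L ((z - p) + p) = L (z - p) + L p := hLadd _ _
      rw [sub_add_cancel] at h2
      have h3 : L z = a := hz.2
      have h4 : L p = a := hp.2
      omega
    obtain ⟨k, hk⟩ := (hLker _).mp h1
    exact ⟨k, by rw [← hk]; abel⟩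
  refine ⟨T₀.image (fun k => p + k • g), E₀.image (fun k => p + k • g), ?_⟩
  ext z
  constructor
  · intro hz
    obtain ⟨k, rfl⟩ := hsurj z hz
    have hk : k ∈ A \ B := (hmemD k).mp hz
    rw [hTE] at hk
    rcases hk with hk | hk
    · simp only [Set.mem_iUnion, exists_prop] at hk
      obtain ⟨y, hy, l, hl, rfl⟩ := hk
      refine Set.mem_union_left _ ?_
      simp only [Set.mem_iUnion, exists_prop]
      refine ⟨p + y • g, Finset.mem_image_of_mem _ hy, l • g, (hmemΛ l).mp hl, ?_⟩
      rw [add_smul]; abel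
    · exact Set.mem_union_right _ (Finset.mem_coe.mpr (Finset.mem_image_of_mem _ hk))
  · intro hz
    rcases hz with hz | hz
    · simp only [Set.mem_iUnion, exists_prop] at hz
      obtain ⟨y', hy', f, hf, rfl⟩ := hz
      obtain ⟨y, hy, rfl⟩ := Finset.mem_image.mp hy'
      obtain ⟨l, hl0, rfl⟩ := hFmul f hf
      have hlΛ : l ∈ Λ := (hmemΛ l).mpr hf
      have hmem : y + l ∈ A \ B := by
        rw [hTE]
        refine Set.mem_union_left _ ?_
        simp only [Set.mem_iUnion, exists_prop]
        exact ⟨y, hy, l, hlΛ, rfl⟩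
      have := (hmemD (y + l)).mpr hmem
      have heq : p + y • g + l • g = p + (y + l) • g := by rw [add_smul]; abel
      rwa [heq]
    · obtain ⟨k, hk, rfl⟩ := Finset.mem_image.mp (Finset.mem_coe.mp hz)
      have hmem : k ∈ A \ B := by
        rw [hTE]
        exact Set.mem_union_right _ (Finset.mem_coe.mpr hk)
      exact (hmemD k).mpr hmem


/-- **Lemma (L7), second part.** Let `F₁, F₂` be the two one-dimensional faces of `S`.
For each `x ∈ S`, the set `S \ (x + S)` is the union of finitely many translates of
`F₁`, finitely many translates of `F₂`, and a finite set. -/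
theorem compl_translate_eq_union_of_translates_of_faces (S F₁ F₂ : AddSubmonoid (ℤ × ℤ))
    (hFG : S.FG)
    (hgen : AddSubgroup.closure (S : Set (ℤ × ℤ)) = ⊤)
    (hpointed : ∀ x ∈ S, -x ∈ S → x = 0)
    (hF₁S : F₁ ≤ S) (hF₂S : F₂ ≤ S) (hne : F₁ ≠ F₂)
    (hface₁ : ∀ x ∈ S, ∀ y ∈ S, x + y ∈ F₁ → x ∈ F₁ ∧ y ∈ F₁)
    (hface₂ : ∀ x ∈ S, ∀ y ∈ S, x + y ∈ F₂ → x ∈ F₂ ∧ y ∈ F₂)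
    (hdim₁ : Nonempty (AddSubgroup.closure (F₁ : Set (ℤ × ℤ)) ≃+ ℤ))
    (hdim₂ : Nonempty (AddSubgroup.closure (F₂ : Set (ℤ × ℤ)) ≃+ ℤ))
    (x : ℤ × ℤ) (hx : x ∈ S) :
    ∃ T₁ T₂ E : Finset (ℤ × ℤ),
      (S : Set (ℤ × ℤ)) \ {w | ∃ s ∈ S, w = x + s} =
        (⋃ y ∈ T₁, {w | ∃ f ∈ F₁, w = y + f}) ∪
          (⋃ y ∈ T₂, {w | ∃ f ∈ F₂, w = y + f}) ∪ (E : Set (ℤ × ℤ)) := by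
  classical
  obtain ⟨g₁, L₁, hg₁ne, hL₁add, hL₁smul, hL₁ker, hF₁mul, ⟨k₁, hk₁pos, hk₁F⟩, hL₁S, hL₁kerS⟩ :=
    L7_face S F₁ hF₁S hpointed hface₁ hdim₁
  obtain ⟨g₂, L₂, hg₂ne, hL₂add, hL₂smul, hL₂ker, hF₂mul, ⟨k₂, hk₂pos, hk₂F⟩, hL₂S, hL₂kerS⟩ :=
    L7_face S F₂ hF₂S hpointed hface₂ hdim₂
  have hL₁g₁ : L₁ g₁ = 0 := (hL₁ker g₁).mpr ⟨1, (one_smul _ _).symm⟩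
  have hL₂g₂ : L₂ g₂ = 0 := (hL₂ker g₂).mpr ⟨1, (one_smul _ _).symm⟩
  -- cross positivity
  have hL₂g₁ : 0 < L₂ g₁ := by
    have h0 : 0 ≤ L₂ (k₁ • g₁) := hL₂S _ (hF₁S hk₁F)
    rw [hL₂smul] at h0
    have hnn : 0 ≤ L₂ g₁ := by nlinarith
    rcases lt_or_eq_of_le hnn with h | h
    · exact h
    · exfalso
      -- L₂ g₁ = 0 forces F₁ = F₂
      have hk₁F₂ : k₁ • g₁ ∈ F₂ := by
        refine hL₂kerS _ (hF₁S hk₁F) ?_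
        rw [hL₂smul, ← h]
        ring
      have h12 : F₁ ≤ F₂ := by
        intro f hf
        obtain ⟨k, _, rfl⟩ := hF₁mul f hf
        refine hL₂kerS _ (hF₁S hf) ?_
        rw [hL₂smul, ← h]
        ring
      have h21 : F₂ ≤ F₁ := by
        intro f hf
        obtain ⟨k, _, rfl⟩ := hF₂mul f hf
        obtain ⟨j, hj0, hj⟩ := hF₂mul _ hk₁F₂
        have hjne : j ≠ 0 := by
          intro h0'
          rw [h0', zero_smul] at hj
          rcases smul_eq_zero.mp hj with h' | h'
          · omega
          · exact hg₁ne h'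
        have hL₁g₂0 : L₁ g₂ = 0 := by
          have := congrArg L₁ hj
          rw [hL₁smul, hL₁smul, hL₁g₁] at this
          have h' : j * L₁ g₂ = 0 := by omega
          rcases mul_eq_zero.mp h' with h'' | h''
          · exact absurd h'' hjne
          · exact h''
        refine hL₁kerS _ (hF₂S hf) ?_
        rw [hL₁smul, hL₁g₂0]
        ring
      exact hne (le_antisymm h12 h21)
  have hL₁g₂ : 0 < L₁ g₂ := by
    have h0 : 0 ≤ L₁ (k₂ • g₂) := hL₁S _ (hF₂S hk₂F)
    rw [hL₁smul] at h0
    have hnn : 0 ≤ L₁ g₂ := by nlinarith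
    rcases lt_or_eq_of_le hnn with h | h
    · exact h
    · exfalso
      have hk₂F₁ : k₂ • g₂ ∈ F₁ := by
        refine hL₁kerS _ (hF₂S hk₂F) ?_
        rw [hL₁smul, ← h]
        ring
      have h21 : F₂ ≤ F₁ := by
        intro f hf
        obtain ⟨k, _, rfl⟩ := hF₂mul f hf
        refine hL₁kerS _ (hF₂S hf) ?_
        rw [hL₁smul, ← h]
        ring
      have h12 : F₁ ≤ F₂ := by
        intro f hf
        obtain ⟨k, _, rfl⟩ := hF₁mul f hf
        obtain ⟨j, hj0, hj⟩ := hF₁mul _ hk₂F₁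
        have hjne : j ≠ 0 := by
          intro h0'
          rw [h0', zero_smul] at hj
          rcases smul_eq_zero.mp hj with h' | h'
          · omega
          · exact hg₂ne h'
        have hL₂g₁0 : L₂ g₁ = 0 := by
          have := congrArg L₂ hj
          rw [hL₂smul, hL₂smul, hL₂g₂] at this
          have h' : j * L₂ g₁ = 0 := by omega
          rcases mul_eq_zero.mp h' with h'' | h''
          · exact absurd h'' hjne
          · exact h''
        refine hL₂kerS _ (hF₁S hf) ?_
        rw [hL₂smul, hL₂g₁0]
        ring
      exact hne (le_antisymm h12 h21)
  -- deep points
  obtain ⟨N₀, hdeep⟩ := L7_deep S hgen L₁ L₂ hL₁add hL₂add hL₁smul hL₂smul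
    (k₁ • g₁) (k₂ • g₂) (hF₁S hk₁F) (hF₂S hk₂F)
    (by rw [hL₁smul, hL₁g₁]; ring) (by rw [hL₂smul, hL₂g₂]; ring)
    (by rw [hL₂smul]; exact mul_pos hk₁pos hL₂g₁)
    (by rw [hL₁smul]; exact mul_pos hk₂pos hL₁g₂)
  -- conductors
  obtain ⟨d₁, c₁, hd₁pos, hΛ₁, hcond₁⟩ := L7_conductor F₁ g₁ hg₁ne hF₁mul k₁ hk₁pos hk₁F
  obtain ⟨d₂, c₂, hd₂pos, hΛ₂, hcond₂⟩ := L7_conductor F₂ g₂ hg₂ne hF₂mul k₂ hk₂pos hk₂F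
  -- strips
  choose T₁f E₁f hTE₁ using L7_strip S F₁ hF₁S g₁ L₁ L₂ hL₁add hL₁smul hL₁ker hF₁mul
    hL₂add hL₂smul hL₂S hL₂g₁ d₁ c₁ hd₁pos hΛ₁ hcond₁ x hx
  choose T₂f E₂f hTE₂ using L7_strip S F₂ hF₂S g₂ L₂ L₁ hL₂add hL₂smul hL₂ker hF₂mul
    hL₁add hL₁smul hL₁S hL₁g₂ d₂ c₂ hd₂pos hΛ₂ hcond₂ x hx
  set N : ℤ := N₀ + max (L₁ x) (L₂ x) with hN
  -- every element of the difference set has a small coordinate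
  have hkey : ∀ w : ℤ × ℤ, w ∈ (S : Set (ℤ × ℤ)) \ {w | ∃ s ∈ S, w = x + s} →
      L₁ w < N ∨ L₂ w < N := by
    intro w hw
    by_contra h
    push_neg at h
    have h1 : N₀ ≤ L₁ (w - x) := by
      have := hL₁add (w - x) x
      rw [sub_add_cancel] at this
      have hmax := le_max_left (L₁ x) (L₂ x)
      omega
    have h2 : N₀ ≤ L₂ (w - x) := by
      have := hL₂add (w - x) x
      rw [sub_add_cancel] at this
      have hmax := le_max_right (L₁ x) (L₂ x)
      omega
    have hmem := hdeep _ h1 h2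
    exact hw.2 ⟨w - x, hmem, by abel⟩
  refine ⟨(Finset.Ico (0 : ℤ) N).biUnion T₁f, (Finset.Ico (0 : ℤ) N).biUnion T₂f,
    ((Finset.Ico (0 : ℤ) N).biUnion E₁f) ∪ ((Finset.Ico (0 : ℤ) N).biUnion E₂f), ?_⟩
  ext w
  constructor
  · intro hw
    rcases hkey w hw with hsmall | hsmall
    · have ha : (0 : ℤ) ≤ L₁ w := hL₁S _ hw.1
      have hwa : w ∈ ((S : Set (ℤ × ℤ)) \ {w | ∃ s ∈ S, w = x + s}) ∩ {z | L₁ z = L₁ w} :=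
        ⟨hw, rfl⟩
      rw [hTE₁ (L₁ w)] at hwa
      have haI : L₁ w ∈ Finset.Ico (0 : ℤ) N := Finset.mem_Ico.mpr ⟨ha, hsmall⟩
      rcases hwa with hwa | hwa
      · refine Set.mem_union_left _ (Set.mem_union_left _ ?_)
        simp only [Set.mem_iUnion, exists_prop] at hwa ⊢
        obtain ⟨y, hy, hwy⟩ := hwa
        exact ⟨y, Finset.mem_biUnion.mpr ⟨L₁ w, haI, hy⟩, hwy⟩
      · refine Set.mem_union_right _ ?_
        rw [Finset.coe_union]
        refine Set.mem_union_left _ ?_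
        exact Finset.mem_coe.mpr (Finset.mem_biUnion.mpr ⟨L₁ w, haI, hwa⟩)
    · have ha : (0 : ℤ) ≤ L₂ w := hL₂S _ hw.1
      have hwa : w ∈ ((S : Set (ℤ × ℤ)) \ {w | ∃ s ∈ S, w = x + s}) ∩ {z | L₂ z = L₂ w} :=
        ⟨hw, rfl⟩
      rw [hTE₂ (L₂ w)] at hwa
      have haI : L₂ w ∈ Finset.Ico (0 : ℤ) N := Finset.mem_Ico.mpr ⟨ha, hsmall⟩
      rcases hwa with hwa | hwa
      · refine Set.mem_union_left _ (Set.mem_union_right _ ?_)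
        simp only [Set.mem_iUnion, exists_prop] at hwa ⊢
        obtain ⟨y, hy, hwy⟩ := hwa
        exact ⟨y, Finset.mem_biUnion.mpr ⟨L₂ w, haI, hy⟩, hwy⟩
      · refine Set.mem_union_right _ ?_
        rw [Finset.coe_union]
        refine Set.mem_union_right _ ?_
        exact Finset.mem_coe.mpr (Finset.mem_biUnion.mpr ⟨L₂ w, haI, hwa⟩)
  · intro hw
    rcases hw with (hw | hw) | hw
    · simp only [Set.mem_iUnion, exists_prop] at hw
      obtain ⟨y, hy, hwy⟩ := hw
      obtain ⟨a, _, hya⟩ := Finset.mem_biUnion.mp hy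
      have : w ∈ ((S : Set (ℤ × ℤ)) \ {w | ∃ s ∈ S, w = x + s}) ∩ {z | L₁ z = a} := by
        rw [hTE₁ a]
        refine Set.mem_union_left _ ?_
        simp only [Set.mem_iUnion, exists_prop]
        exact ⟨y, hya, hwy⟩
      exact this.1
    · simp only [Set.mem_iUnion, exists_prop] at hw
      obtain ⟨y, hy, hwy⟩ := hw
      obtain ⟨a, _, hya⟩ := Finset.mem_biUnion.mp hy
      have : w ∈ ((S : Set (ℤ × ℤ)) \ {w | ∃ s ∈ S, w = x + s}) ∩ {z | L₂ z = a} := by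
        rw [hTE₂ a]
        refine Set.mem_union_left _ ?_
        simp only [Set.mem_iUnion, exists_prop]
        exact ⟨y, hya, hwy⟩
      exact this.1
    · rw [Finset.coe_union] at hw
      rcases hw with hw | hw
      · obtain ⟨a, _, hwa⟩ := Finset.mem_biUnion.mp (Finset.mem_coe.mp hw)
        have : w ∈ ((S : Set (ℤ × ℤ)) \ {w | ∃ s ∈ S, w = x + s}) ∩ {z | L₁ z = a} := by
          rw [hTE₁ a]
          exact Set.mem_union_right _ (Finset.mem_coe.mpr hwa)
        exact this.1
      · obtain ⟨a, _, hwa⟩ := Finset.mem_biUnion.mp (Finset.mem_coe.mp hw)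
        have : w ∈ ((S : Set (ℤ × ℤ)) \ {w | ∃ s ∈ S, w = x + s}) ∩ {z | L₂ z = a} := by
          rw [hTE₂ a]
          exact Set.mem_union_right _ (Finset.mem_coe.mpr hwa)
        exact this.1
end

section
/- S has exactly two one-dimensional faces: there exist faces F₁ ≠ F₂ of S, each generating a subgroup of ℤ² isomorphic to ℤ, and every face of S whose generated subgroup is isomorphic to ℤ equals F₁ or F₂. -/
namespace TwoFaces

def Dt (a b : ℤ × ℤ) : ℤ := a.1 * b.2 - a.2 * b.1

lemma Dt_self (a : ℤ × ℤ) : Dt a a = 0 := by simp [Dt]; ring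

lemma Dt_swap (a b : ℤ × ℤ) : Dt a b = - Dt b a := by simp [Dt]; ring

lemma Dt_add_right (a b c : ℤ × ℤ) : Dt a (b + c) = Dt a b + Dt a c := by
  simp [Dt, Prod.fst_add, Prod.snd_add]; ring

lemma Dt_zero_right (a : ℤ × ℤ) : Dt a 0 = 0 := by simp [Dt]

lemma Dt_smul_right (m : ℤ) (a b : ℤ × ℤ) : Dt a (m • b) = m * Dt a b := by
  simp [Dt, Prod.smul_fst, Prod.smul_snd, smul_eq_mul]; ring

lemma Dt_smul_left (m : ℤ) (a b : ℤ × ℤ) : Dt (m • a) b = m * Dt a b := by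
  simp [Dt, Prod.smul_fst, Prod.smul_snd, smul_eq_mul]; ring

/-- Cramer identity. -/
lemma Dt_identity (a b c : ℤ × ℤ) : Dt b c • a + Dt a b • c = Dt a c • b := by
  have h1 : (Dt b c • a + Dt a b • c).1 = (Dt a c • b).1 := by
    simp [Dt, Prod.smul_fst, Prod.fst_add, smul_eq_mul]; ring
  have h2 : (Dt b c • a + Dt a b • c).2 = (Dt a c • b).2 := by
    simp [Dt, Prod.smul_snd, Prod.snd_add, smul_eq_mul]; ring
  exact Prod.ext h1 h2

lemma smul_mem_pos (S : AddSubmonoid (ℤ × ℤ)) {p : ℤ} (hp : 0 < p) {a : ℤ × ℤ}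
    (ha : a ∈ S) : p • a ∈ S := by
  have : p • a = p.toNat • a := by rw [← natCast_zsmul, Int.toNat_of_nonneg hp.le]
  rw [this]; exact S.nsmul_mem ha p.toNat

/-- if m•a = n•b with m ≠ 0 then the scalars can be chosen positive (pointedness). -/
lemma scale_pos (S : AddSubmonoid (ℤ × ℤ)) (hpointed : ∀ x ∈ S, -x ∈ S → x = 0)
    {a b : ℤ × ℤ} (ha : a ∈ S) (hb : b ∈ S) (ha0 : a ≠ 0)
    {m n : ℤ} (hm : m ≠ 0) (heq : m • a = n • b) :
    ∃ p q : ℤ, 0 < p ∧ 0 < q ∧ p • a = q • b := by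
  have hn : n ≠ 0 := by
    rintro rfl
    simp only [zero_smul] at heq
    exact hm (by simpa [ha0] using (smul_eq_zero.mp heq))
  rcases lt_or_gt_of_ne hm with hmneg | hmpos
  · rcases lt_or_gt_of_ne hn with hnneg | hnpos
    · -- both negative: p = -m, q = -n
      refine ⟨-m, -n, by omega, by omega, ?_⟩
      rw [neg_smul, neg_smul, heq]
    · -- m < 0 < n : contradiction
      exfalso
      have hx : (-m) • a ∈ S := smul_mem_pos S (by omega) ha
      have hnx : -((-m) • a) ∈ S := by
        rw [neg_smul, neg_neg, heq]
        exact smul_mem_pos S hnpos hb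
      have := hpointed _ hx hnx
      exact (smul_ne_zero (by omega : (-m) ≠ 0) ha0) this
  · rcases lt_or_gt_of_ne hn with hnneg | hnpos
    · exfalso
      have hx : m • a ∈ S := smul_mem_pos S hmpos ha
      have hnx : -(m • a) ∈ S := by
        rw [heq, ← neg_smul]
        exact smul_mem_pos S (by omega) hb
      have := hpointed _ hx hnx
      exact (smul_ne_zero hm ha0) this
    · exact ⟨m, n, hmpos, hnpos, heq⟩

/-- nonzero parallel elements of S lie on a common ray. -/
lemma ray (S : AddSubmonoid (ℤ × ℤ)) (hpointed : ∀ x ∈ S, -x ∈ S → x = 0)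
    {a b : ℤ × ℤ} (ha : a ∈ S) (hb : b ∈ S) (ha0 : a ≠ 0) (hb0 : b ≠ 0)
    (hD : Dt a b = 0) :
    ∃ p q : ℤ, 0 < p ∧ 0 < q ∧ p • a = q • b := by
  have hD' : a.1 * b.2 = a.2 * b.1 := by simpa [Dt, sub_eq_zero] using hD
  rcases (show a.1 ≠ 0 ∨ a.2 ≠ 0 by
    by_contra h; push_neg at h; exact ha0 (Prod.ext h.1 h.2)) with h1 | h2
  · have hb1 : b.1 ≠ 0 := by
      intro hb1
      apply hb0
      have : b.2 = 0 := by
        have := hD'; rw [hb1, mul_zero] at this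
        exact (mul_eq_zero.mp this).resolve_left h1
      exact Prod.ext hb1 this
    have key : b.1 • a = a.1 • b := by
      refine Prod.ext ?_ ?_ <;> simp [Prod.smul_fst, Prod.smul_snd, smul_eq_mul]
      · ring
      · rw [mul_comm b.1 a.2, ← hD', mul_comm]
    exact scale_pos S hpointed ha hb ha0 hb1 key
  · have hb2 : b.2 ≠ 0 := by
      intro hb2
      apply hb0
      have : b.1 = 0 := by
        have := hD'; rw [hb2, mul_zero] at this
        exact (mul_eq_zero.mp this.symm).resolve_left h2
      exact Prod.ext this hb2
    have key : b.2 • a = a.2 • b := by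
      refine Prod.ext ?_ ?_ <;> simp [Prod.smul_fst, Prod.smul_snd, smul_eq_mul]
      · rw [mul_comm b.2 a.1, hD', mul_comm]
      · ring
    exact scale_pos S hpointed ha hb ha0 hb2 key


lemma dtrans (S : AddSubmonoid (ℤ × ℤ)) (hpointed : ∀ x ∈ S, -x ∈ S → x = 0)
    {a b c : ℤ × ℤ} (ha : a ∈ S) (hb : b ∈ S) (hc : c ∈ S)
    (ha0 : a ≠ 0) (hb0 : b ≠ 0) (hc0 : c ≠ 0)
    (hab : 0 ≤ Dt a b) (hbc : 0 ≤ Dt b c) : 0 ≤ Dt a c := by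
  by_contra hac
  push_neg at hac
  rcases eq_or_lt_of_le hab with h0 | hab'
  · obtain ⟨p, q, hp, hq, hpq⟩ := ray S hpointed ha hb ha0 hb0 h0.symm
    have hkey : p * Dt a c = q * Dt b c := by
      rw [← Dt_smul_left, hpq, Dt_smul_left]
    nlinarith
  · rcases eq_or_lt_of_le hbc with h0 | hbc'
    · obtain ⟨p, q, hp, hq, hpq⟩ := ray S hpointed hb hc hb0 hc0 h0.symm
      have hkey : q * Dt a c = p * Dt a b := by
        rw [← Dt_smul_right, ← hpq, Dt_smul_right]
      nlinarith
    · have hid := Dt_identity a b c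
      have hx : Dt b c • a ∈ S := smul_mem_pos S hbc' ha
      have hrw : -(Dt b c • a) = (-(Dt a c)) • b + Dt a b • c := by
        rw [neg_smul, ← hid]; abel
      have hnx : -(Dt b c • a) ∈ S := by
        rw [hrw]
        exact S.add_mem (smul_mem_pos S (by omega) hb) (smul_mem_pos S hab' hc)
      have := hpointed _ hx hnx
      exact (smul_ne_zero (by omega : Dt b c ≠ 0) ha0) this

lemma exists_min {α : Type*} (P : α → Prop) (R : α → α → Prop)
    (htot : ∀ a b, P a → P b → R a b ∨ R b a)
    (htrans : ∀ a b c, P a → P b → P c → R a b → R b c → R a c)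
    (hrefl : ∀ a, P a → R a a)
    (T : Finset α) : (∀ g ∈ T, P g) → T.Nonempty → ∃ u ∈ T, ∀ g ∈ T, R u g := by
  classical
  induction T using Finset.induction_on with
  | empty => intro _ hne; simp at hne
  | @insert a t hat ih =>
    intro hT _
    rcases t.eq_empty_or_nonempty with rfl | tne
    · exact ⟨a, by simp, by simpa using hrefl a (hT a (by simp))⟩
    · obtain ⟨u, hut, hu⟩ := ih (fun g hg => hT g (Finset.mem_insert_of_mem hg)) tne
      have hPa : P a := hT a (Finset.mem_insert_self a t)
      have hPu : P u := hT u (Finset.mem_insert_of_mem hut)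
      rcases htot u a hPu hPa with h | h
      · refine ⟨u, Finset.mem_insert_of_mem hut, fun g hg => ?_⟩
        rcases Finset.mem_insert.mp hg with rfl | hg
        · exact h
        · exact hu g hg
      · refine ⟨a, Finset.mem_insert_self a t, fun g hg => ?_⟩
        rcases Finset.mem_insert.mp hg with rfl | hg
        · exact hrefl _ hPa
        · exact htrans a u g hPa hPu (hT g (Finset.mem_insert_of_mem hg)) h (hu g hg)


lemma Dt_add_left (a b c : ℤ × ℤ) : Dt (a + b) c = Dt a c + Dt b c := by
  simp [Dt, Prod.fst_add, Prod.snd_add]; ring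

lemma Dt_zero_left (a : ℤ × ℤ) : Dt 0 a = 0 := by simp [Dt]

lemma Dt_neg_right (a b : ℤ × ℤ) : Dt a (-b) = - Dt a b := by
  simp [Dt]; ring

/-- The submonoid of elements of `S` on the line orthogonal (det-wise) to `z`. -/
def lineFace (S : AddSubmonoid (ℤ × ℤ)) (z : ℤ × ℤ) : AddSubmonoid (ℤ × ℤ) where
  carrier := {s | s ∈ S ∧ Dt z s = 0}
  zero_mem' := ⟨S.zero_mem, Dt_zero_right z⟩
  add_mem' := fun {a b} ha hb =>
    ⟨S.add_mem ha.1 hb.1, by rw [Dt_add_right, ha.2, hb.2, add_zero]⟩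

lemma mem_lineFace {S : AddSubmonoid (ℤ × ℤ)} {z x : ℤ × ℤ} :
    x ∈ lineFace S z ↔ x ∈ S ∧ Dt z x = 0 := Iff.rfl

/-- The line through `z` as a subgroup. -/
def lineGroup (z : ℤ × ℤ) : AddSubgroup (ℤ × ℤ) where
  carrier := {x | Dt z x = 0}
  zero_mem' := Dt_zero_right z
  add_mem' := fun {a b} ha hb => by
    simp only [Set.mem_setOf_eq] at *
    rw [Dt_add_right, ha, hb, add_zero]
  neg_mem' := fun {a} ha => by
    simp only [Set.mem_setOf_eq] at *
    rw [Dt_neg_right, ha, neg_zero]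

lemma not_all_line (S : AddSubmonoid (ℤ × ℤ))
    (hgen : AddSubgroup.closure (S : Set (ℤ × ℤ)) = ⊤)
    {z : ℤ × ℤ} (hz : z ≠ 0) (h : ∀ s ∈ S, Dt z s = 0) : False := by
  have hle : AddSubgroup.closure (S : Set (ℤ × ℤ)) ≤ lineGroup z :=
    AddSubgroup.closure_le _ |>.mpr (fun s hs => h s hs)
  rw [hgen] at hle
  have hperp : ((-z.2, z.1) : ℤ × ℤ) ∈ lineGroup z := hle trivial
  have heq : z.1 * z.1 - z.2 * (-z.2) = 0 := hperp
  have h1 : z.1 * z.1 = 0 := by nlinarith [mul_self_nonneg z.1, mul_self_nonneg z.2]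
  have h2 : z.2 * z.2 = 0 := by nlinarith [mul_self_nonneg z.1, mul_self_nonneg z.2]
  exact hz (Prod.ext (mul_self_eq_zero.mp h1) (mul_self_eq_zero.mp h2))

/-- A face all of whose pairs are parallel, containing a nonzero vector parallel
to `z`, equals `lineFace S z`. -/
lemma face_eq_lineFace (S : AddSubmonoid (ℤ × ℤ)) (hpointed : ∀ x ∈ S, -x ∈ S → x = 0)
    (F : AddSubmonoid (ℤ × ℤ)) (hFS : F ≤ S)
    (hface : ∀ x ∈ S, ∀ y ∈ S, x + y ∈ F → x ∈ F ∧ y ∈ F)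
    (hpar : ∀ a ∈ F, ∀ b ∈ F, Dt a b = 0)
    {z v : ℤ × ℤ} (hz0 : z ≠ 0) (hv : v ∈ F) (hv0 : v ≠ 0) (hzv : Dt z v = 0) :
    F = lineFace S z := by
  ext a
  rw [mem_lineFace]
  constructor
  · intro haF
    refine ⟨hFS haF, ?_⟩
    have hva : Dt v a = 0 := hpar v hv a haF
    have hid := Dt_identity z v a
    rw [hva, hzv, zero_smul, zero_smul, add_zero] at hid
    rcases smul_eq_zero.mp hid.symm with h | h
    · exact h
    · exact absurd h hv0
  · rintro ⟨haS, hza⟩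
    rcases eq_or_ne a 0 with rfl | ha0
    · exact F.zero_mem
    · have hvS : v ∈ S := hFS hv
      have hva : Dt v a = 0 := by
        have hid := Dt_identity v z a
        have hvz : Dt v z = 0 := by rw [Dt_swap, hzv, neg_zero]
        rw [hza, zero_smul, zero_add, hvz, zero_smul] at hid
        rcases smul_eq_zero.mp hid.symm with h | h
        · exact h
        · exact absurd h hz0
      obtain ⟨p, q, hp, hq, hpq⟩ := ray S hpointed hvS haS hv0 ha0 hva
      have hpvF : p • v ∈ F := smul_mem_pos F hp hv
      rw [hpq] at hpvF
      have hq1 : q • a = a + (q - 1) • a := by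
        rw [sub_smul, one_smul]; abel
      rw [hq1] at hpvF
      have hqa : (q - 1) • a ∈ S := by
        have : q - 1 = ((q - 1).toNat : ℤ) := by omega
        rw [this, natCast_zsmul]
        exact S.nsmul_mem haS _
      exact (hface a haS ((q - 1) • a) hqa hpvF).1

/-- A nontrivial subgroup of `ℤ × ℤ` admitting an injective hom to `ℤ` is `≃+ ℤ`. -/
lemma subgroup_iso_int (H : AddSubgroup (ℤ × ℤ)) (φ : (ℤ × ℤ) →+ ℤ)
    (hinj : ∀ x ∈ H, φ x = 0 → x = 0)
    (x₀ : ℤ × ℤ) (hx₀ : x₀ ∈ H) (hφ : φ x₀ ≠ 0) :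
    Nonempty (H ≃+ ℤ) := by
  set ψ := φ.comp H.subtype with hψ
  have hinj' : Function.Injective ψ := by
    rw [injective_iff_map_eq_zero]
    intro x hx
    exact Subtype.ext (hinj x.1 x.2 hx)
  obtain ⟨g, hg⟩ := Int.subgroup_cyclic ψ.range
  have hmem : ψ ⟨x₀, hx₀⟩ ∈ ψ.range := ⟨_, rfl⟩
  have hg0 : g ≠ 0 := by
    rintro rfl
    rw [hg] at hmem
    rw [AddSubgroup.mem_closure_singleton] at hmem
    obtain ⟨n, hn⟩ := hmem
    rw [smul_zero] at hn
    exact hφ hn.symm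
  have hmemg : ∀ n : ℤ, n * g ∈ ψ.range := fun n => by
    rw [hg, AddSubgroup.mem_closure_singleton]
    exact ⟨n, by rw [smul_eq_mul]⟩
  let f : ℤ →+ ψ.range :=
    AddMonoidHom.mk' (fun n => ⟨n * g, hmemg n⟩)
      (fun a b => Subtype.ext (by simp [add_mul]))
  have hbij : Function.Bijective f := by
    constructor
    · intro m n h
      have hmn : m * g = n * g := congrArg Subtype.val h
      exact mul_right_cancel₀ hg0 hmn
    · rintro ⟨x, hx⟩
      rw [hg, AddSubgroup.mem_closure_singleton] at hx
      obtain ⟨n, hn⟩ := hx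
      exact ⟨n, Subtype.ext (show n * g = x by simpa [smul_eq_mul] using hn)⟩
  exact ⟨(AddMonoidHom.ofInjective hinj').trans (AddEquiv.ofBijective f hbij).symm⟩

/-- in a face whose generated subgroup is cyclic, all pairs are parallel. -/
lemma face_parallel (F : AddSubmonoid (ℤ × ℤ))
    (e : (AddSubgroup.closure (F : Set (ℤ × ℤ))) ≃+ ℤ) :
    ∀ a ∈ F, ∀ b ∈ F, Dt a b = 0 := by
  intro a ha b hb
  have haH : a ∈ AddSubgroup.closure (F : Set (ℤ × ℤ)) := AddSubgroup.subset_closure ha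
  have hbH : b ∈ AddSubgroup.closure (F : Set (ℤ × ℤ)) := AddSubgroup.subset_closure hb
  rcases eq_or_ne b 0 with rfl | hb0
  · simp [Dt]
  set α : AddSubgroup.closure (F : Set (ℤ × ℤ)) := ⟨a, haH⟩ with hα
  set β : AddSubgroup.closure (F : Set (ℤ × ℤ)) := ⟨b, hbH⟩ with hβ
  have key : (e β) • α = (e α) • β := by
    apply e.injective
    rw [map_zsmul, map_zsmul, smul_eq_mul, smul_eq_mul, mul_comm]
  have keyc : (e β) • a = (e α) • b := by
    have := congrArg (Subtype.val) key
    simpa using this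
  have heβ : e β ≠ 0 := by
    intro h
    apply hb0
    have hβ0 : β = 0 := e.injective (by rw [h, map_zero])
    simpa [hβ] using congrArg Subtype.val hβ0
  have hmul : (e β) * Dt a b = (e α) * Dt b b := by
    rw [← Dt_smul_left, keyc, Dt_smul_left]
  rw [Dt_self, mul_zero] at hmul
  exact (mul_eq_zero.mp hmul).resolve_left heβ

end TwoFaces

open TwoFaces

/-- `S` has exactly two one-dimensional faces. -/
theorem exactly_two_one_dimensional_faces (S : AddSubmonoid (ℤ × ℤ))
    (hFG : S.FG)
    (hgen : AddSubgroup.closure (S : Set (ℤ × ℤ)) = ⊤)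
    (hpointed : ∀ x ∈ S, -x ∈ S → x = 0) :
    ∃ F₁ F₂ : AddSubmonoid (ℤ × ℤ), F₁ ≠ F₂ ∧
      (F₁ ≤ S ∧ ∀ x ∈ S, ∀ y ∈ S, x + y ∈ F₁ → x ∈ F₁ ∧ y ∈ F₁) ∧
      (F₂ ≤ S ∧ ∀ x ∈ S, ∀ y ∈ S, x + y ∈ F₂ → x ∈ F₂ ∧ y ∈ F₂) ∧
      Nonempty (AddSubgroup.closure (F₁ : Set (ℤ × ℤ)) ≃+ ℤ) ∧
      Nonempty (AddSubgroup.closure (F₂ : Set (ℤ × ℤ)) ≃+ ℤ) ∧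
      ∀ F : AddSubmonoid (ℤ × ℤ), F ≤ S →
        (∀ x ∈ S, ∀ y ∈ S, x + y ∈ F → x ∈ F ∧ y ∈ F) →
        Nonempty (AddSubgroup.closure (F : Set (ℤ × ℤ)) ≃+ ℤ) →
        F = F₁ ∨ F = F₂ := by
  classical
  obtain ⟨T, hT⟩ := hFG
  set T' : Finset (ℤ × ℤ) := T.filter (fun g => g ≠ 0) with hT'def
  have hT'P : ∀ g ∈ T', g ∈ S ∧ g ≠ 0 := by
    intro g hg
    rw [hT'def, Finset.mem_filter] at hg
    exact ⟨hT ▸ AddSubmonoid.subset_closure hg.1, hg.2⟩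
  have hSubT' : S ≤ AddSubmonoid.closure (T' : Set (ℤ × ℤ)) := by
    rw [← hT]
    apply AddSubmonoid.closure_le.mpr
    intro g hg
    rcases eq_or_ne g 0 with rfl | hg0
    · exact AddSubmonoid.zero_mem _
    · exact AddSubmonoid.subset_closure
        (Finset.mem_coe.mpr (Finset.mem_filter.mpr ⟨hg, hg0⟩))
  have hT'ne : T'.Nonempty := by
    by_contra h
    rw [Finset.not_nonempty_iff_eq_empty] at h
    refine not_all_line S hgen (z := (1, 0)) (by simp) ?_
    intro s hs
    have := hSubT' hs
    rw [h] at this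
    simp only [Finset.coe_empty, AddSubmonoid.closure_empty, AddSubmonoid.mem_bot] at this
    rw [this, Dt_zero_right]
  -- minimal and maximal generators
  have htot : ∀ a b : ℤ × ℤ, (a ∈ S ∧ a ≠ 0) → (b ∈ S ∧ b ≠ 0) →
      0 ≤ Dt a b ∨ 0 ≤ Dt b a := by
    intro a b _ _
    rcases le_total 0 (Dt a b) with h | h
    · exact Or.inl h
    · right; rw [Dt_swap]; omega
  obtain ⟨u, huT, hu⟩ := exists_min (fun g => g ∈ S ∧ g ≠ 0) (fun a b => 0 ≤ Dt a b)
    htot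
    (fun a b c ha hb hc hab hbc =>
      dtrans S hpointed ha.1 hb.1 hc.1 ha.2 hb.2 hc.2 hab hbc)
    (fun a _ => le_of_eq (Dt_self a).symm) T' hT'P hT'ne
  obtain ⟨w, hwT, hw⟩ := exists_min (fun g => g ∈ S ∧ g ≠ 0) (fun a b => 0 ≤ Dt b a)
    (fun a b ha hb => (htot b a hb ha))
    (fun a b c ha hb hc hab hbc =>
      dtrans S hpointed hc.1 hb.1 ha.1 hc.2 hb.2 ha.2 hbc hab)
    (fun a _ => le_of_eq (Dt_self a).symm) T' hT'P hT'ne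
  obtain ⟨huS, hu0⟩ := hT'P u huT
  obtain ⟨hwS, hw0⟩ := hT'P w hwT
  -- the bounds extend to all of S
  have huAll : ∀ s ∈ S, 0 ≤ Dt u s := by
    intro s hs
    have hs' := hSubT' hs
    refine AddSubmonoid.closure_induction (fun x hx => hu x (Finset.mem_coe.mp hx))
      ?_ ?_ hs'
    · rw [Dt_zero_right]
    · intro x y _ _ hx hy
      rw [Dt_add_right]; omega
  have hwAll : ∀ s ∈ S, 0 ≤ Dt s w := by
    intro s hs
    have hs' := hSubT' hs
    refine AddSubmonoid.closure_induction (fun x hx => hw x (Finset.mem_coe.mp hx))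
      ?_ ?_ hs'
    · rw [Dt_zero_left]
    · intro x y _ _ hx hy
      rw [Dt_add_left]; omega
  -- u and w are independent
  have huw : 0 < Dt u w := by
    rcases eq_or_lt_of_le (huAll w hwS) with h | h
    · exfalso
      obtain ⟨p, q, hp, hq, hpq⟩ := ray S hpointed huS hwS hu0 hw0 h.symm
      refine not_all_line S hgen hu0 ?_
      intro s hs
      have h1 := huAll s hs
      have h2 := hwAll s hs
      have h3 : p * Dt s u = q * Dt s w := by
        rw [← Dt_smul_right, hpq, Dt_smul_right]
      have h4 : Dt s u = - Dt u s := by rw [Dt_swap]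
      nlinarith
    · exact h
  -- the two faces
  refine ⟨lineFace S u, lineFace S w, ?_, ?_, ?_, ?_, ?_, ?_⟩
  · -- distinct
    intro hEq
    have huF : u ∈ lineFace S u := ⟨huS, Dt_self u⟩
    rw [hEq] at huF
    have : Dt w u = 0 := huF.2
    rw [Dt_swap] at this
    omega
  · refine ⟨fun x hx => hx.1, ?_⟩
    intro x hx y hy hxy
    have h1 := huAll x hx
    have h2 := huAll y hy
    have h3 : Dt u (x + y) = 0 := hxy.2
    rw [Dt_add_right] at h3
    exact ⟨⟨hx, by omega⟩, ⟨hy, by omega⟩⟩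
  · refine ⟨fun x hx => hx.1, ?_⟩
    intro x hx y hy hxy
    have h1 := hwAll x hx
    have h2 := hwAll y hy
    have h3 : Dt w (x + y) = 0 := hxy.2
    rw [Dt_add_right] at h3
    have h1' : Dt w x ≤ 0 := by rw [Dt_swap]; omega
    have h2' : Dt w y ≤ 0 := by rw [Dt_swap]; omega
    exact ⟨⟨hx, by omega⟩, ⟨hy, by omega⟩⟩
  · -- closure of F₁ ≃+ ℤ
    refine subgroup_iso_int _
      (AddMonoidHom.mk' (fun x => u.1 * x.1 + u.2 * x.2)
        (fun a b => by simp [Prod.fst_add, Prod.snd_add]; ring)) ?_ u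
      (AddSubgroup.subset_closure (⟨huS, Dt_self u⟩ : u ∈ lineFace S u)) ?_
    · intro x hx hφx
      have hline : x ∈ lineGroup u := by
        refine (AddSubgroup.closure_le (lineGroup u)).mpr ?_ hx
        intro s hs
        exact hs.2
      have hD : u.1 * x.2 - u.2 * x.1 = 0 := hline
      simp only [AddMonoidHom.mk'_apply] at hφx
      have hx1 : (u.1 * u.1 + u.2 * u.2) * x.1 = 0 := by linear_combination u.1 * hφx - u.2 * hD
      have hx2 : (u.1 * u.1 + u.2 * u.2) * x.2 = 0 := by linear_combination u.2 * hφx + u.1 * hD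
      have hupos : u.1 * u.1 + u.2 * u.2 ≠ 0 := by
        intro h
        have h1 : u.1 * u.1 = 0 := by nlinarith [mul_self_nonneg u.1, mul_self_nonneg u.2]
        have h2 : u.2 * u.2 = 0 := by nlinarith [mul_self_nonneg u.1, mul_self_nonneg u.2]
        exact hu0 (Prod.ext (mul_self_eq_zero.mp h1) (mul_self_eq_zero.mp h2))
      exact Prod.ext ((mul_eq_zero.mp hx1).resolve_left hupos)
        ((mul_eq_zero.mp hx2).resolve_left hupos)
    · simp only [AddMonoidHom.mk'_apply]
      intro h
      have h1 : u.1 * u.1 = 0 := by nlinarith [mul_self_nonneg u.1, mul_self_nonneg u.2]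
      have h2 : u.2 * u.2 = 0 := by nlinarith [mul_self_nonneg u.1, mul_self_nonneg u.2]
      exact hu0 (Prod.ext (mul_self_eq_zero.mp h1) (mul_self_eq_zero.mp h2))
  · -- closure of F₂ ≃+ ℤ
    refine subgroup_iso_int _
      (AddMonoidHom.mk' (fun x => w.1 * x.1 + w.2 * x.2)
        (fun a b => by simp [Prod.fst_add, Prod.snd_add]; ring)) ?_ w
      (AddSubgroup.subset_closure (⟨hwS, Dt_self w⟩ : w ∈ lineFace S w)) ?_
    · intro x hx hφx
      have hline : x ∈ lineGroup w := by
        refine (AddSubgroup.closure_le (lineGroup w)).mpr ?_ hx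
        intro s hs
        exact hs.2
      have hD : w.1 * x.2 - w.2 * x.1 = 0 := hline
      simp only [AddMonoidHom.mk'_apply] at hφx
      have hx1 : (w.1 * w.1 + w.2 * w.2) * x.1 = 0 := by linear_combination w.1 * hφx - w.2 * hD
      have hx2 : (w.1 * w.1 + w.2 * w.2) * x.2 = 0 := by linear_combination w.2 * hφx + w.1 * hD
      have hwpos : w.1 * w.1 + w.2 * w.2 ≠ 0 := by
        intro h
        have h1 : w.1 * w.1 = 0 := by nlinarith [mul_self_nonneg w.1, mul_self_nonneg w.2]
        have h2 : w.2 * w.2 = 0 := by nlinarith [mul_self_nonneg w.1, mul_self_nonneg w.2]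
        exact hw0 (Prod.ext (mul_self_eq_zero.mp h1) (mul_self_eq_zero.mp h2))
      exact Prod.ext ((mul_eq_zero.mp hx1).resolve_left hwpos)
        ((mul_eq_zero.mp hx2).resolve_left hwpos)
    · simp only [AddMonoidHom.mk'_apply]
      intro h
      have h1 : w.1 * w.1 = 0 := by nlinarith [mul_self_nonneg w.1, mul_self_nonneg w.2]
      have h2 : w.2 * w.2 = 0 := by nlinarith [mul_self_nonneg w.1, mul_self_nonneg w.2]
      exact hw0 (Prod.ext (mul_self_eq_zero.mp h1) (mul_self_eq_zero.mp h2))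
  · -- uniqueness
    rintro F hFS hface ⟨e⟩
    have hpar := face_parallel F e
    have hvne : ∃ v ∈ F, v ≠ (0 : ℤ × ℤ) := by
      by_contra hc
      push_neg at hc
      have hbot : AddSubgroup.closure (F : Set (ℤ × ℤ)) ≤ ⊥ := by
        apply (AddSubgroup.closure_le _).mpr
        intro s hs
        simp [hc s hs]
      have h1 : ((e.symm 1 : _) : ℤ × ℤ) = 0 := by
        have := (e.symm 1).2
        simpa using hbot this
      have h0 : ((e.symm 0 : _) : ℤ × ℤ) = 0 := by rw [map_zero]; rfl
      have h10 : e.symm 1 = e.symm 0 := Subtype.ext (h1.trans h0.symm)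
      have := e.symm.injective h10
      norm_num at this
    obtain ⟨v, hvF, hv0⟩ := hvne
    have hvS : v ∈ S := hFS hvF
    rcases eq_or_lt_of_le (huAll v hvS) with h | h
    · left
      exact face_eq_lineFace S hpointed F hFS hface hpar hu0 hvF hv0 h.symm
    · right
      have hvw : Dt v w = 0 := by
        by_contra hne
        have hvw' : 0 < Dt v w := lt_of_le_of_ne (hwAll v hvS) (Ne.symm hne)
        have hid := Dt_identity u v w
        have h1 : Dt u w • v ∈ F := smul_mem_pos F huw hvF
        rw [← hid] at h1
        have h2 := hface (Dt v w • u) (smul_mem_pos S hvw' huS)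
          (Dt u v • w) (smul_mem_pos S h hwS) h1
        have h3 := hpar _ h2.1 _ h2.2
        rw [Dt_smul_left, Dt_smul_right] at h3
        have hpos := mul_pos hvw' (mul_pos h huw)
        omega
      have hwv : Dt w v = 0 := by rw [Dt_swap, hvw, neg_zero]
      exact face_eq_lineFace S hpointed F hFS hface hpar hw0 hvF hv0 hwv
end

section
/- Let F be a two-dimensional subsemigroup of S, i.e., the subgroup F − F generated by F in ℤ² has rank 2 (finite index in ℤ²). Then for x, y ∈ S one has x ∼_F y if and only if x − y ∈ F − F, and the quotient map ℤ² → ℤ²/(F − F) restricted to S is surjective; consequently the natural map S/F → ℤ²/(F − F) is a bijection and S/F is a finite abelian group. -/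
/-- Elements of the subgroup generated by an additive submonoid are differences. -/
lemma mem_closure_submonoid_sub {M : AddSubmonoid (ℤ × ℤ)} {g : ℤ × ℤ}
    (hg : g ∈ AddSubgroup.closure (M : Set (ℤ × ℤ))) :
    ∃ a ∈ M, ∃ b ∈ M, g = a - b := by
  refine AddSubgroup.closure_induction ?_ ?_ ?_ ?_ hg
  · intro x hx; exact ⟨x, hx, 0, M.zero_mem, by simp⟩
  · exact ⟨0, M.zero_mem, 0, M.zero_mem, by simp⟩
  · rintro x y - - ⟨a, ha, b, hb, rfl⟩ ⟨c, hc, d, hd, rfl⟩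
    exact ⟨a + c, M.add_mem ha hc, b + d, M.add_mem hb hd, by abel⟩
  · rintro x - ⟨a, ha, b, hb, rfl⟩
    exact ⟨b, hb, a, ha, by abel⟩

/-- **Lemma (Lq), first part.** Let `F` be a two-dimensional subsemigroup of `S`
(`F − F` has finite index in `ℤ²`). Then for `x, y ∈ S`, `x ∼_F y` iff `x − y ∈ F − F`,
the map `S → ℤ²/(F − F)` is surjective, and hence `S/F` (identified with its set of
equivalence classes) is finite and in bijection with `ℤ²/(F − F)`. -/
theorem quotient_by_two_dimensional_subsemigroup (S F : AddSubmonoid (ℤ × ℤ))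
    (hFG : S.FG)
    (hgen : AddSubgroup.closure (S : Set (ℤ × ℤ)) = ⊤)
    (hpointed : ∀ x ∈ S, -x ∈ S → x = 0)
    (hFS : F ≤ S)
    (hdim : (AddSubgroup.closure (F : Set (ℤ × ℤ))).FiniteIndex) :
    (∀ x ∈ S, ∀ y ∈ S,
        ((∃ f₁ ∈ F, ∃ f₂ ∈ F, x + f₁ = y + f₂) ↔
          x - y ∈ AddSubgroup.closure (F : Set (ℤ × ℤ)))) ∧
      (∀ g : ℤ × ℤ, ∃ s ∈ S, g - s ∈ AddSubgroup.closure (F : Set (ℤ × ℤ))) ∧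
      {C : Set (ℤ × ℤ) | ∃ x ∈ S,
        C = {y ∈ (S : Set (ℤ × ℤ)) | ∃ f₁ ∈ F, ∃ f₂ ∈ F, x + f₁ = y + f₂}}.Finite := by
  set G := AddSubgroup.closure (F : Set (ℤ × ℤ)) with hGdef
  haveI : G.FiniteIndex := hdim
  have part1 : ∀ x ∈ S, ∀ y ∈ S,
      ((∃ f₁ ∈ F, ∃ f₂ ∈ F, x + f₁ = y + f₂) ↔ x - y ∈ G) := by
    intro x _ y _
    constructor
    · rintro ⟨f₁, hf₁, f₂, hf₂, h⟩
      have hx : x - y = f₂ - f₁ :=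
        sub_eq_sub_iff_add_eq_add.mpr (h.trans (add_comm y f₂))
      rw [hx]
      exact sub_mem (AddSubgroup.subset_closure hf₂) (AddSubgroup.subset_closure hf₁)
    · intro h
      obtain ⟨a, ha, b, hb, hab⟩ := mem_closure_submonoid_sub h
      exact ⟨b, hb, a, ha, (sub_eq_sub_iff_add_eq_add.mp hab).trans (add_comm a y)⟩
  have part2 : ∀ g : ℤ × ℤ, ∃ s ∈ S, g - s ∈ G := by
    intro g
    have hgS : g ∈ AddSubgroup.closure (S : Set (ℤ × ℤ)) := by rw [hgen]; trivial
    obtain ⟨s₁, hs₁, s₂, hs₂, rfl⟩ := mem_closure_submonoid_sub hgS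
    obtain ⟨m, hm⟩ : ∃ m, G.index = m + 1 :=
      ⟨G.index - 1, by have := hdim.index_ne_zero; omega⟩
    refine ⟨s₁ + m • s₂, S.add_mem hs₁ (AddSubmonoid.nsmul_mem S hs₂ m), ?_⟩
    have hmem : G.index • s₂ ∈ G := G.nsmul_index_mem s₂
    rw [hm, succ_nsmul] at hmem
    have heq : s₁ - s₂ - (s₁ + m • s₂) = -(m • s₂ + s₂) := by abel
    rw [heq]
    exact neg_mem hmem
  refine ⟨part1, part2, ?_⟩
  have hfin : Finite ((ℤ × ℤ) ⧸ G) := AddSubgroup.finite_quotient_of_finiteIndex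
  have hsub : {C : Set (ℤ × ℤ) | ∃ x ∈ S,
      C = {y ∈ (S : Set (ℤ × ℤ)) | ∃ f₁ ∈ F, ∃ f₂ ∈ F, x + f₁ = y + f₂}} ⊆
      Set.range (fun q : (ℤ × ℤ) ⧸ G => {y ∈ (S : Set (ℤ × ℤ)) | (y : (ℤ × ℤ) ⧸ G) = q}) := by
    rintro C ⟨x, hx, rfl⟩
    refine ⟨(x : (ℤ × ℤ) ⧸ G), ?_⟩
    ext y
    simp only [Set.mem_setOf_eq]
    constructor
    · rintro ⟨hy, hq⟩
      have hmem : x - y ∈ G := by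
        have h2 := QuotientAddGroup.eq.mp hq.symm
        have h3 := neg_mem h2
        have he : -(-x + y) = x - y := by abel
        rwa [he] at h3
      exact ⟨hy, (part1 x hx y hy).mpr hmem⟩
    · rintro ⟨hy, hrel⟩
      refine ⟨hy, ?_⟩
      have hmem := (part1 x hx y hy).mp hrel
      refine (QuotientAddGroup.eq.mpr ?_).symm
      have he : -x + y = -(x - y) := by abel
      rw [he]
      exact neg_mem hmem
  exact Set.Finite.subset (Set.finite_range _) hsub
end

section
/- Let F be a two-dimensional subsemigroup of S and suppose a = (k, l) and b = (m, n) generate the subgroup F − F of ℤ². Then the number of equivalence classes of the relation ∼_F on S is finite and equals |k·n − l·m|, the absolute value of the determinant of the matrix with columns a and b. -/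
lemma index_eq_natAbs_det (N : Submodule ℤ (ℤ×ℤ)) (e : (ℤ×ℤ) ≃ₗ[ℤ] N) :
    N.toAddSubgroup.index = (LinearMap.det (N.subtype ∘ₗ (e : (ℤ×ℤ) →ₗ[ℤ] N))).natAbs := by
  classical
  obtain ⟨n, snf⟩ := N.smithNormalForm (Module.Basis.finTwoProd ℤ)
  have hth : Fin n ≃ Fin 2 := Module.Basis.indexEquiv snf.bN ((Module.Basis.finTwoProd ℤ).map e)
  have hn : n = 2 := by simpa using Fintype.card_congr hth
  subst hn
  have hidx : N.toAddSubgroup.index = ∏ i : Fin 2, (snf.a i).natAbs := by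
    rw [snf.toAddSubgroup_index_eq_ite]
    simp [Ideal.span_singleton_toAddSubgroup_eq_zmultiples, Int.index_zmultiples]
  obtain ⟨bM, bN, f, a, hsnf⟩ := snf
  dsimp only at hidx ⊢
  have hfb : Function.Bijective f := Finite.injective_iff_bijective.mp f.injective
  set σ : Fin 2 ≃ Fin 2 := Equiv.ofBijective f hfb with hσ
  set e' : (ℤ×ℤ) ≃ₗ[ℤ] N := bM.equiv (bN.reindex σ) (Equiv.refl _) with he'
  have hassoc : Associated (LinearMap.det (N.subtype ∘ₗ (e : (ℤ×ℤ) →ₗ[ℤ] N)))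
      (LinearMap.det (N.subtype ∘ₗ (e' : (ℤ×ℤ) →ₗ[ℤ] N))) :=
    LinearMap.associated_det_comp_equiv _ _ _
  rw [Int.natAbs_eq_iff_associated.mpr hassoc]
  -- compute det of e'
  have hcol : ∀ j, (N.subtype ∘ₗ (e' : (ℤ×ℤ) →ₗ[ℤ] N)) (bM j) = a (σ.symm j) • bM j := by
    intro j
    have h1 : (e' : (ℤ×ℤ) →ₗ[ℤ] N) (bM j) = (bN.reindex σ) j := by
      simp [he', Module.Basis.equiv_apply]
    have h2 : ((bN.reindex σ) j : ℤ×ℤ) = a (σ.symm j) • bM (f (σ.symm j)) := by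
      rw [Module.Basis.reindex_apply, hsnf]
    have h3 : f (σ.symm j) = j := σ.apply_symm_apply j
    rw [LinearMap.comp_apply, h1]
    rw [h3] at h2
    exact h2
  have hmat : LinearMap.toMatrix bM bM (N.subtype ∘ₗ (e' : (ℤ×ℤ) →ₗ[ℤ] N))
      = Matrix.diagonal (fun j => a (σ.symm j)) := by
    ext i j
    rw [LinearMap.toMatrix_apply, hcol, map_smul, Module.Basis.repr_self]
    by_cases h : i = j
    · subst h; simp
    · simp [Matrix.diagonal_apply_ne _ h, Finsupp.single_eq_of_ne (Ne.symm h), h]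
  rw [← LinearMap.det_toMatrix bM, hmat, Matrix.det_diagonal, hidx]
  calc ∏ i : Fin 2, (a i).natAbs
      = ∏ i : Fin 2, (a (σ.symm i)).natAbs :=
        Fintype.prod_equiv σ (fun i => (a i).natAbs) (fun j => (a (σ.symm j)).natAbs)
          (fun x => by simp)
    _ = (∏ i : Fin 2, a (σ.symm i)).natAbs := by
        simp [Fin.prod_univ_two, Int.natAbs_mul]


lemma index_closure_pair (k l m n : ℤ) (hd : k * n - l * m ≠ 0) :
    (AddSubgroup.closure ({((k,l):ℤ×ℤ), (m,n)} : Set (ℤ×ℤ))).index = (k * n - l * m).natAbs := by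
  classical
  set a : ℤ×ℤ := (k,l)
  set b : ℤ×ℤ := (m,n)
  have hli : LinearIndependent ℤ ![a, b] := by
    rw [LinearIndependent.pair_iff]
    intro s t hst
    have h1 : s * k + t * m = 0 := congrArg Prod.fst hst
    have h2 : s * l + t * n = 0 := congrArg Prod.snd hst
    constructor
    · have : s * (k * n - l * m) = 0 := by linear_combination n * h1 - m * h2
      exact (mul_eq_zero.mp this).resolve_right hd
    · have : t * (k * n - l * m) = 0 := by linear_combination k * h2 - l * h1
      exact (mul_eq_zero.mp this).resolve_right hd
  have hrange : Set.range ![a, b] = {a, b} := by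
    ext x; simp [Fin.exists_fin_two, or_comm]
  set N : Submodule ℤ (ℤ×ℤ) := Submodule.span ℤ {a, b} with hN
  have hN' : N = Submodule.span ℤ (Set.range ![a, b]) := by rw [hN, hrange]
  set B : Module.Basis (Fin 2) ℤ N := (Module.Basis.span hli).map (LinearEquiv.ofEq _ _ hN'.symm) with hB
  have hBcoe : ∀ i, (B i : ℤ×ℤ) = ![a, b] i := by
    intro i; simp [hB, Module.Basis.span_apply]
  set e : (ℤ×ℤ) ≃ₗ[ℤ] N := (Module.Basis.finTwoProd ℤ).equiv B (Equiv.refl _) with he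
  have key : N.toAddSubgroup.index =
      (LinearMap.det (N.subtype ∘ₗ (e : (ℤ×ℤ) →ₗ[ℤ] N))).natAbs := index_eq_natAbs_det N e
  have hclosure : N.toAddSubgroup = AddSubgroup.closure {a, b} :=
    Submodule.span_int_eq_addSubgroupClosure _
  rw [← hclosure, key]
  congr 1
  have hmat : LinearMap.toMatrix (Module.Basis.finTwoProd ℤ) (Module.Basis.finTwoProd ℤ)
      (N.subtype ∘ₗ (e : (ℤ×ℤ) →ₗ[ℤ] N)) = !![k, m; l, n] := by
    ext i j
    rw [LinearMap.toMatrix_apply]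
    have : (N.subtype ∘ₗ (e : (ℤ×ℤ) →ₗ[ℤ] N)) ((Module.Basis.finTwoProd ℤ) j) = ![a, b] j := by
      simp [he, Module.Basis.equiv_apply, hBcoe]
    rw [this]
    have := Module.Basis.coe_finTwoProd_repr (R := ℤ) (![a,b] j)
    fin_cases i <;> fin_cases j <;>
      simp_all [a, b, Matrix.cons_val_zero, Matrix.cons_val_one]
  rw [← LinearMap.det_toMatrix (Module.Basis.finTwoProd ℤ), hmat, Matrix.det_fin_two_of]
  ring


lemma ker_index_zero (ψ : (ℤ×ℤ) →+ ℤ) (w : ℤ×ℤ) (hw : ψ w ≠ 0) : ψ.ker.index = 0 := by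
  rw [AddSubgroup.index_ker]
  have : Infinite ψ.range := by
    refine Infinite.of_injective (fun t : ℤ => (⟨ψ (t • w), ⟨t • w, rfl⟩⟩ : ψ.range)) ?_
    intro s t hst
    have : ψ (s • w) = ψ (t • w) := congrArg Subtype.val hst
    rw [map_zsmul, map_zsmul, smul_eq_mul, smul_eq_mul] at this
    exact mul_right_cancel₀ hw this
  exact Nat.card_eq_zero_of_infinite

/-- linear functional (p, q) ↦ p * x + q * y as an AddMonoidHom -/
def lf (p q : ℤ) : (ℤ×ℤ) →+ ℤ :=
  AddMonoidHom.mk' (fun v => p * v.1 + q * v.2) (by intro x y; simp; ring)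

lemma det_zero_index_zero (k l m n : ℤ) (hd : k * n - l * m = 0) :
    (AddSubgroup.closure ({((k,l):ℤ×ℤ), (m,n)} : Set (ℤ×ℤ))).index = 0 := by
  obtain ⟨ψ, hka, hkb, w, hw⟩ : ∃ ψ : (ℤ×ℤ) →+ ℤ, ψ (k, l) = 0 ∧ ψ (m, n) = 0 ∧
      ∃ w, ψ w ≠ 0 := by
    by_cases hb : ((m,n) : ℤ×ℤ) = 0
    · by_cases ha : ((k,l) : ℤ×ℤ) = 0
      · obtain ⟨hk, hl⟩ := Prod.mk.injEq .. ▸ ha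
        obtain ⟨hm, hn⟩ := Prod.mk.injEq .. ▸ hb
        exact ⟨lf 1 0, by simp [lf, hk], by simp [lf, hm], (1, 0), by simp [lf]⟩
      · refine ⟨lf l (-k), by simp [lf]; ring, ?_, (l, -k), ?_⟩
        · obtain ⟨hm, hn⟩ := Prod.mk.injEq .. ▸ hb
          simp [lf, hm, hn]
        · simp only [lf, AddMonoidHom.mk'_apply]
          intro h
          apply ha
          have h' : l * l + k * k = 0 := by linarith [h]
          have hk : k = 0 := by nlinarith [sq_nonneg k, sq_nonneg l]
          have hl : l = 0 := by nlinarith [sq_nonneg k, sq_nonneg l]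
          simp [hk, hl, Prod.ext_iff]
    · refine ⟨lf n (-m), ?_, ?_, (n, -m), ?_⟩
      · show n * k + -m * l = 0; linarith
      · show n * m + -m * n = 0; ring
      · show n * n + -m * -m ≠ 0
        intro h
        apply hb
        have hn : n = 0 := by nlinarith [sq_nonneg n, sq_nonneg m]
        have hm : m = 0 := by nlinarith [sq_nonneg n, sq_nonneg m]
        simp [hn, hm, Prod.ext_iff]
  have hker : AddSubgroup.closure ({((k,l):ℤ×ℤ), (m,n)} : Set (ℤ×ℤ)) ≤ ψ.ker := by
    rw [AddSubgroup.closure_le]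
    rintro x (rfl | rfl) <;> simp [AddMonoidHom.mem_ker, hka, hkb]
  have := AddSubgroup.index_dvd_of_le hker
  rw [ker_index_zero ψ w hw] at this
  exact zero_dvd_iff.mp this


/-- **Lemma (Lq), second part.** Let `F` be a two-dimensional subsemigroup of `S` and
suppose `a = (k, l)` and `b = (m, n)` generate the subgroup `F − F` of `ℤ²`. Then the
number of equivalence classes of `∼_F` on `S` is finite and equals `|k·n − l·m|`. -/
theorem card_quotient_eq_det (S F : AddSubmonoid (ℤ × ℤ))
    (hFG : S.FG)
    (hgen : AddSubgroup.closure (S : Set (ℤ × ℤ)) = ⊤)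
    (hpointed : ∀ x ∈ S, -x ∈ S → x = 0)
    (hFS : F ≤ S)
    (hdim : (AddSubgroup.closure (F : Set (ℤ × ℤ))).FiniteIndex)
    (k l m n : ℤ)
    (hgenF : AddSubgroup.closure ({(k, l), (m, n)} : Set (ℤ × ℤ)) =
      AddSubgroup.closure (F : Set (ℤ × ℤ))) :
    {C : Set (ℤ × ℤ) | ∃ x ∈ S,
        C = {y ∈ (S : Set (ℤ × ℤ)) | ∃ f₁ ∈ F, ∃ f₂ ∈ F, x + f₁ = y + f₂}}.Finite ∧
      {C : Set (ℤ × ℤ) | ∃ x ∈ S,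
        C = {y ∈ (S : Set (ℤ × ℤ)) | ∃ f₁ ∈ F, ∃ f₂ ∈ F, x + f₁ = y + f₂}}.ncard =
        (k * n - l * m).natAbs := by
  classical
  set G := AddSubgroup.closure (F : Set (ℤ × ℤ)) with hG
  have hidxne : G.index ≠ 0 := hdim.index_ne_zero
  set cls : ℤ × ℤ → Set (ℤ × ℤ) :=
    fun x => {y ∈ (S : Set (ℤ × ℤ)) | ∃ f₁ ∈ F, ∃ f₂ ∈ F, x + f₁ = y + f₂} with hcls
  have hsetdef : {C : Set (ℤ × ℤ) | ∃ x ∈ S,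
      C = {y ∈ (S : Set (ℤ × ℤ)) | ∃ f₁ ∈ F, ∃ f₂ ∈ F, x + f₁ = y + f₂}}
      = cls '' (S : Set (ℤ × ℤ)) := by
    ext C; simp [hcls, eq_comm]
  -- elements of G are differences of elements of F
  have hFsubG : ∀ f ∈ F, f ∈ G := fun f hf => AddSubgroup.subset_closure hf
  have hdiff : ∀ g ∈ G, ∃ f₁ ∈ F, ∃ f₂ ∈ F, g = f₂ - f₁ := by
    intro g hg
    refine AddSubgroup.closure_induction ?_ ?_ ?_ ?_ hg
    · exact fun x hx => ⟨0, F.zero_mem, x, hx, by simp⟩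
    · exact ⟨0, F.zero_mem, 0, F.zero_mem, by simp⟩
    · rintro x y - - ⟨f₁, h1, f₂, h2, rfl⟩ ⟨g₁, h3, g₂, h4, rfl⟩
      exact ⟨f₁ + g₁, F.add_mem h1 h3, f₂ + g₂, F.add_mem h2 h4, by abel⟩
    · rintro x - ⟨f₁, h1, f₂, h2, rfl⟩
      exact ⟨f₂, h2, f₁, h1, by abel⟩
  -- every element of ℤ² is a difference of elements of S
  have hSdiff : ∀ z : ℤ × ℤ, ∃ s₁ ∈ S, ∃ s₂ ∈ S, z = s₁ - s₂ := by
    intro z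
    have hz : z ∈ AddSubgroup.closure (S : Set (ℤ × ℤ)) := by rw [hgen]; trivial
    refine AddSubgroup.closure_induction ?_ ?_ ?_ ?_ hz
    · exact fun x hx => ⟨x, hx, 0, S.zero_mem, by simp⟩
    · exact ⟨0, S.zero_mem, 0, S.zero_mem, by simp⟩
    · rintro x y - - ⟨s₁, h1, s₂, h2, rfl⟩ ⟨t₁, h3, t₂, h4, rfl⟩
      exact ⟨s₁ + t₁, S.add_mem h1 h3, s₂ + t₂, S.add_mem h2 h4, by abel⟩
    · rintro x - ⟨s₁, h1, s₂, h2, rfl⟩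
      exact ⟨s₂, h2, s₁, h1, by abel⟩
  -- key equivalence
  have key1 : ∀ x ∈ S, ∀ y ∈ S, (cls x = cls y ↔ x - y ∈ G) := by
    intro x hx y hy
    constructor
    · intro h
      have hyy : y ∈ cls y := ⟨hy, 0, F.zero_mem, 0, F.zero_mem, rfl⟩
      rw [← h] at hyy
      obtain ⟨-, f₁, h1, f₂, h2, heq⟩ := hyy
      have hxy : x - y = f₂ - f₁ := by linear_combination heq
      rw [hxy]
      exact G.sub_mem (hFsubG _ h2) (hFsubG _ h1)
    · intro h
      obtain ⟨f₁, h1, f₂, h2, heq⟩ := hdiff _ h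
      have hxy : x + f₁ = y + f₂ := by linear_combination heq
      ext z
      constructor
      · rintro ⟨hz, g₁, hg1, g₂, hg2, hzeq⟩
        exact ⟨hz, f₂ + g₁, F.add_mem h2 hg1, f₁ + g₂, F.add_mem h1 hg2, by
          linear_combination hzeq - hxy⟩
      · rintro ⟨hz, g₁, hg1, g₂, hg2, hzeq⟩
        exact ⟨hz, f₁ + g₁, F.add_mem h1 hg1, f₂ + g₂, F.add_mem h2 hg2, by
          linear_combination hzeq + hxy⟩
  -- surjectivity onto cosets
  have key2 : ∀ z : ℤ × ℤ, ∃ s ∈ S, s - z ∈ G := by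
    intro z
    obtain ⟨s₁, h1, s₂, h2, rfl⟩ := hSdiff z
    refine ⟨s₁ + (G.index - 1) • s₂, S.add_mem h1 (AddSubmonoid.nsmul_mem S h2 _), ?_⟩
    have harith : s₁ + (G.index - 1) • s₂ - (s₁ - s₂) = G.index • s₂ := by
      have : (G.index - 1) + 1 = G.index := Nat.sub_add_cancel (Nat.one_le_iff_ne_zero.mpr hidxne)
      rw [← this]
      rw [add_nsmul, one_nsmul]
      abel
      exact add_comm _ _
    rw [harith]
    exact AddSubgroup.nsmul_index_mem G s₂
  -- the quotient
  have : G.FiniteIndex := hdim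
  have hfinQ : Finite ((ℤ × ℤ) ⧸ G) := AddSubgroup.finite_quotient_of_finiteIndex
  set π : ℤ × ℤ → (ℤ × ℤ) ⧸ G := QuotientAddGroup.mk with hπ
  have hπeq : ∀ x y : ℤ × ℤ, π x = π y ↔ x - y ∈ G := by
    intro x y
    rw [QuotientAddGroup.eq]
    constructor
    · intro h
      have := G.neg_mem h
      rwa [show -(-x + y) = x - y by abel] at this
    · intro h
      have := G.neg_mem h
      rwa [show -(x - y) = -x + y by abel] at this
  choose rep hrepS hrepG using key2
  set h : ((ℤ × ℤ) ⧸ G) → Set (ℤ × ℤ) := fun q => cls (rep q.out) with hh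
  have hπrep : ∀ z : ℤ × ℤ, π (rep z) = π z := fun z => (hπeq _ _).mpr (hrepG z)
  have hinj : Function.Injective h := by
    intro q₁ q₂ hq
    have := (key1 _ (hrepS q₁.out) _ (hrepS q₂.out)).mp hq
    have h2 : π (rep q₁.out) = π (rep q₂.out) := (hπeq _ _).mpr this
    rw [hπrep, hπrep] at h2
    rw [← q₁.out_eq', ← q₂.out_eq']
    exact h2
  have hrange : Set.range h = cls '' (S : Set (ℤ × ℤ)) := by
    ext C
    constructor
    · rintro ⟨q, rfl⟩
      exact ⟨rep q.out, hrepS q.out, rfl⟩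
    · rintro ⟨x, hx, rfl⟩
      refine ⟨π x, ?_⟩
      have h1 : π (rep (π x).out) = π x := by
        rw [hπrep]
        exact (π x).out_eq'
      exact (key1 _ (hrepS (π x).out) _ hx).mpr ((hπeq _ _).mp h1)
  constructor
  · rw [hsetdef, ← hrange]
    exact Set.finite_range h
  · rw [hsetdef, ← hrange]
    have hcard : (Set.range h).ncard = Nat.card ((ℤ × ℤ) ⧸ G) := by
      rw [← Nat.card_coe_set_eq]
      exact Nat.card_congr (Equiv.ofInjective h hinj).symm
    rw [hcard]
    have hidx : Nat.card ((ℤ × ℤ) ⧸ G) = G.index := rfl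
    rw [hidx, ← hgenF]
    by_cases hd : k * n - l * m = 0
    · exfalso
      apply hidxne
      rw [← hgenF]
      exact det_zero_index_zero k l m n hd
    · exact index_closure_pair k l m n hd
end

section
/- Let a₁ and a₂ be the asymptotic generators of the two one-dimensional faces of S, and let C = S̄ be the saturation of S (the cone in ℤ² spanned by a₁ and a₂). Then (a₁ + C) ∩ (a₂ + C) = (a₁ + a₂) + C. -/
namespace ConeTranslates

/-- The determinant of two vectors in `ℤ × ℤ`. -/
def dt (u v : ℤ × ℤ) : ℤ := u.1 * v.2 - u.2 * v.1

lemma zsmul_pair (k : ℤ) (x : ℤ × ℤ) : k • x = (k * x.1, k * x.2) := by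
  ext <;> simp [smul_eq_mul]

lemma nsmul_pair (k : ℕ) (x : ℤ × ℤ) : k • x = ((k:ℤ) * x.1, (k:ℤ) * x.2) := by
  rw [← natCast_zsmul]; exact zsmul_pair _ _

lemma dt_self (a : ℤ × ℤ) : dt a a = 0 := by simp [dt]; ring

lemma dt_add_right (u v w : ℤ × ℤ) : dt u (v + w) = dt u v + dt u w := by
  simp [dt, Prod.fst_add, Prod.snd_add]; ring

lemma dt_sub_right (u v w : ℤ × ℤ) : dt u (v - w) = dt u v - dt u w := by
  simp [dt, Prod.fst_sub, Prod.snd_sub]; ring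

lemma dt_add_left (u v w : ℤ × ℤ) : dt (u + v) w = dt u w + dt v w := by
  simp [dt, Prod.fst_add, Prod.snd_add]; ring

lemma dt_sub_left (u v w : ℤ × ℤ) : dt (u - v) w = dt u w - dt v w := by
  simp [dt, Prod.fst_sub, Prod.snd_sub]; ring

lemma dt_swap (u v : ℤ × ℤ) : dt u v = -dt v u := by simp [dt]; ring

lemma dt_nsmul_right (u : ℤ × ℤ) (k : ℕ) (v : ℤ × ℤ) : dt u (k • v) = k * dt u v := by
  simp [dt, nsmul_pair]; ring

lemma dt_nsmul_left (k : ℕ) (u v : ℤ × ℤ) : dt (k • u) v = k * dt u v := by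
  simp [dt, nsmul_pair]; ring

lemma parallel {a w : ℤ × ℤ} (h : dt a w = 0) :
    a.1 • w = w.1 • a ∧ a.2 • w = w.2 • a := by
  unfold dt at h
  constructor <;> · rw [zsmul_pair, zsmul_pair]; ext <;> simp <;> nlinarith

lemma mem_of_zsmul {S : AddSubmonoid (ℤ × ℤ)} {z : ℤ} (hz : 0 ≤ z) {x : ℤ × ℤ}
    (h : x ∈ S) : z • x ∈ S := by
  lift z to ℕ using hz
  rw [natCast_zsmul]; exact S.nsmul_mem h _

lemma a_ne_zero {F : AddSubmonoid (ℤ × ℤ)} {a : ℤ × ℤ}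
    (hdim : Nonempty (AddSubgroup.closure (F : Set (ℤ × ℤ)) ≃+ ℤ))
    (hsub : (F : Set (ℤ × ℤ)) ⊆ {x | ∃ k : ℕ, x = k • a}) : a ≠ 0 := by
  rintro rfl
  obtain ⟨e⟩ := hdim
  have hF : (F : Set (ℤ × ℤ)) ⊆ {0} := by
    intro x hx; obtain ⟨k, rfl⟩ := hsub hx; simp
  have hle : AddSubgroup.closure (F : Set (ℤ × ℤ)) ≤ ⊥ := by
    rw [← AddSubgroup.closure_singleton_zero]
    exact AddSubgroup.closure_mono hF
  obtain ⟨x, hx⟩ := e.surjective 1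
  have hx0 : x = 0 := by
    have := hle x.2
    simp [AddSubgroup.mem_bot] at this
    exact Subtype.ext (by simpa using this)
  rw [hx0] at hx
  simp at hx

lemma eventual {F : AddSubmonoid (ℤ × ℤ)} {a : ℤ × ℤ} (ha : a ≠ 0)
    (hfin : ({x | ∃ k : ℕ, x = k • a} \ (F : Set (ℤ × ℤ))).Finite) :
    ∃ K : ℕ, ∀ k ≥ K, k • a ∈ F := by
  have hinj : Function.Injective (fun k : ℕ => k • a) := by
    intro k l h
    simp only [nsmul_pair, Prod.mk.injEq] at h
    have h1 : a.1 ≠ 0 ∨ a.2 ≠ 0 := by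
      by_contra hc; push_neg at hc; exact ha (Prod.ext hc.1 hc.2)
    rcases h1 with h1 | h1
    · exact_mod_cast mul_right_cancel₀ h1 h.1
    · exact_mod_cast mul_right_cancel₀ h1 h.2
  have hfin' : {k : ℕ | k • a ∉ F}.Finite := by
    have := hfin.preimage (f := fun k : ℕ => k • a) (hinj.injOn)
    apply Set.Finite.subset this
    intro k hk
    exact ⟨⟨k, rfl⟩, hk⟩
  obtain ⟨K, hK⟩ := hfin'.bddAbove
  refine ⟨K + 1, fun k hk => ?_⟩
  by_contra hc
  have := hK hc
  omega

lemma half (S F : AddSubmonoid (ℤ × ℤ))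
    (hpointed : ∀ x ∈ S, -x ∈ S → x = 0)
    (hFS : F ≤ S)
    (hface : ∀ x ∈ S, ∀ y ∈ S, x + y ∈ F → x ∈ F ∧ y ∈ F)
    (a : ℤ × ℤ) (ha : a ≠ 0)
    (hFa : (F : Set (ℤ × ℤ)) ⊆ {x | ∃ k : ℕ, x = k • a})
    (K : ℕ) (hK : ∀ k ≥ K, k • a ∈ F)
    (ε : ℤ) (t : ℤ × ℤ) (ht : t ∈ S) (htpos : 0 < ε * dt a t) :
    ∀ s ∈ S, 0 ≤ ε * dt a s := by
  intro s hs
  by_contra hneg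
  push_neg at hneg
  have hε : ε ≠ 0 := by rintro rfl; simp at htpos
  set e : ℤ := ε * dt a t with he
  set d : ℤ := ε * dt a s with hd
  set E : ℕ := e.toNat with hE
  set D : ℕ := (-d).toNat with hD
  have hEe : (E:ℤ) = e := Int.toNat_of_nonneg htpos.le
  have hDd : (D:ℤ) = -d := Int.toNat_of_nonneg (by omega)
  have hE1 : 1 ≤ E := by omega
  have hD1 : 1 ≤ D := by omega
  set w : ℤ × ℤ := E • s + D • t with hw
  have hwS : w ∈ S := S.add_mem (S.nsmul_mem hs E) (S.nsmul_mem ht D)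
  have hdtw : dt a w = 0 := by
    have h1 : dt a w = (E:ℤ) * dt a s + (D:ℤ) * dt a t := by
      simp only [hw, dt, nsmul_pair, Prod.fst_add, Prod.snd_add]; ring
    have h2 : ε * dt a w = 0 := by
      rw [h1, mul_add, hEe, hDd]
      have : e * (ε * dt a s) + -d * (ε * dt a t) = e * d + -d * e := by
        rw [← hd, ← he]
      nlinarith [this]
    exact (mul_eq_zero.mp h2).resolve_left hε
  obtain ⟨hp1, hp2⟩ := parallel hdtw
  have hqp : ∃ q p : ℤ, 0 < q ∧ q • w = p • a := by
    rcases lt_trichotomy a.1 0 with h | h | h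
    · exact ⟨-a.1, -w.1, by omega, by rw [neg_smul, neg_smul, hp1]⟩
    · rcases lt_trichotomy a.2 0 with h' | h' | h'
      · exact ⟨-a.2, -w.2, by omega, by rw [neg_smul, neg_smul, hp2]⟩
      · exact absurd (Prod.ext h h') ha
      · exact ⟨a.2, w.2, h', hp2⟩
    · exact ⟨a.1, w.1, h, hp1⟩
  obtain ⟨q, p, hq, hqw⟩ := hqp
  have hsne : s ≠ 0 := by
    rintro rfl
    simp [dt] at hd
    omega
  rcases lt_trichotomy p 0 with hp | hp | hp
  · -- p < 0 : q•w + (-p)•a = 0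
    set N : ℕ := K + 1 with hN
    set Q : ℕ := q.toNat with hQ
    set P : ℕ := (-p).toNat with hP
    have hQq : (Q:ℤ) = q := Int.toNat_of_nonneg hq.le
    have hPp : (P:ℤ) = -p := Int.toNat_of_nonneg (by omega)
    set x : ℤ × ℤ := (N*Q) • w with hx
    set y : ℤ × ℤ := (N*P) • a with hy
    have hxS : x ∈ S := S.nsmul_mem hwS _
    have hyF : y ∈ F := hK _ (by nlinarith [hP, hN, Int.toNat_of_nonneg (by omega : (0:ℤ) ≤ -p)] )
    have hxy : x + y = 0 := by
      have hx' : x = ((N:ℤ)*q) • w := by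
        rw [hx, ← natCast_zsmul]; push_cast [hQq]; ring_nf
      have hy' : y = ((N:ℤ)*(-p)) • a := by
        rw [hy, ← natCast_zsmul]; push_cast [hPp]; ring_nf
      rw [hx', hy', mul_zsmul, hqw, ← mul_zsmul, ← add_zsmul]
      ring_nf
    have hx0 : x = 0 := hpointed x hxS (by rw [neg_eq_of_add_eq_zero_left (by rw [add_comm]; exact hxy)]; exact hFS hyF)
    have hy0 : y = 0 := by rw [hx0, zero_add] at hxy; exact hxy
    have hP1 : 1 ≤ P := by omega
    have : a = 0 := by
      rw [hy, nsmul_pair, Prod.ext_iff] at hy0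
      simp at hy0
      ext
      · exact hy0.1.resolve_left (by omega)
      · exact hy0.2.resolve_left (by omega)
    exact ha this
  · -- p = 0 : w = 0
    have hw0 : w = 0 := by
      rw [hp, zero_zsmul, zsmul_pair, Prod.ext_iff] at hqw
      simp at hqw
      ext
      · exact hqw.1.resolve_left hq.ne'
      · exact hqw.2.resolve_left hq.ne'
    have hx0 : E • s = 0 := by
      apply hpointed _ (S.nsmul_mem hs E)
      have : -(E • s) = D • t := by
        refine neg_eq_of_add_eq_zero_right ?_
        rw [← hw]; exact hw0
      rw [this]; exact S.nsmul_mem ht D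
    apply hsne
    rw [nsmul_pair, Prod.ext_iff] at hx0
    simp at hx0
    have hEne : ((E:ℕ):ℤ) ≠ 0 := by exact_mod_cast (by omega : E ≠ 0)
    ext
    · exact hx0.1.resolve_left (by omega)
    · exact hx0.2.resolve_left (by omega)
  · -- p > 0 : s ∈ F, contradiction
    set k : ℕ := K + 1 with hk
    set Q : ℕ := q.toNat with hQ
    set P : ℕ := p.toNat with hP
    have hQq : (Q:ℤ) = q := Int.toNat_of_nonneg hq.le
    have hPp : (P:ℤ) = p := Int.toNat_of_nonneg hp.le
    have hQ1 : 1 ≤ Q := by omega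
    have hP1 : 1 ≤ P := by omega
    have hmem : (k*Q) • w ∈ F := by
      have h1 : (k*Q) • w = (k*P) • a := by
        rw [← natCast_zsmul, ← natCast_zsmul]
        push_cast [hQq, hPp]
        rw [mul_zsmul, hqw, ← mul_zsmul]
      rw [h1]
      exact hK _ (by nlinarith)
    have hsplit : (k*Q) • w = (k*Q*E) • s + (k*Q*D) • t := by
      rw [hw, smul_add, ← mul_nsmul', ← mul_nsmul']
    rw [hsplit] at hmem
    have hsF : (k*Q*E) • s ∈ F :=
      (hface _ (S.nsmul_mem hs _) _ (S.nsmul_mem ht _) hmem).1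
    set n : ℕ := k*Q*E with hn
    have hn1 : 1 ≤ n := Nat.one_le_iff_ne_zero.mpr
      (Nat.mul_ne_zero (Nat.mul_ne_zero (by omega) (by omega)) (by omega))
    have hsF' : s ∈ F := by
      have hsum : (n-1) • s + s ∈ F := by
        have : (n-1) + 1 = n := by omega
        rw [← succ_nsmul, this]; exact hsF
      exact (hface _ (S.nsmul_mem hs _) _ hs hsum).2
    obtain ⟨m, hm⟩ := hFa hsF'
    have : dt a s = 0 := by
      rw [hm, nsmul_pair, dt]
      simp
      ring
    rw [hd, this, mul_zero] at hneg
    exact absurd hneg (lt_irrefl 0)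

lemma sat_nonneg {S : AddSubmonoid (ℤ × ℤ)} (f : ℤ × ℤ → ℤ)
    (hf : ∀ (k : ℕ) (v : ℤ × ℤ), f (k • v) = k * f v)
    (hS : ∀ s ∈ S, 0 ≤ f s) :
    ∀ c ∈ saturationSet (S : Set (ℤ × ℤ)), 0 ≤ f c := by
  rintro c ⟨k, hk, hkc⟩
  have h1 := hS _ hkc
  rw [hf] at h1
  by_contra hc
  push_neg at hc
  nlinarith [Int.ofNat_lt.mpr hk]

lemma K_sub_sat {S F₁ F₂ : AddSubmonoid (ℤ × ℤ)}
    (hF₁S : F₁ ≤ S) (hF₂S : F₂ ≤ S)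
    {a₁ a₂ : ℤ × ℤ} {m n : ℕ} (hm1 : 1 ≤ m) (hn1 : 1 ≤ n)
    (hm : m • a₁ ∈ F₁) (hn : n • a₂ ∈ F₂)
    (hD : 0 < dt a₁ a₂) {c : ℤ × ℤ}
    (h1 : 0 ≤ dt a₁ c) (h2 : 0 ≤ dt c a₂) :
    c ∈ saturationSet (S : Set (ℤ × ℤ)) := by
  set α : ℤ := dt c a₂ with hα
  set β : ℤ := dt a₁ c with hβ
  set D : ℤ := dt a₁ a₂ with hD'
  have key : (D * m * n) • c = ((n:ℤ) * α) • ((m:ℤ) • a₁) + ((m:ℤ) * β) • ((n:ℤ) • a₂) := by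
    simp only [hα, hβ, hD', dt, zsmul_pair, smul_eq_mul, Prod.mk_add_mk, Prod.mk.injEq]
    constructor <;> ring
  have hmA : ((m:ℤ)) • a₁ ∈ S := by rw [natCast_zsmul]; exact hF₁S hm
  have hnA : ((n:ℤ)) • a₂ ∈ S := by rw [natCast_zsmul]; exact hF₂S hn
  have hmem : (D * m * n) • c ∈ S := by
    rw [key]
    exact S.add_mem (mem_of_zsmul (by positivity) hmA) (mem_of_zsmul (by positivity) hnA)
  refine ⟨(D * m * n).toNat, ?_, ?_⟩
  · have : (0:ℤ) < D * m * n := by positivity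
    omega
  · rw [← natCast_zsmul, Int.toNat_of_nonneg (by positivity)]
    exact hmem

lemma faceSub (S F G : AddSubmonoid (ℤ × ℤ)) (hFS : F ≤ S) (_hGS : G ≤ S)
    (hfaceG : ∀ x ∈ S, ∀ y ∈ S, x + y ∈ G → x ∈ G ∧ y ∈ G)
    (a b : ℤ × ℤ)
    (hFa : (F : Set (ℤ × ℤ)) ⊆ {x | ∃ k : ℕ, x = k • a})
    (KF KG : ℕ) (hKF : ∀ k ≥ KF, k • a ∈ F) (hKG : ∀ k ≥ KG, k • b ∈ G)
    (q p : ℕ) (hq : 1 ≤ q) (hp : 1 ≤ p) (hrel : q • a = p • b) :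
    F ≤ G := by
  intro x hx
  obtain ⟨j, hj⟩ := hFa hx
  set M : ℕ := KF + KG + j + 1 with hM
  have hqM : q * M ≥ M := Nat.le_mul_of_pos_left M hq
  set i : ℕ := q * M - j with hi
  have hiKF : i ≥ KF := by omega
  have hz : i • a ∈ F := hKF i hiKF
  have hsum : x + i • a ∈ G := by
    have h1 : x + i • a = (j + i) • a := by rw [hj, ← add_nsmul]
    have h2 : j + i = q * M := by omega
    have h3 : (q * M) • a = (M * p) • b := by
      rw [mul_nsmul, hrel, ← mul_nsmul, mul_comm]
    rw [h1, h2, h3]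
    exact hKG _ (by nlinarith)
  exact (hfaceG x (hFS hx) _ (hFS hz) hsum).1

lemma indep (S F₁ F₂ : AddSubmonoid (ℤ × ℤ))
    (hpointed : ∀ x ∈ S, -x ∈ S → x = 0)
    (hF₁S : F₁ ≤ S) (hF₂S : F₂ ≤ S) (hne : F₁ ≠ F₂)
    (hface₁ : ∀ x ∈ S, ∀ y ∈ S, x + y ∈ F₁ → x ∈ F₁ ∧ y ∈ F₁)
    (hface₂ : ∀ x ∈ S, ∀ y ∈ S, x + y ∈ F₂ → x ∈ F₂ ∧ y ∈ F₂)
    (a₁ a₂ : ℤ × ℤ) (ha₁0 : a₁ ≠ 0) (ha₂0 : a₂ ≠ 0)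
    (hFa₁ : (F₁ : Set (ℤ × ℤ)) ⊆ {x | ∃ k : ℕ, x = k • a₁})
    (hFa₂ : (F₂ : Set (ℤ × ℤ)) ⊆ {x | ∃ k : ℕ, x = k • a₂})
    (K₁ K₂ : ℕ) (hK₁ : ∀ k ≥ K₁, k • a₁ ∈ F₁) (hK₂ : ∀ k ≥ K₂, k • a₂ ∈ F₂) :
    dt a₁ a₂ ≠ 0 := by
  intro h
  obtain ⟨hp1, hp2⟩ := parallel h
  have hqp : ∃ q p : ℤ, 0 < q ∧ q • a₂ = p • a₁ := by
    rcases lt_trichotomy a₁.1 0 with h' | h' | h'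
    · exact ⟨-a₁.1, -a₂.1, by omega, by rw [neg_smul, neg_smul, hp1]⟩
    · rcases lt_trichotomy a₁.2 0 with h'' | h'' | h''
      · exact ⟨-a₁.2, -a₂.2, by omega, by rw [neg_smul, neg_smul, hp2]⟩
      · exact absurd (Prod.ext h' h'') ha₁0
      · exact ⟨a₁.2, a₂.2, h'', hp2⟩
    · exact ⟨a₁.1, a₂.1, h', hp1⟩
  obtain ⟨q, p, hq, hrel⟩ := hqp
  have hQq : ((q.toNat : ℤ)) = q := Int.toNat_of_nonneg hq.le
  rcases lt_trichotomy p 0 with hp | hp | hp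
  · set N : ℕ := K₁ + K₂ + 1 with hN
    set Q : ℕ := q.toNat with hQ
    set P : ℕ := (-p).toNat with hP
    have hPp : ((P : ℤ)) = -p := Int.toNat_of_nonneg (by omega)
    have hQ1 : 1 ≤ Q := by omega
    have hP1 : 1 ≤ P := by omega
    set x : ℤ × ℤ := (N * Q) • a₂ with hx
    set y : ℤ × ℤ := (N * P) • a₁ with hy
    have hxF : x ∈ F₂ := hK₂ _ (by nlinarith)
    have hyF : y ∈ F₁ := hK₁ _ (by nlinarith)
    have hxy : x + y = 0 := by
      have hx' : x = ((N:ℤ) * q) • a₂ := by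
        rw [hx, ← natCast_zsmul]; push_cast [hQq]; ring_nf
      have hy' : y = ((N:ℤ) * -p) • a₁ := by
        rw [hy, ← natCast_zsmul]; push_cast [hPp]; ring_nf
      rw [hx', hy', mul_zsmul, hrel, ← mul_zsmul, ← add_zsmul]
      ring_nf
    have hx0 : x = 0 := hpointed x (hF₂S hxF)
      (by rw [neg_eq_of_add_eq_zero_left (by rw [add_comm]; exact hxy)]; exact hF₁S hyF)
    apply ha₂0
    rw [hx, nsmul_pair, Prod.ext_iff] at hx0
    simp at hx0
    ext
    · exact hx0.1.resolve_left (by omega)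
    · exact hx0.2.resolve_left (by omega)
  · apply ha₂0
    rw [hp, zero_zsmul, zsmul_pair, Prod.ext_iff] at hrel
    simp at hrel
    ext
    · exact hrel.1.resolve_left hq.ne'
    · exact hrel.2.resolve_left hq.ne'
  · have hPp : ((p.toNat : ℤ)) = p := Int.toNat_of_nonneg hp.le
    have hreln : q.toNat • a₂ = p.toNat • a₁ := by
      rw [← natCast_zsmul, ← natCast_zsmul, hQq, hPp]; exact hrel
    have h21 : F₂ ≤ F₁ :=
      faceSub S F₂ F₁ hF₂S hF₁S hface₁ a₂ a₁ hFa₂ K₂ K₁ hK₂ hK₁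
        q.toNat p.toNat (by omega) (by omega) hreln
    have h12 : F₁ ≤ F₂ :=
      faceSub S F₁ F₂ hF₁S hF₂S hface₂ a₁ a₂ hFa₁ K₁ K₂ hK₁ hK₂
        p.toNat q.toNat (by omega) (by omega) hreln.symm
    exact hne (le_antisymm h12 h21)

lemma core (S F₁ F₂ : AddSubmonoid (ℤ × ℤ))
    (hpointed : ∀ x ∈ S, -x ∈ S → x = 0)
    (hF₁S : F₁ ≤ S) (hF₂S : F₂ ≤ S)
    (hface₁ : ∀ x ∈ S, ∀ y ∈ S, x + y ∈ F₁ → x ∈ F₁ ∧ y ∈ F₁)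
    (hface₂ : ∀ x ∈ S, ∀ y ∈ S, x + y ∈ F₂ → x ∈ F₂ ∧ y ∈ F₂)
    (a₁ a₂ : ℤ × ℤ) (ha₁0 : a₁ ≠ 0) (ha₂0 : a₂ ≠ 0)
    (hFa₁ : (F₁ : Set (ℤ × ℤ)) ⊆ {x | ∃ k : ℕ, x = k • a₁})
    (hFa₂ : (F₂ : Set (ℤ × ℤ)) ⊆ {x | ∃ k : ℕ, x = k • a₂})
    (K₁ K₂ : ℕ) (hK₁ : ∀ k ≥ K₁, k • a₁ ∈ F₁) (hK₂ : ∀ k ≥ K₂, k • a₂ ∈ F₂)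
    (hD : 0 < dt a₁ a₂) :
    {x | ∃ c ∈ saturationSet (S : Set (ℤ × ℤ)), x = a₁ + c} ∩
        {x | ∃ c ∈ saturationSet (S : Set (ℤ × ℤ)), x = a₂ + c} =
      {x | ∃ c ∈ saturationSet (S : Set (ℤ × ℤ)), x = a₁ + a₂ + c} := by
  have hhalf₁ : ∀ s ∈ S, 0 ≤ dt a₁ s := by
    have ht : (K₂+1) • a₂ ∈ S := hF₂S (hK₂ _ (by omega))
    have hcomp : (1:ℤ) * dt a₁ ((K₂+1) • a₂) = ((K₂+1 : ℕ):ℤ) * dt a₁ a₂ := by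
      rw [one_mul, dt_nsmul_right]
    have := half S F₁ hpointed hF₁S hface₁ a₁ ha₁0 hFa₁ K₁ hK₁ 1 _ ht
      (by rw [hcomp]; positivity)
    intro s hs
    have h := this s hs
    linarith [h]
  have hhalf₂ : ∀ s ∈ S, 0 ≤ dt s a₂ := by
    have ht : (K₁+1) • a₁ ∈ S := hF₁S (hK₁ _ (by omega))
    have hcomp : (-1:ℤ) * dt a₂ ((K₁+1) • a₁) = ((K₁+1 : ℕ):ℤ) * dt a₁ a₂ := by
      rw [dt_nsmul_right, dt_swap a₂ a₁]; ring
    have := half S F₂ hpointed hF₂S hface₂ a₂ ha₂0 hFa₂ K₂ hK₂ (-1) _ ht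
      (by rw [hcomp]; positivity)
    intro s hs
    have h := this s hs
    rw [dt_swap s a₂]
    linarith [h]
  have hsat₁ : ∀ c ∈ saturationSet (S : Set (ℤ × ℤ)), 0 ≤ dt a₁ c :=
    sat_nonneg (dt a₁) (fun k v => dt_nsmul_right a₁ k v) hhalf₁
  have hsat₂ : ∀ c ∈ saturationSet (S : Set (ℤ × ℤ)), 0 ≤ dt c a₂ :=
    sat_nonneg (fun v => dt v a₂) (fun k v => dt_nsmul_left k v a₂) hhalf₂
  have hm : (K₁+1) • a₁ ∈ F₁ := hK₁ _ (by omega)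
  have hn : (K₂+1) • a₂ ∈ F₂ := hK₂ _ (by omega)
  have hKsat : ∀ c : ℤ × ℤ, 0 ≤ dt a₁ c → 0 ≤ dt c a₂ →
      c ∈ saturationSet (S : Set (ℤ × ℤ)) :=
    fun c h1 h2 => K_sub_sat hF₁S hF₂S (by omega) (by omega) hm hn hD h1 h2
  ext x
  simp only [Set.mem_inter_iff, Set.mem_setOf_eq]
  constructor
  · rintro ⟨⟨c₁, hc₁, rfl⟩, ⟨c₂, hc₂, h2⟩⟩
    have key : a₁ + c₁ - a₁ - a₂ = c₂ - a₁ := by rw [h2]; abel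
    have key' : a₁ + c₁ - a₁ - a₂ = c₁ - a₂ := by abel
    refine ⟨a₁ + c₁ - a₁ - a₂, hKsat _ ?_ ?_, by abel⟩
    · rw [key, dt_sub_right, dt_self]
      linarith [hsat₁ c₂ hc₂]
    · rw [key', dt_sub_left, dt_self]
      linarith [hsat₂ c₁ hc₁]
  · rintro ⟨c, hc, rfl⟩
    refine ⟨⟨a₂ + c, hKsat _ ?_ ?_, by rw [add_assoc]⟩,
            ⟨a₁ + c, hKsat _ ?_ ?_, by abel⟩⟩
    · rw [dt_add_right]; linarith [hsat₁ c hc]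
    · rw [dt_add_left, dt_self]; linarith [hsat₂ c hc]
    · rw [dt_add_right, dt_self]; linarith [hsat₁ c hc]
    · rw [dt_add_left]; linarith [hsat₂ c hc, hD.le]

end ConeTranslates

/-- **From Lemma (L19).** Let `a₁, a₂` be the asymptotic generators of the two
one-dimensional faces of `S` and `C = S̄` the saturation of `S` (the cone spanned
by `a₁` and `a₂`). Then `(a₁ + C) ∩ (a₂ + C) = (a₁ + a₂) + C`. -/
theorem cone_translates_inter (S F₁ F₂ : AddSubmonoid (ℤ × ℤ))
    (hFG : S.FG)
    (hgen : AddSubgroup.closure (S : Set (ℤ × ℤ)) = ⊤)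
    (hpointed : ∀ x ∈ S, -x ∈ S → x = 0)
    (hF₁S : F₁ ≤ S) (hF₂S : F₂ ≤ S) (hne : F₁ ≠ F₂)
    (hface₁ : ∀ x ∈ S, ∀ y ∈ S, x + y ∈ F₁ → x ∈ F₁ ∧ y ∈ F₁)
    (hface₂ : ∀ x ∈ S, ∀ y ∈ S, x + y ∈ F₂ → x ∈ F₂ ∧ y ∈ F₂)
    (hdim₁ : Nonempty (AddSubgroup.closure (F₁ : Set (ℤ × ℤ)) ≃+ ℤ))
    (hdim₂ : Nonempty (AddSubgroup.closure (F₂ : Set (ℤ × ℤ)) ≃+ ℤ))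
    (a₁ a₂ : ℤ × ℤ)
    (ha₁ : (F₁ : Set (ℤ × ℤ)) ⊆ {x | ∃ k : ℕ, x = k • a₁} ∧
      ({x | ∃ k : ℕ, x = k • a₁} \ (F₁ : Set (ℤ × ℤ))).Finite)
    (ha₂ : (F₂ : Set (ℤ × ℤ)) ⊆ {x | ∃ k : ℕ, x = k • a₂} ∧
      ({x | ∃ k : ℕ, x = k • a₂} \ (F₂ : Set (ℤ × ℤ))).Finite) :
    {x | ∃ c ∈ saturationSet (S : Set (ℤ × ℤ)), x = a₁ + c} ∩
        {x | ∃ c ∈ saturationSet (S : Set (ℤ × ℤ)), x = a₂ + c} =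
      {x | ∃ c ∈ saturationSet (S : Set (ℤ × ℤ)), x = a₁ + a₂ + c} := by
  have ha₁0 : a₁ ≠ 0 := ConeTranslates.a_ne_zero hdim₁ ha₁.1
  have ha₂0 : a₂ ≠ 0 := ConeTranslates.a_ne_zero hdim₂ ha₂.1
  obtain ⟨K₁, hK₁⟩ := ConeTranslates.eventual ha₁0 ha₁.2
  obtain ⟨K₂, hK₂⟩ := ConeTranslates.eventual ha₂0 ha₂.2
  have hDne : ConeTranslates.dt a₁ a₂ ≠ 0 :=
    ConeTranslates.indep S F₁ F₂ hpointed hF₁S hF₂S hne hface₁ hface₂ a₁ a₂ ha₁0 ha₂0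
      ha₁.1 ha₂.1 K₁ K₂ hK₁ hK₂
  rcases hDne.lt_or_gt with hD | hD
  · -- ConeTranslates.dt a₁ a₂ < 0, apply ConeTranslates.core with roles swapped
    have hD' : 0 < ConeTranslates.dt a₂ a₁ := by rw [ConeTranslates.dt_swap a₂ a₁]; omega
    have := ConeTranslates.core S F₂ F₁ hpointed hF₂S hF₁S hface₂ hface₁ a₂ a₁ ha₂0 ha₁0
      ha₂.1 ha₁.1 K₂ K₁ hK₂ hK₁ hD'
    rw [Set.inter_comm, show a₁ + a₂ = a₂ + a₁ from add_comm _ _]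
    exact this
  · exact ConeTranslates.core S F₁ F₂ hpointed hF₁S hF₂S hface₁ hface₂ a₁ a₂ ha₁0 ha₂0
      ha₁.1 ha₂.1 K₁ K₂ hK₁ hK₂ hD
end

section
/- Let λ denote the left regular representation of S on ℓ²(S), where for s ∈ S the isometry λ(s) : ℓ²(S) → ℓ²(S) is defined by (λ(s)ξ)(t) = ξ(t − s) if t ∈ s + S and (λ(s)ξ)(t) = 0 otherwise. Then the C*-algebra C*_λ(S), i.e., the closed star-subalgebra of bounded operators on ℓ²(S) generated by {λ(s) : s ∈ S}, contains every compact operator on ℓ²(S). -/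
open scoped ENNReal ComplexOrder

noncomputable section

variable (S : AddSubmonoid (ℤ × ℤ))

local notation "H" => lp (fun _ : S => ℂ) 2

def dd (t : S) : lp (fun _ : S => ℂ) 2 := lp.single 2 t 1

lemma dd_apply (t u : S) : (dd S t : ∀ _ : S, ℂ) u = if u = t then 1 else 0 := by
  rcases eq_or_ne u t with h | h
  · subst h; simp [dd, lp.single_apply_self]
  · simp [dd, lp.single_apply_ne _ _ _ h, h]

lemma norm_dd (t : S) : ‖dd S t‖ = 1 := by
  have := lp.norm_single (p := (2 : ℝ≥0∞)) (E := fun _ : S => ℂ) (by norm_num) t (1:ℂ)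
  simpa [dd] using this

lemma inner_dd_left (t : S) (f : lp (fun _ : S => ℂ) 2) :
    (inner ℂ (dd S t) f : ℂ) = f t := by
  rw [dd, lp.inner_single_left]
  simp

variable {S}
variable (lam : S → (lp (fun _ : S => ℂ) 2 →L[ℂ] lp (fun _ : S => ℂ) 2))
variable (hlam_shift : ∀ (s : S) (ξ : lp (fun _ : S => ℂ) 2) (t u : S),
      (t : ℤ × ℤ) = (s : ℤ × ℤ) + (u : ℤ × ℤ) → (lam s ξ) t = ξ u)
variable (hlam_zero : ∀ (s : S) (ξ : lp (fun _ : S => ℂ) 2) (t : S),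
      (¬ ∃ u : S, (t : ℤ × ℤ) = (s : ℤ × ℤ) + (u : ℤ × ℤ)) → (lam s ξ) t = 0)

section
include hlam_shift hlam_zero

lemma lam_dd (s u : S) : lam s (dd S u) = dd S (s + u) := by
  apply lp.ext
  funext t
  by_cases h : ∃ v : S, (t : ℤ × ℤ) = (s : ℤ × ℤ) + (v : ℤ × ℤ)
  · obtain ⟨v, hv⟩ := h
    rw [hlam_shift s _ t v hv, dd_apply, dd_apply]
    by_cases h' : v = u
    · subst h'
      rw [if_pos rfl, if_pos (Subtype.ext hv)]
    · rw [if_neg h', if_neg]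
      intro h''
      apply h'
      apply Subtype.ext
      have h4 : (s:ℤ×ℤ) + v = (s:ℤ×ℤ) + u := by
        rw [← hv]
        have := congrArg Subtype.val h''
        simpa using this
      exact add_left_cancel h4
  · rw [hlam_zero s _ t h, dd_apply, if_neg]
    intro h'
    exact h ⟨u, by rw [h']; simp⟩

lemma star_lam_apply (s : S) (y : lp (fun _ : S => ℂ) 2) (u : S) :
    ((star (lam s)) y : ∀ _ : S, ℂ) u = y (s + u) := by
  have h1 : ((star (lam s)) y : ∀ _ : S, ℂ) u = (inner ℂ (dd S u) ((star (lam s)) y) : ℂ) :=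
    (inner_dd_left S u _).symm
  rw [h1, ContinuousLinearMap.star_eq_adjoint, ContinuousLinearMap.adjoint_inner_right,
    lam_dd lam hlam_shift hlam_zero, inner_dd_left]

end

section
include hlam_shift hlam_zero

lemma Q_apply_pos (s : S) (y : lp (fun _ : S => ℂ) 2) (t : S)
    (h : ∃ u : S, (t : ℤ × ℤ) = (s : ℤ × ℤ) + (u : ℤ × ℤ)) :
    (((lam s * star (lam s)) y : lp (fun _ : S => ℂ) 2) : ∀ _ : S, ℂ) t = y t := by
  obtain ⟨u, hu⟩ := h
  rw [ContinuousLinearMap.mul_apply, hlam_shift s _ t u hu,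
    star_lam_apply lam hlam_shift hlam_zero]
  have h2 : s + u = t := Subtype.ext (by simpa using hu.symm)
  rw [h2]

omit hlam_shift in
lemma Q_apply_neg (s : S) (y : lp (fun _ : S => ℂ) 2) (t : S)
    (h : ¬ ∃ u : S, (t : ℤ × ℤ) = (s : ℤ × ℤ) + (u : ℤ × ℤ)) :
    (((lam s * star (lam s)) y : lp (fun _ : S => ℂ) 2) : ∀ _ : S, ℂ) t = 0 := by
  rw [ContinuousLinearMap.mul_apply, hlam_zero s _ t h]

end

/-- the candidate projection onto `ℂ δ₀`, as a product over a list of generators -/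
def Pl (l : List S) : lp (fun _ : S => ℂ) 2 →L[ℂ] lp (fun _ : S => ℂ) 2 :=
  (l.map (fun g => 1 - lam g * star (lam g))).prod

section
include hlam_shift hlam_zero

lemma Pl_apply_pos (l : List S) (y : lp (fun _ : S => ℂ) 2) (t : S)
    (h : ∀ g ∈ l, ¬ ∃ u : S, (t : ℤ × ℤ) = (g : ℤ × ℤ) + (u : ℤ × ℤ)) :
    ((Pl lam l y : lp (fun _ : S => ℂ) 2) : ∀ _ : S, ℂ) t = y t := by
  induction l with
  | nil => simp [Pl]
  | cons g l ih =>
    have hg := h g List.mem_cons_self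
    have hl : ∀ g' ∈ l, ¬ ∃ u : S, (t : ℤ × ℤ) = (g' : ℤ × ℤ) + (u : ℤ × ℤ) :=
      fun g' hg' => h g' (List.mem_cons_of_mem _ hg')
    have : Pl lam (g :: l) y = (1 - lam g * star (lam g)) (Pl lam l y) := by
      simp [Pl, ContinuousLinearMap.mul_apply]
    rw [this, ContinuousLinearMap.sub_apply, ContinuousLinearMap.one_apply,
      lp.coeFn_sub, Pi.sub_apply, Q_apply_neg lam hlam_zero g _ t hg, sub_zero,
      ih hl]

lemma Pl_apply_neg (l : List S) (y : lp (fun _ : S => ℂ) 2) (t : S)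
    (h : ∃ g ∈ l, ∃ u : S, (t : ℤ × ℤ) = (g : ℤ × ℤ) + (u : ℤ × ℤ)) :
    ((Pl lam l y : lp (fun _ : S => ℂ) 2) : ∀ _ : S, ℂ) t = 0 := by
  induction l with
  | nil => simp at h
  | cons g l ih =>
    have hP : Pl lam (g :: l) y = (1 - lam g * star (lam g)) (Pl lam l y) := by
      simp [Pl, ContinuousLinearMap.mul_apply]
    rw [hP, ContinuousLinearMap.sub_apply, ContinuousLinearMap.one_apply,
      lp.coeFn_sub, Pi.sub_apply]
    by_cases hg : ∃ u : S, (t : ℤ × ℤ) = (g : ℤ × ℤ) + (u : ℤ × ℤ)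
    · rw [Q_apply_pos lam hlam_shift hlam_zero g _ t hg, sub_self]
    · have : ∃ g' ∈ l, ∃ u : S, (t : ℤ × ℤ) = (g' : ℤ × ℤ) + (u : ℤ × ℤ) := by
        obtain ⟨g', hg', hu⟩ := h
        rcases List.mem_cons.mp hg' with rfl | hmem
        · exact absurd hu hg
        · exact ⟨g', hmem, hu⟩
      rw [ih this, Q_apply_neg lam hlam_zero g _ t hg, sub_zero]

end

omit hlam_shift hlam_zero in
lemma multiset_filter_ne_zero_sum (m : Multiset (ℤ × ℤ)) :
    (m.filter (fun x => x ≠ 0)).sum = m.sum := by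
  induction m using Multiset.induction with
  | empty => simp
  | cons a m ih =>
    rw [Multiset.filter_cons, Multiset.sum_cons]
    by_cases h : a = 0
    · simp [h, ih]
    · simp [h, ih]

lemma gen_list (S : AddSubmonoid (ℤ × ℤ)) (hFG : S.FG)
    (hpointed : ∀ x ∈ S, -x ∈ S → x = 0) :
    ∃ l : List S, (∀ g ∈ l, (g : ℤ × ℤ) ≠ 0) ∧
      ∀ t : S, t ≠ 0 → ∃ g ∈ l, ∃ u : S, (t : ℤ × ℤ) = (g : ℤ × ℤ) + (u : ℤ × ℤ) := by
  obtain ⟨F, hF⟩ := hFG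
  have hsub : ∀ x ∈ (F.erase 0), x ∈ S := by
    intro x hx
    rw [← hF]
    exact AddSubmonoid.subset_closure (Finset.mem_of_mem_erase hx)
  refine ⟨(F.erase 0).toList.attach.map
    (fun x => (⟨x.1, hsub x.1 (Finset.mem_toList.mp x.2)⟩ : S)), ?_, ?_⟩
  · intro g hg
    simp only [List.mem_map, List.mem_attach, true_and] at hg
    obtain ⟨x, hx⟩ := hg
    have hx0 : x.1 ≠ 0 := Finset.ne_of_mem_erase (Finset.mem_toList.mp x.2)
    intro h0
    exact hx0 ((congrArg Subtype.val hx).trans h0)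
  · intro t ht
    have htS : (t : ℤ × ℤ) ∈ AddSubmonoid.closure (F : Set (ℤ × ℤ)) := by
      rw [hF]; exact t.2
    obtain ⟨m, hm, hsum⟩ := AddSubmonoid.exists_multiset_of_mem_closure htS
    set m' := m.filter (fun x => x ≠ 0) with hm'
    have hsum' : m'.sum = (t : ℤ × ℤ) := by rw [hm', multiset_filter_ne_zero_sum, hsum]
    have hne : m' ≠ 0 := by
      intro h0
      apply ht
      apply Subtype.ext
      rw [← hsum', h0]; simp
    obtain ⟨g, hg⟩ := Multiset.exists_mem_of_ne_zero hne
    have hgF : g ∈ F := hm g (Multiset.mem_of_mem_filter hg)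
    have hg0 : g ≠ 0 := by
      have := Multiset.of_mem_filter hg
      simpa using this
    have hgS : g ∈ S := by rw [← hF]; exact AddSubmonoid.subset_closure hgF
    have huS : (m'.erase g).sum ∈ S := by
      apply AddSubmonoid.multiset_sum_mem
      intro x hx
      rw [← hF]
      exact AddSubmonoid.subset_closure (hm x (Multiset.mem_of_mem_filter
        (Multiset.mem_of_mem_erase hx)))
    refine ⟨⟨g, hgS⟩, ?_, ⟨_, huS⟩, ?_⟩
    · simp only [List.mem_map, List.mem_attach, true_and]
      refine ⟨⟨g, Finset.mem_toList.mpr (Finset.mem_erase.mpr ⟨hg0, hgF⟩)⟩, rfl⟩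
    · show (t : ℤ × ℤ) = g + (m'.erase g).sum
      rw [← hsum', ← Multiset.sum_cons, Multiset.cons_erase hg]

omit hlam_shift hlam_zero in
lemma no_decomp_zero (S : AddSubmonoid (ℤ × ℤ))
    (hpointed : ∀ x ∈ S, -x ∈ S → x = 0) (g : S) (hg : (g : ℤ × ℤ) ≠ 0) :
    ¬ ∃ u : S, ((0 : S) : ℤ × ℤ) = (g : ℤ × ℤ) + (u : ℤ × ℤ) := by
  rintro ⟨u, hu⟩
  apply hg
  apply hpointed _ g.2
  have h2 : -(g : ℤ × ℤ) = (u : ℤ × ℤ) := by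
    have hu' : (g : ℤ × ℤ) + (u : ℤ × ℤ) = 0 := by
      simpa using hu.symm
    exact neg_eq_of_add_eq_zero_right hu'
  rw [h2]; exact u.2

section
include hlam_shift hlam_zero

lemma Pl_eq (S' : AddSubmonoid (ℤ × ℤ)) (hS' : S' = S)
    (hpointed : ∀ x ∈ S, -x ∈ S → x = 0)
    (l : List S) (hl0 : ∀ g ∈ l, (g : ℤ × ℤ) ≠ 0)
    (hlgen : ∀ t : S, t ≠ 0 → ∃ g ∈ l, ∃ u : S, (t : ℤ × ℤ) = (g : ℤ × ℤ) + (u : ℤ × ℤ))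
    (y : lp (fun _ : S => ℂ) 2) :
    Pl lam l y = (y 0 : ℂ) • dd S 0 := by
  apply lp.ext
  funext t
  have hr : ((y 0 : ℂ) • dd S 0 : lp (fun _ : S => ℂ) 2) t
      = (y 0) * ((dd S 0 : lp (fun _ : S => ℂ) 2) t) := by
    rw [lp.coeFn_smul]; simp
  by_cases ht : t = 0
  · subst ht
    rw [Pl_apply_pos lam hlam_shift hlam_zero l y 0
      (fun g hg => no_decomp_zero S hpointed g (hl0 g hg)), hr, dd_apply, if_pos rfl, mul_one]
  · rw [Pl_apply_neg lam hlam_shift hlam_zero l y t (hlgen t ht), hr, dd_apply, if_neg ht,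
      mul_zero]

lemma e_apply
    (hpointed : ∀ x ∈ S, -x ∈ S → x = 0)
    (l : List S) (hl0 : ∀ g ∈ l, (g : ℤ × ℤ) ≠ 0)
    (hlgen : ∀ t : S, t ≠ 0 → ∃ g ∈ l, ∃ u : S, (t : ℤ × ℤ) = (g : ℤ × ℤ) + (u : ℤ × ℤ))
    (s t : S) (y : lp (fun _ : S => ℂ) 2) :
    (lam s * Pl lam l * star (lam t)) y = (y t : ℂ) • dd S s := by
  rw [ContinuousLinearMap.mul_apply, ContinuousLinearMap.mul_apply,
    Pl_eq lam hlam_shift hlam_zero S rfl hpointed l hl0 hlgen,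
    star_lam_apply lam hlam_shift hlam_zero, add_zero, map_smul,
    lam_dd lam hlam_shift hlam_zero, add_zero]

end

omit hlam_shift hlam_zero in
lemma e_mem (l : List S) (s t : S) :
    lam s * Pl lam l * star (lam t) ∈ StarAlgebra.adjoin ℂ (Set.range lam) := by
  have hlam : ∀ v : S, lam v ∈ StarAlgebra.adjoin ℂ (Set.range lam) :=
    fun v => StarAlgebra.subset_adjoin ℂ _ ⟨v, rfl⟩
  refine mul_mem (mul_mem (hlam s) ?_) (star_mem (hlam t))
  apply list_prod_mem
  intro x hx
  simp only [List.mem_map] at hx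
  obtain ⟨g, _, rfl⟩ := hx
  exact sub_mem (one_mem _) (mul_mem (hlam g) (star_mem (hlam g)))

/-- coordinate truncation -/
def trunc (G : Finset S) (f : lp (fun _ : S => ℂ) 2) : lp (fun _ : S => ℂ) 2 :=
  ∑ i ∈ G, lp.single 2 i (f i)

omit hlam_shift hlam_zero in
lemma norm_sub_trunc_sq (G : Finset S) (f : lp (fun _ : S => ℂ) 2) :
    ‖f - trunc G f‖ ^ 2 = ‖f‖ ^ 2 - ∑ i ∈ G, ‖f i‖ ^ 2 := by
  have h := lp.norm_compl_sum_single (p := (2 : ℝ≥0∞)) (E := fun _ : S => ℂ)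
    (by norm_num) f G
  simp only [ENNReal.toReal_ofNat, Real.rpow_two] at h
  exact h

omit hlam_shift hlam_zero in
lemma norm_sub_trunc_le_norm (G : Finset S) (f : lp (fun _ : S => ℂ) 2) :
    ‖f - trunc G f‖ ≤ ‖f‖ := by
  have h := norm_sub_trunc_sq G f
  have h2 : ‖f - trunc G f‖ ^ 2 ≤ ‖f‖ ^ 2 := by
    rw [h]
    have : (0:ℝ) ≤ ∑ i ∈ G, ‖f i‖ ^ 2 :=
      Finset.sum_nonneg fun i _ => sq_nonneg _
    linarith
  have h3 : (0:ℝ) ≤ ‖f - trunc G f‖ := norm_nonneg _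
  have h4 : (0:ℝ) ≤ ‖f‖ := norm_nonneg _
  nlinarith

omit hlam_shift hlam_zero in
lemma norm_sub_trunc_mono {G G' : Finset S} (h : G ⊆ G') (f : lp (fun _ : S => ℂ) 2) :
    ‖f - trunc G' f‖ ≤ ‖f - trunc G f‖ := by
  have h1 := norm_sub_trunc_sq G f
  have h2 := norm_sub_trunc_sq G' f
  have hmono : ∑ i ∈ G, ‖f i‖ ^ 2 ≤ ∑ i ∈ G', ‖f i‖ ^ 2 :=
    Finset.sum_le_sum_of_subset_of_nonneg h (fun i _ _ => sq_nonneg _)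
  have h3 : (0:ℝ) ≤ ‖f - trunc G' f‖ := norm_nonneg _
  have h4 : (0:ℝ) ≤ ‖f - trunc G f‖ := norm_nonneg _
  nlinarith

omit hlam_shift hlam_zero in
lemma trunc_sub (G : Finset S) (f g : lp (fun _ : S => ℂ) 2) :
    trunc G (f - g) = trunc G f - trunc G g := by
  unfold trunc
  rw [← Finset.sum_sub_distrib]
  congr 1
  funext i
  apply lp.ext
  funext u
  simp only [lp.coeFn_sub, Pi.sub_apply, lp.single_apply]
  simp only [Pi.single_apply]
  split_ifs with h
  · subst h; simp [lp.coeFn_sub]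
  · simp

omit hlam_shift hlam_zero in
lemma exists_trunc_close (f : lp (fun _ : S => ℂ) 2) {ε : ℝ} (hε : 0 < ε) :
    ∃ G : Finset S, ‖f - trunc G f‖ < ε := by
  have h := lp.hasSum_single (p := (2 : ℝ≥0∞)) (E := fun _ : S => ℂ)
    (by norm_num) f
  have := Metric.tendsto_nhds.mp h ε hε
  rcases this.exists with ⟨G, hG⟩
  refine ⟨G, ?_⟩
  rw [← dist_eq_norm] at *
  rwa [dist_comm] at hG

omit hlam_shift hlam_zero in
lemma trunc_smul (G : Finset S) (c : ℂ) (f : lp (fun _ : S => ℂ) 2) :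
    trunc G (c • f) = c • trunc G f := by
  unfold trunc
  rw [Finset.smul_sum]
  congr 1
  funext i
  have hc : (c • f : lp (fun _ : S => ℂ) 2) i = c • (f i) := by
    rw [lp.coeFn_smul]; rfl
  rw [hc, lp.single_smul]

omit hlam_shift hlam_zero in
lemma single_eq_smul_dd (s : S) (c : ℂ) : lp.single 2 s c = c • dd S s := by
  rw [dd, ← lp.single_smul]
  norm_num

section
include hlam_shift hlam_zero

lemma rankone_mem_closure
    (hpointed : ∀ x ∈ S, -x ∈ S → x = 0)
    (l : List S) (hl0 : ∀ g ∈ l, (g : ℤ × ℤ) ≠ 0)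
    (hlgen : ∀ t : S, t ≠ 0 → ∃ g ∈ l, ∃ u : S, (t : ℤ × ℤ) = (g : ℤ × ℤ) + (u : ℤ × ℤ))
    (s : S) (η : lp (fun _ : S => ℂ) 2) :
    ((innerSL ℂ η).smulRight (dd S s)) ∈
      (StarAlgebra.adjoin ℂ (Set.range lam)).topologicalClosure := by
  rw [← SetLike.mem_coe, StarSubalgebra.topologicalClosure_coe, Metric.mem_closure_iff]
  intro ε hε
  obtain ⟨G, hG⟩ := exists_trunc_close (S := S) η (half_pos hε)
  set b : lp (fun _ : S => ℂ) 2 →L[ℂ] lp (fun _ : S => ℂ) 2 :=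
    ∑ t ∈ G, (starRingEnd ℂ) (η t) • (lam s * Pl lam l * star (lam t)) with hb
  refine ⟨b, ?_, ?_⟩
  · apply sum_mem
    intro t _
    exact SMulMemClass.smul_mem _ (e_mem lam l s t)
  · rw [dist_eq_norm]
    have hbx : ∀ x : lp (fun _ : S => ℂ) 2,
        b x = (inner ℂ (trunc G η) x : ℂ) • dd S s := by
      intro x
      rw [hb]
      rw [ContinuousLinearMap.sum_apply]
      have : ∀ t ∈ G, ((starRingEnd ℂ) (η t) • (lam s * Pl lam l * star (lam t))) x
          = ((starRingEnd ℂ) (η t) * x t) • dd S s := by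
        intro t _
        rw [ContinuousLinearMap.smul_apply,
          e_apply lam hlam_shift hlam_zero hpointed l hl0 hlgen s t x, smul_smul]
      rw [Finset.sum_congr rfl this, ← Finset.sum_smul]
      congr 1
      rw [trunc, sum_inner]
      apply Finset.sum_congr rfl
      intro t _
      rw [lp.inner_single_left]
      simp [RCLike.inner_apply, mul_comm]
    have hkey : ∀ x : lp (fun _ : S => ℂ) 2,
        ‖((innerSL ℂ η).smulRight (dd S s) - b) x‖ ≤ ‖η - trunc G η‖ * ‖x‖ := by
      intro x
      rw [ContinuousLinearMap.sub_apply, ContinuousLinearMap.smulRight_apply, hbx x,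
        ← sub_smul]
      have h1 : (innerSL ℂ η) x - (inner ℂ (trunc G η) x : ℂ)
          = (inner ℂ (η - trunc G η) x : ℂ) := by
        rw [innerSL_apply_apply, ← inner_sub_left]
      rw [h1, norm_smul, norm_dd, mul_one]
      exact norm_inner_le_norm _ _
    calc ‖(innerSL ℂ η).smulRight (dd S s) - b‖ ≤ ‖η - trunc G η‖ :=
          ContinuousLinearMap.opNorm_le_bound _ (norm_nonneg _) hkey
      _ < ε := lt_of_lt_of_le hG (by linarith)

end

end

set_option maxHeartbeats 2000000 in
/-- The C*-algebra `C*_λ(S)` generated by the left regular representation of a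
finitely generated generating pointed submonoid `S` of `ℤ²` on `ℓ²(S)` contains
every compact operator on `ℓ²(S)`. Here `lam s` is the isometry given by
`(lam s ξ)(t) = ξ(t − s)` if `t ∈ s + S` and `0` otherwise, and `C*_λ(S)` is the
topological closure of the star subalgebra generated by the `lam s`, `s ∈ S`. -/
theorem compact_mem_regular_algebra (S : AddSubmonoid (ℤ × ℤ))
    (hFG : S.FG)
    (hgen : AddSubgroup.closure (S : Set (ℤ × ℤ)) = ⊤)
    (hpointed : ∀ x ∈ S, -x ∈ S → x = 0)
    (lam : S → (lp (fun _ : S => ℂ) 2 →L[ℂ] lp (fun _ : S => ℂ) 2))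
    (hlam_shift : ∀ (s : S) (ξ : lp (fun _ : S => ℂ) 2) (t u : S),
      (t : ℤ × ℤ) = (s : ℤ × ℤ) + (u : ℤ × ℤ) → (lam s ξ) t = ξ u)
    (hlam_zero : ∀ (s : S) (ξ : lp (fun _ : S => ℂ) 2) (t : S),
      (¬ ∃ u : S, (t : ℤ × ℤ) = (s : ℤ × ℤ) + (u : ℤ × ℤ)) → (lam s ξ) t = 0)
    (T : lp (fun _ : S => ℂ) 2 →L[ℂ] lp (fun _ : S => ℂ) 2)
    (hT : IsCompactOperator T) :
    T ∈ (StarAlgebra.adjoin ℂ (Set.range lam)).topologicalClosure := by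
  classical
  obtain ⟨l, hl0, hlgen⟩ := gen_list S hFG hpointed
  set A := StarAlgebra.adjoin ℂ (Set.range lam) with hA
  have hclosed : IsClosed ((A.topologicalClosure : Set (lp (fun _ : S => ℂ) 2 →L[ℂ] lp (fun _ : S => ℂ) 2))) :=
    StarSubalgebra.isClosed_topologicalClosure A
  have key : ∀ ε : ℝ, 0 < ε → ∃ B ∈ (A.topologicalClosure : Set
      (lp (fun _ : S => ℂ) 2 →L[ℂ] lp (fun _ : S => ℂ) 2)), ‖T - B‖ ≤ ε := by
    intro ε hε
    obtain ⟨K, hK, hKnhds⟩ := hT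
    obtain ⟨r, hr, hball⟩ := Metric.mem_nhds_iff.mp hKnhds
    obtain ⟨t0, ht0fin, hcover⟩ :=
      (Metric.totallyBounded_iff.mp hK.totallyBounded) (ε * r / 8) (by positivity)
    have hch : ∀ y : lp (fun _ : S => ℂ) 2, ∃ G : Finset S,
        ‖y - trunc G y‖ < ε * r / 8 :=
      fun y => exists_trunc_close y (by positivity)
    choose Gf hGf using hch
    set F : Finset S := ht0fin.toFinset.sup Gf with hF
    set B : lp (fun _ : S => ℂ) 2 →L[ℂ] lp (fun _ : S => ℂ) 2 :=
      ∑ s ∈ F, ((innerSL ℂ (ContinuousLinearMap.adjoint T (dd S s))).smulRight (dd S s))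
      with hB
    have hBmem : B ∈ A.topologicalClosure := sum_mem fun s _ =>
      rankone_mem_closure lam hlam_shift hlam_zero hpointed l hl0 hlgen s _
    refine ⟨B, hBmem, ?_⟩
    have hBx : ∀ x, B x = trunc F (T x) := by
      intro x
      rw [hB, ContinuousLinearMap.sum_apply, trunc]
      apply Finset.sum_congr rfl
      intro s _
      rw [ContinuousLinearMap.smulRight_apply, innerSL_apply_apply,
        ContinuousLinearMap.adjoint_inner_left, inner_dd_left, single_eq_smul_dd]
    have himg : ∀ z ∈ K, ‖z - trunc F z‖ ≤ ε * r / 4 := by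
      intro z hz
      have := hcover hz
      simp only [Set.mem_iUnion, Metric.mem_ball] at this
      obtain ⟨y, hy, hdzy⟩ := this
      have h1 : ‖(z - y) - trunc F (z - y)‖ ≤ ‖z - y‖ := norm_sub_trunc_le_norm F _
      have hsub : Gf y ⊆ F := Finset.le_sup (Set.Finite.mem_toFinset ht0fin |>.mpr hy)
      have h2 : ‖y - trunc F y‖ ≤ ‖y - trunc (Gf y) y‖ := norm_sub_trunc_mono hsub y
      have hde : z - trunc F z = ((z - y) - trunc F (z - y)) + (y - trunc F y) := by
        rw [trunc_sub]; abel
      have hzy : ‖z - y‖ < ε * r / 8 := by rwa [← dist_eq_norm]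
      calc ‖z - trunc F z‖ = ‖((z - y) - trunc F (z - y)) + (y - trunc F y)‖ := by rw [hde]
        _ ≤ ‖(z - y) - trunc F (z - y)‖ + ‖y - trunc F y‖ := norm_add_le _ _
        _ ≤ ‖z - y‖ + ‖y - trunc (Gf y) y‖ := add_le_add h1 h2
        _ ≤ ε * r / 8 + ε * r / 8 := add_le_add hzy.le (hGf y).le
        _ = ε * r / 4 := by ring
    have hpt : ∀ x, ‖(T - B) x‖ ≤ (ε / 2) * ‖x‖ := by
      intro x
      rcases eq_or_ne x 0 with rfl | hx0
      · simp
      have hnx : (0:ℝ) < ‖x‖ := norm_pos_iff.mpr hx0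
      set c : ℂ := ((r / (2 * ‖x‖) : ℝ) : ℂ) with hc
      have hcnorm : ‖c‖ = r / (2 * ‖x‖) := by
        rw [hc, Complex.norm_real, Real.norm_eq_abs, abs_of_pos (by positivity)]
      have hcx : ‖c • x‖ = r / 2 := by
        rw [norm_smul, hcnorm]
        field_simp
      have hmem : T (c • x) ∈ K := by
        apply hball
        rw [Metric.mem_ball, dist_zero_right, hcx]
        linarith
      have hest := himg _ hmem
      have hTc : T (c • x) = c • T x := map_smul T c x
      have htr : trunc F (T (c • x)) = c • trunc F (T x) := by
        rw [hTc, trunc_smul]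
      have heq : T (c • x) - trunc F (T (c • x)) = c • (T x - trunc F (T x)) := by
        rw [htr, hTc, smul_sub]
      rw [heq, norm_smul, hcnorm] at hest
      rw [ContinuousLinearMap.sub_apply, hBx]
      rw [div_mul_eq_mul_div, div_le_iff₀ (by positivity)] at hest
      have h5 : ‖T x - trunc F (T x)‖ * r ≤ (ε / 2 * ‖x‖) * r := by nlinarith
      exact le_of_mul_le_mul_right h5 hr
    calc ‖T - B‖ ≤ ε / 2 := ContinuousLinearMap.opNorm_le_bound _ (by positivity) hpt
      _ ≤ ε := by linarith
  rw [← SetLike.mem_coe, ← hclosed.closure_eq]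
  rw [Metric.mem_closure_iff]
  intro ε hε
  obtain ⟨B, hBmem, hBle⟩ := key (ε / 2) (half_pos hε)
  exact ⟨B, hBmem, by rw [dist_eq_norm]; linarith⟩
end
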